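/- arXiv:math/0108174 — 7 statements merged into one kernel-verified Lean document; each statement's English description precedes it below -/
import Mathlib

section
/- Fix 0 ≤ s < T and suppose u(·, s) is locally Lipschitz. Fix a < b and let K be the Lipschitz constant of u(·,s) on the interval [y⁻(a;s,T), b]. Then for all x ∈ [a,b] and t ∈ (s,T], every minimizer y ∈ I(x;s,t) satisfies x - 4K(t-s) ≤ y ≤ x. -/
open Set Filter MeasureTheory
open scoped NNReal ENNReal

/-- Hopf–Lax formula with flux f(ρ)=ρ², conjugate g(x)=x²/4:
`u(x,t) = inf_{y ≤ x} { u0(y) + (x-y)²/(4t) }`, with `u(x,0)=u0(x)`. -/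
noncomputable def hopfLax (u0 : ℝ → ℝ) (x t : ℝ) : ℝ :=
  if t = 0 then u0 x
  else sInf ((fun y => u0 y + (x - y) ^ 2 / (4 * t)) '' Iic x)

/-- Minimizer set `I(x;s,t)` in the semigroup Hopf–Lax formula.
For `s = 0` this is the set `I(x,t)` of Hopf–Lax minimizers. -/
noncomputable def minSet (u0 : ℝ → ℝ) (x s t : ℝ) : Set ℝ :=
  {y | y ≤ x ∧ hopfLax u0 x t = hopfLax u0 y s + (x - y) ^ 2 / (4 * (t - s))}

/-- Minimal Hopf–Lax minimizer `y⁻(x;s,t)`. -/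
noncomputable def yminus (u0 : ℝ → ℝ) (x s t : ℝ) : ℝ := sInf (minSet u0 x s t)

/-- Maximal Hopf–Lax minimizer `y⁺(x;s,t)`. -/
noncomputable def yplus (u0 : ℝ → ℝ) (x s t : ℝ) : ℝ := sSup (minSet u0 x s t)

/-- Minimal forward characteristic `w⁻(a;s,t) = inf{x : y±(x;s,t) ≥ a}`. -/
noncomputable def wminus (u0 : ℝ → ℝ) (a s t : ℝ) : ℝ :=
  sInf {x | a ≤ yminus u0 x s t}

/-- Maximal forward characteristic `w⁺(a;s,t) = sup{x : y±(x;s,t) ≤ a}`. -/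
noncomputable def wplus (u0 : ℝ → ℝ) (a s t : ℝ) : ℝ :=
  sSup {x | yplus u0 x s t ≤ a}

namespace HLaux

/-- Mild growth condition at `-∞`. -/
def Grows (v : ℝ → ℝ) : Prop := ∀ ε > 0, ∃ M, ∀ w ≤ M, -ε * w ^ 2 ≤ v w

theorem grows_of_tendsto {v : ℝ → ℝ}
    (h : Tendsto (fun y => v y / y ^ 2) atBot (nhds 0)) : Grows v := by
  intro ε hε
  have h2 : ∀ᶠ y in atBot, -ε < v y / y ^ 2 :=
    h.eventually (eventually_gt_nhds (by linarith : -ε < 0))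
  rcases eventually_atBot.1 h2 with ⟨M, hM⟩
  refine ⟨min M (-1), fun w hw => ?_⟩
  have hw1 : w ≤ -1 := hw.trans (min_le_right _ _)
  have hsq : (0:ℝ) < w ^ 2 := by nlinarith
  have h3 : -ε < v w / w ^ 2 := hM w (hw.trans (min_le_left _ _))
  have h4 := (lt_div_iff₀ hsq).1 h3
  linarith

theorem coercive {v : ℝ → ℝ} (hg : Grows v) {r : ℝ} (hr : 0 < r) (x C : ℝ) :
    ∃ m ≤ x, ∀ w ≤ m, C < v w + (x - w) ^ 2 / (4 * r) := by
  obtain ⟨M, hM⟩ := hg (1 / (8 * r)) (by positivity)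
  set R : ℝ := Real.sqrt (2 * x ^ 2 + 8 * r * (|C| + 1)) with hRdef
  have hR2 : R ^ 2 = 2 * x ^ 2 + 8 * r * (|C| + 1) := Real.sq_sqrt (by positivity)
  refine ⟨min M (min x (2 * x - R)), (min_le_right _ _).trans (min_le_left _ _),
    fun w hw => ?_⟩
  have hwM : w ≤ M := hw.trans (min_le_left _ _)
  have hw2 : w ≤ 2 * x - R := hw.trans ((min_le_right _ _).trans (min_le_right _ _))
  have hRnn : 0 ≤ R := Real.sqrt_nonneg _
  have h3 : R ^ 2 ≤ (w - 2 * x) ^ 2 := by nlinarith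
  have hC : C ≤ |C| := le_abs_self C
  have h1 : -(1 / (8 * r)) * w ^ 2 ≤ v w := hM w hwM
  have h8 : (0:ℝ) < 8 * r := by positivity
  have h1' : -(w ^ 2) ≤ 8 * r * v w := by
    have h2 := mul_le_mul_of_nonneg_left h1 h8.le
    have he : 8 * r * (-(1 / (8 * r)) * w ^ 2) = -(w ^ 2) := by field_simp
    rw [he] at h2; exact h2
  have hD : (x - w) ^ 2 / (4 * r) * (4 * r) = (x - w) ^ 2 :=
    div_mul_cancel₀ _ (by positivity)
  have key : 8 * r * C < 8 * r * (v w + (x - w) ^ 2 / (4 * r)) := by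
    nlinarith [mul_nonneg h8.le (sub_nonneg.2 hC)]
  exact lt_of_mul_lt_mul_left key h8.le

theorem bddBelow_cand {v : ℝ → ℝ} (hm : Monotone v) (hg : Grows v) {r : ℝ}
    (hr : 0 < r) (x : ℝ) :
    BddBelow ((fun w => v w + (x - w) ^ 2 / (4 * r)) '' Iic x) := by
  obtain ⟨m, hmx, hco⟩ := coercive hg hr x (v x)
  refine ⟨min (v x) (v m), ?_⟩
  rintro e ⟨w, hw, rfl⟩
  rcases le_or_gt w m with h | h
  · exact (min_le_left _ _).trans (hco w h).le
  · have h1 : v m ≤ v w := hm h.le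
    have h2 : 0 ≤ (x - w) ^ 2 / (4 * r) := by positivity
    exact (min_le_right _ _).trans (by simp only; linarith)

theorem lsc_of_mono {v : ℝ → ℝ} (hm : Monotone v)
    (hlc : ∀ y : ℝ, ContinuousWithinAt v (Iic y) y) : LowerSemicontinuous v := by
  intro z c hc
  have h1 : ∀ᶠ w in nhdsWithin z (Iic z), c < v w :=
    (hlc z).eventually (eventually_gt_nhds hc)
  have h2 : ∀ᶠ w in nhdsWithin z (Ici z), c < v w :=
    eventually_nhdsWithin_of_forall fun w hw => hc.trans_le (hm hw)
  rw [← nhdsLE_sup_nhdsGE z]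
  exact eventually_sup.2 ⟨h1, h2⟩

theorem lsc_min {f : ℝ → ℝ} (hf : LowerSemicontinuous f) {m x : ℝ} (hmx : m ≤ x)
    (hbdd : BddBelow (f '' Icc m x)) :
    ∃ z ∈ Icc m x, ∀ w ∈ Icc m x, f z ≤ f w := by
  have hxmem : x ∈ Icc m x := right_mem_Icc.2 hmx
  have hne : (f '' Icc m x).Nonempty := ⟨f x, mem_image_of_mem _ hxmem⟩
  set c := sInf (f '' Icc m x) with hcdef
  have hseq : ∀ n : ℕ, ∃ w, w ∈ Icc m x ∧ f w < c + 1 / ((n : ℝ) + 1) := by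
    intro n
    have hlt : c < c + 1 / ((n:ℝ) + 1) := by
      have : (0:ℝ) < 1 / ((n:ℝ) + 1) := by positivity
      linarith
    obtain ⟨e, he, helt⟩ := exists_lt_of_csInf_lt hne hlt
    obtain ⟨w, hw, rfl⟩ := he
    exact ⟨w, hw, helt⟩
  choose w hwmem hwlt using hseq
  obtain ⟨z, hz, φ, hφ, hconv⟩ := (isCompact_Icc).tendsto_subseq hwmem
  refine ⟨z, hz, fun w' hw' => ?_⟩
  have hcle : c ≤ f w' := csInf_le hbdd (mem_image_of_mem _ hw')
  rcases le_or_gt (f z) c with h | h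
  · linarith
  · exfalso
    have hmid : c < (c + f z) / 2 := by linarith
    have hev : ∀ᶠ n in atTop, (c + f z) / 2 < f ((w ∘ φ) n) :=
      hconv.eventually (hf z _ (by linarith))
    have hlim : Tendsto (fun n : ℕ => c + 1 / ((n:ℝ) + 1)) atTop (nhds c) := by
      have h0 := tendsto_one_div_add_atTop_nhds_zero_nat (𝕜 := ℝ)
      simpa using tendsto_const_nhds.add h0
    have hev2 : ∀ᶠ n : ℕ in atTop, c + 1 / ((n:ℝ) + 1) < (c + f z) / 2 :=
      hlim.eventually (eventually_lt_nhds hmid)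
    obtain ⟨n, h1, h2⟩ := (hev.and hev2).exists
    have h3 : f (w (φ n)) < c + 1 / ((φ n : ℝ) + 1) := hwlt (φ n)
    have h4 : ((n:ℝ) + 1) ≤ ((φ n : ℝ) + 1) := by
      have h5 : n ≤ φ n := hφ.le_apply
      have : (n:ℝ) ≤ (φ n : ℝ) := by exact_mod_cast h5
      linarith
    have h5 : 1 / ((φ n:ℝ) + 1) ≤ 1 / ((n:ℝ) + 1) :=
      one_div_le_one_div_of_le (by positivity) h4
    simp only [Function.comp] at h1
    linarith

theorem attain {v : ℝ → ℝ} (hm : Monotone v) (hg : Grows v)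
    (hlsc : LowerSemicontinuous v) {r : ℝ} (hr : 0 < r) (x : ℝ) :
    ∃ z ≤ x, ∀ w ≤ x, v z + (x - z) ^ 2 / (4 * r) ≤ v w + (x - w) ^ 2 / (4 * r) := by
  obtain ⟨m, hmx, hco⟩ := coercive hg hr x (v x)
  set f : ℝ → ℝ := fun w => v w + (x - w) ^ 2 / (4 * r) with hfdef
  have hflsc : LowerSemicontinuous f :=
    hlsc.add (Continuous.lowerSemicontinuous (by continuity))
  have hbdd : BddBelow (f '' Icc m x) :=
    (bddBelow_cand hm hg hr x).mono (image_mono Icc_subset_Iic_self)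
  obtain ⟨z, hz, hmin⟩ := lsc_min hflsc hmx hbdd
  refine ⟨z, hz.2, fun w hw => ?_⟩
  rcases le_or_gt w m with h | h
  · have h1 : v x < f w := hco w h
    have h2 : f z ≤ f x := hmin x (right_mem_Icc.2 hmx)
    have h3 : f x = v x := by simp [hfdef]
    show f z ≤ f w
    linarith
  · exact hmin w ⟨h.le, hw⟩


theorem hopfLax_eq {u0 : ℝ → ℝ} {t : ℝ} (ht : t ≠ 0) (x : ℝ) :
    hopfLax u0 x t = sInf ((fun y => u0 y + (x - y) ^ 2 / (4 * t)) '' Iic x) := by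
  simp only [hopfLax, if_neg ht]

theorem hopfLax_zero (u0 : ℝ → ℝ) (x : ℝ) : hopfLax u0 x 0 = u0 x := by
  simp [hopfLax]

theorem hopfLax_le_cand {u0 : ℝ → ℝ} (hm : Monotone u0) (hg : Grows u0) {t : ℝ}
    (ht : 0 < t) {x y : ℝ} (hyx : y ≤ x) :
    hopfLax u0 x t ≤ u0 y + (x - y) ^ 2 / (4 * t) := by
  rw [hopfLax_eq ht.ne']
  exact csInf_le (bddBelow_cand hm hg ht x) (mem_image_of_mem _ hyx)

theorem hopfLax_mono {u0 : ℝ → ℝ} (hm : Monotone u0) (hg : Grows u0) {τ : ℝ}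
    (hτ : 0 ≤ τ) : Monotone fun z => hopfLax u0 z τ := by
  rcases hτ.eq_or_lt with h | h
  · intro z1 z2 h12
    simp only [← h, hopfLax_zero]
    exact hm h12
  · intro z1 z2 h12
    simp only
    rw [hopfLax_eq h.ne', hopfLax_eq h.ne']
    refine le_csInf ⟨_, mem_image_of_mem _ (mem_Iic.2 (le_refl z2))⟩ ?_
    rintro e ⟨w, hw, rfl⟩
    have hww : w ≤ z2 := mem_Iic.1 hw
    have hw' : w - (z2 - z1) ≤ z1 := by linarith
    have hle := csInf_le (bddBelow_cand hm hg h z1)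
      (mem_image_of_mem (fun y => u0 y + (z1 - y) ^ 2 / (4 * τ)) (mem_Iic.2 hw'))
    have hm' : u0 (w - (z2 - z1)) ≤ u0 w := hm (by linarith)
    have heq : (z1 - (w - (z2 - z1))) ^ 2 = (z2 - w) ^ 2 := by ring
    refine hle.trans ?_
    simp only [heq]
    linarith

theorem hopfLax_grows {u0 : ℝ → ℝ} (hm : Monotone u0) (hg : Grows u0) {τ : ℝ}
    (hτ : 0 ≤ τ) : Grows fun z => hopfLax u0 z τ := by
  rcases hτ.eq_or_lt with h | h
  · have he : (fun z => hopfLax u0 z τ) = u0 := funext fun z => by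
      rw [← h, hopfLax_zero]
    rw [he]; exact hg
  · intro ε hε
    have hden : (0:ℝ) < 1 + 4 * τ * ε := by positivity
    set δ := ε / (2 * (1 + 4 * τ * ε)) with hδdef
    have hδ : 0 < δ := by positivity
    obtain ⟨M, hM⟩ := hg δ hδ
    refine ⟨M, fun w hw => ?_⟩
    simp only
    rw [hopfLax_eq h.ne']
    refine le_csInf ⟨_, mem_image_of_mem _ (mem_Iic.2 (le_refl w))⟩ ?_
    rintro e ⟨ω, hω, rfl⟩
    have h1 : -δ * ω ^ 2 ≤ u0 ω := hM ω ((mem_Iic.1 hω).trans hw)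
    have hid : δ * (1 + 4 * τ * ε) = ε / 2 := by
      rw [hδdef]; field_simp
    have h5 : 4 * τ * δ < 1 := by nlinarith
    have h5' : (0:ℝ) < 1 - 4 * τ * δ := by linarith
    have hD : (w - ω) ^ 2 / (4 * τ) * (4 * τ) = (w - ω) ^ 2 :=
      div_mul_cancel₀ _ (by positivity)
    have h2τε : (1 - 4 * τ * δ) * (1 + 4 * τ * ε) - 1 = 2 * τ * ε := by
      linear_combination (-4 * τ) * hid
    have h2τε' : ((1 - 4 * τ * δ) * (1 + 4 * τ * ε) - 1) * w ^ 2 = 2 * τ * ε * w ^ 2 := by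
      rw [h2τε]
    have hQ : 0 ≤ (1 - 4 * τ * δ) * ω ^ 2 - 2 * w * ω + (1 + 4 * τ * ε) * w ^ 2 := by
      nlinarith [sq_nonneg ((1 - 4 * τ * δ) * ω - w), h2τε', h5',
        mul_nonneg (mul_nonneg h.le hε.le) (sq_nonneg w)]
    nlinarith [hQ, hD, h, mul_le_mul_of_nonneg_left h1 h.le]

theorem hopfLax_lsc {u0 : ℝ → ℝ} (hm : Monotone u0) (hg : Grows u0)
    (hlc : ∀ y : ℝ, ContinuousWithinAt u0 (Iic y) y) {τ : ℝ} (hτ : 0 ≤ τ) :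
    LowerSemicontinuous fun z => hopfLax u0 z τ := by
  rcases hτ.eq_or_lt with h | h
  · have he : (fun z => hopfLax u0 z τ) = u0 := funext fun z => by
      rw [← h, hopfLax_zero]
    rw [he]; exact lsc_of_mono hm hlc
  · intro z c hc
    simp only at hc
    set U := hopfLax u0 z τ with hUdef
    set c' := (c + U) / 2 with hc'def
    have hcc' : c < c' := by rw [hc'def]; linarith
    have hc'U : c' < U := by rw [hc'def]; linarith
    obtain ⟨m, hm1, hco⟩ := coercive hg h (z - 1) c'
    set Cst := max 0 ((2 * z - 2 * m) / (4 * τ)) with hCstdef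
    have hC0 : 0 ≤ Cst := le_max_left _ _
    set δ := min 1 ((U - c') / (Cst + 1)) with hδdef
    have hδ : 0 < δ :=
      lt_min one_pos (div_pos (by linarith) (by positivity))
    have hδ1 : δ ≤ 1 := min_le_left _ _
    have hδ2 : δ * (Cst + 1) ≤ U - c' := by
      have h1 : δ ≤ (U - c') / (Cst + 1) := min_le_right _ _
      calc δ * (Cst + 1) ≤ (U - c') / (Cst + 1) * (Cst + 1) :=
            mul_le_mul_of_nonneg_right h1 (by positivity)
        _ = U - c' := div_mul_cancel₀ _ (by positivity)
    have key : ∀ w, z - δ < w → w ≤ z → c' ≤ hopfLax u0 w τ := by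
      intro w hw1 hw2
      rw [hopfLax_eq h.ne']
      refine le_csInf ⟨_, mem_image_of_mem _ (mem_Iic.2 le_rfl)⟩ ?_
      rintro e ⟨ω, hω, rfl⟩
      have hωw : ω ≤ w := mem_Iic.1 hω
      rcases le_or_gt ω m with hcase | hcase
      · have h1 : c' < u0 ω + (z - 1 - ω) ^ 2 / (4 * τ) := hco ω hcase
        have h2 : (z - 1 - ω) ^ 2 ≤ (w - ω) ^ 2 := by nlinarith
        have h3 : (z - 1 - ω) ^ 2 / (4 * τ) ≤ (w - ω) ^ 2 / (4 * τ) := by gcongr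
        simp only
        linarith
      · have hωz : ω ≤ z := hωw.trans hw2
        have hUz : U ≤ u0 ω + (z - ω) ^ 2 / (4 * τ) := by
          rw [hUdef]; exact hopfLax_le_cand hm hg h hωz
        rcases le_or_gt (z + w - 2 * ω) 0 with hb | hb
        · have h2 : (z - ω) ^ 2 ≤ (w - ω) ^ 2 := by nlinarith
          have h3 : (z - ω) ^ 2 / (4 * τ) ≤ (w - ω) ^ 2 / (4 * τ) := by gcongr
          simp only
          linarith
        · have h6 : (z - ω) ^ 2 - (w - ω) ^ 2 ≤ δ * (2 * z - 2 * m) := by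
            nlinarith
          have h7 : ((z - ω) ^ 2 - (w - ω) ^ 2) / (4 * τ) ≤ δ * (2 * z - 2 * m) / (4 * τ) := by
            gcongr
          have h8 : δ * (2 * z - 2 * m) / (4 * τ) ≤ δ * Cst := by
            have h9 : (2 * z - 2 * m) / (4 * τ) ≤ Cst := le_max_right _ _
            calc δ * (2 * z - 2 * m) / (4 * τ) = δ * ((2 * z - 2 * m) / (4 * τ)) := by
                  ring
              _ ≤ δ * Cst := mul_le_mul_of_nonneg_left h9 hδ.le
          have h9 : δ * Cst ≤ U - c' - δ := by nlinarith
          have h10 : (w - ω) ^ 2 / (4 * τ) =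
              (z - ω) ^ 2 / (4 * τ) - ((z - ω) ^ 2 - (w - ω) ^ 2) / (4 * τ) := by
            ring
          simp only
          linarith
    have hmem : Ioo (z - δ) (z + δ) ∈ nhds z := Ioo_mem_nhds (by linarith) (by linarith)
    filter_upwards [hmem] with w hw
    rcases le_or_gt w z with hle | hlt
    · exact hcc'.trans_le (key w hw.1 hle)
    · exact hc.trans_le (hopfLax_mono hm hg h.le hlt.le)

theorem hopfLax_semigroup_le {u0 : ℝ → ℝ} (hm : Monotone u0) (hg : Grows u0)
    {s t : ℝ} (hs : 0 ≤ s) (hst : s < t) {x y : ℝ} (hyx : y ≤ x) :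
    hopfLax u0 x t ≤ hopfLax u0 y s + (x - y) ^ 2 / (4 * (t - s)) := by
  have ht : 0 < t := hs.trans_lt hst
  rcases hs.eq_or_lt with h | h
  · rw [← h, hopfLax_zero, sub_zero]
    exact hopfLax_le_cand hm hg ht hyx
  · rw [hopfLax_eq h.ne' y, ← sub_le_iff_le_add]
    refine le_csInf ⟨_, mem_image_of_mem _ (mem_Iic.2 (le_refl y))⟩ ?_
    rintro e ⟨z, hz, rfl⟩
    simp only
    rw [sub_le_iff_le_add]
    have hzy : z ≤ y := mem_Iic.1 hz
    have h1 : hopfLax u0 x t ≤ u0 z + (x - z) ^ 2 / (4 * t) :=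
      hopfLax_le_cand hm hg ht (hzy.trans hyx)
    have hts : 0 < t - s := sub_pos.2 hst
    have h2 : (x - z) ^ 2 / (4 * t) ≤ (y - z) ^ 2 / (4 * s) + (x - y) ^ 2 / (4 * (t - s)) := by
      rw [div_add_div _ _ (by positivity : (4 * s : ℝ) ≠ 0)
        (by positivity : (4 * (t - s) : ℝ) ≠ 0),
        div_le_div_iff₀ (by positivity) (by positivity)]
      nlinarith [sq_nonneg ((y - z) * (t - s) - (x - y) * s), mul_pos h hts]
    linarith

theorem minSet_nonempty {u0 : ℝ → ℝ} (hm : Monotone u0) (hg : Grows u0)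
    (hlc : ∀ y : ℝ, ContinuousWithinAt u0 (Iic y) y)
    {s t : ℝ} (hs : 0 ≤ s) (hst : s < t) (x : ℝ) :
    ∃ z, z ∈ minSet u0 x s t := by
  have ht : 0 < t := hs.trans_lt hst
  have hts : 0 < t - s := sub_pos.2 hst
  have hUm : Monotone fun z => hopfLax u0 z s := hopfLax_mono hm hg hs
  have hUg : Grows fun z => hopfLax u0 z s := hopfLax_grows hm hg hs
  have hUl : LowerSemicontinuous fun z => hopfLax u0 z s := hopfLax_lsc hm hg hlc hs
  obtain ⟨z, hzx, hzmin⟩ := attain hUm hUg hUl hts x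
  refine ⟨z, hzx, le_antisymm (hopfLax_semigroup_le hm hg hs hst hzx) ?_⟩
  rw [hopfLax_eq ht.ne']
  refine le_csInf ⟨_, mem_image_of_mem _ (mem_Iic.2 (le_refl x))⟩ ?_
  rintro e ⟨w, hwmem, rfl⟩
  have hw : w ≤ x := mem_Iic.1 hwmem
  rcases hs.eq_or_lt with h | h
  · have h4 := hzmin w hw
    simp only [← h, sub_zero, hopfLax_zero] at h4 ⊢
    exact h4
  · set ζ := w + s / t * (x - w) with hζdef
    have hst' : s / t ≤ 1 := (div_le_one ht).2 hst.le
    have hst0 : 0 ≤ s / t := div_nonneg h.le ht.le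
    have hζx : ζ ≤ x := by
      rw [hζdef]; nlinarith [mul_nonneg (sub_nonneg.2 hst') (sub_nonneg.2 hw)]
    have hwζ : w ≤ ζ := by
      rw [hζdef]; nlinarith [mul_nonneg hst0 (sub_nonneg.2 hw)]
    have h1 := hzmin ζ hζx
    have h2 : hopfLax u0 ζ s ≤ u0 w + (ζ - w) ^ 2 / (4 * s) :=
      hopfLax_le_cand hm hg h hwζ
    have h3 : (ζ - w) ^ 2 / (4 * s) + (x - ζ) ^ 2 / (4 * (t - s)) = (x - w) ^ 2 / (4 * t) := by
      rw [hζdef]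
      field_simp
      ring
    simp only at h1 ⊢
    linarith

theorem minSet_bddBelow {u0 : ℝ → ℝ} (hm : Monotone u0) (hg : Grows u0)
    {s t : ℝ} (hs : 0 ≤ s) (hst : s < t) (x : ℝ) :
    BddBelow (minSet u0 x s t) := by
  have hts : 0 < t - s := sub_pos.2 hst
  have hUg : Grows fun z => hopfLax u0 z s := hopfLax_grows hm hg hs
  obtain ⟨m, hmx, hco⟩ := coercive hUg hts x (hopfLax u0 x t)
  refine ⟨m, fun y hy => ?_⟩
  by_contra hcon
  push_neg at hcon
  have h1 := hco y hcon.le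
  have h2 := hy.2
  linarith
end HLaux

/-- If u(·,s) is Lipschitz with constant K on [y⁻(a;s,T), b],
then for x ∈ [a,b] and t ∈ (s,T], every minimizer y ∈ I(x;s,t) satisfies
x - 4K(t-s) ≤ y ≤ x. -/
theorem minSet_lipschitz_localization
    (u0 : ℝ → ℝ) (hmono : Monotone u0)
    (hlc : ∀ y : ℝ, ContinuousWithinAt u0 (Iic y) y)
    (hgrowth : Tendsto (fun y => u0 y / y ^ 2) atBot (nhds 0))
    (s T a b : ℝ) (hs : 0 ≤ s) (hsT : s < T) (hab : a < b) (K : ℝ≥0)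
    (hK : LipschitzOnWith K (fun y => hopfLax u0 y s)
            (Icc (yminus u0 a s T) b)) :
    ∀ x ∈ Icc a b, ∀ t : ℝ, s < t → t ≤ T →
      ∀ y ∈ minSet u0 x s t, x - 4 * (K : ℝ) * (t - s) ≤ y ∧ y ≤ x := by
  intro x hx t hst htT y hy
  have hg : HLaux.Grows u0 := HLaux.grows_of_tendsto hgrowth
  have ht0 : 0 < t - s := sub_pos.2 hst
  have hT0 : 0 < T - s := sub_pos.2 hsT
  obtain ⟨hyx, hyeq⟩ := hy
  refine ⟨?_, hyx⟩
  obtain ⟨z, hz⟩ := HLaux.minSet_nonempty hmono hg hlc hs hsT a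
  have hbdd := HLaux.minSet_bddBelow hmono hg hs hsT a
  have hym_z : yminus u0 a s T ≤ z := csInf_le hbdd hz
  have hza : z ≤ a := hz.1
  have hax : a ≤ x := hx.1
  have hxb : x ≤ b := hx.2
  -- Step 1 : y is at least the minimal minimizer at (a, T)
  have hstep1 : yminus u0 a s T ≤ y := by
    by_cases hcase : x = a ∧ t = T
    · obtain ⟨h1, h2⟩ := hcase
      subst h1; subst h2
      exact csInf_le hbdd ⟨hyx, hyeq⟩
    · by_contra hcon
      push_neg at hcon hcase
      have hyz : y < z := hcon.trans_le hym_z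
      have I1 : hopfLax u0 x t ≤ hopfLax u0 z s + (x - z) ^ 2 / (4 * (t - s)) :=
        HLaux.hopfLax_semigroup_le hmono hg hs hst (hza.trans hax)
      have I2 : hopfLax u0 a T ≤ hopfLax u0 y s + (a - y) ^ 2 / (4 * (T - s)) :=
        HLaux.hopfLax_semigroup_le hmono hg hs hsT (hyz.le.trans hza)
      have E2 := hz.2
      have h4t : (0:ℝ) < 4 * (t - s) := by linarith
      have h4T : (0:ℝ) < 4 * (T - s) := by linarith
      set G : ℝ := hopfLax u0 z s - hopfLax u0 y s with hGdef
      have d1 : (x - y) ^ 2 ≤ (G + (x - z) ^ 2 / (4 * (t - s))) * (4 * (t - s)) := by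
        refine (div_le_iff₀ h4t).1 ?_
        rw [hGdef]
        linarith
      have e1 : (x - z) ^ 2 / (4 * (t - s)) * (4 * (t - s)) = (x - z) ^ 2 :=
        div_mul_cancel₀ _ h4t.ne'
      have d1' : (x - y) ^ 2 - (x - z) ^ 2 ≤ 4 * (t - s) * G := by nlinarith [d1, e1]
      have d2 : (a - z) ^ 2 ≤ (-G + (a - y) ^ 2 / (4 * (T - s))) * (4 * (T - s)) := by
        refine (div_le_iff₀ h4T).1 ?_
        rw [hGdef]
        linarith
      have e2 : (a - y) ^ 2 / (4 * (T - s)) * (4 * (T - s)) = (a - y) ^ 2 :=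
        div_mul_cancel₀ _ h4T.ne'
      have d2' : 4 * (T - s) * G ≤ (a - y) ^ 2 - (a - z) ^ 2 := by nlinarith [d2, e2]
      have hq1 := mul_le_mul_of_nonneg_right d1' hT0.le
      have hq2 := mul_le_mul_of_nonneg_right d2' ht0.le
      have hayz : (0:ℝ) < 2 * a - y - z := by linarith
      rcases hax.lt_or_eq with haxs | haxe
      · linarith [hq1, hq2, mul_pos (mul_pos hT0 (sub_pos.2 hyz)) (sub_pos.2 haxs),
          mul_nonneg (mul_nonneg (by linarith : (0:ℝ) ≤ (T - s) - (t - s))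
            (sub_pos.2 hyz).le) hayz.le]
      · have htT' : t < T := htT.lt_or_eq.resolve_right (hcase haxe.symm)
        linarith [hq1, hq2,
          mul_nonneg (mul_nonneg hT0.le (sub_pos.2 hyz).le) (sub_nonneg.2 hax),
          mul_pos (mul_pos (by linarith : (0:ℝ) < (T - s) - (t - s))
            (sub_pos.2 hyz)) hayz]
  -- Step 2 : Lipschitz bound
  have hymx : yminus u0 a s T ≤ x := hstep1.trans hyx
  have hxmem : x ∈ Icc (yminus u0 a s T) b := ⟨hymx, hxb⟩
  have hymem : y ∈ Icc (yminus u0 a s T) b := ⟨hstep1, hyx.trans hxb⟩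
  have hUxt : hopfLax u0 x t ≤ hopfLax u0 x s := by
    have h1 := HLaux.hopfLax_semigroup_le hmono hg hs hst (le_refl x)
    have h0 : (x - x) ^ 2 / (4 * (t - s)) = 0 := by simp
    linarith
  have hlip : hopfLax u0 x s - hopfLax u0 y s ≤ (K : ℝ) * (x - y) := by
    have h1 := hK.dist_le_mul x hxmem y hymem
    simp only [Real.dist_eq] at h1
    have h2 : |x - y| = x - y := abs_of_nonneg (by linarith)
    rw [h2] at h1
    calc hopfLax u0 x s - hopfLax u0 y s ≤ |hopfLax u0 x s - hopfLax u0 y s| :=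
          le_abs_self _
      _ ≤ (K : ℝ) * (x - y) := h1
  have hkey : (x - y) ^ 2 / (4 * (t - s)) ≤ (K : ℝ) * (x - y) := by linarith
  have h4p : (0:ℝ) < 4 * (t - s) := by linarith
  have hfin : (x - y) ^ 2 ≤ (K : ℝ) * (x - y) * (4 * (t - s)) := (div_le_iff₀ h4p).1 hkey
  nlinarith [hfin, show (0:ℝ) ≤ 4 * (K : ℝ) * (t - s) by positivity]
end

section
/- Assume u0 : ℝ → ℝ is nondecreasing, locally Lipschitz continuous, and satisfies u0(y)/y² → 0 as y → -∞. Then the Hopf-Lax solution u(x,t) = inf_{y ≤ x}{ u0(y) + (x-y)²/(4t) } (with u(x,0) = u0(x)) is locally Lipschitz on ℝ × [0,∞). Moreover, for any a < b and T < ∞ there exists a constant L = L(a,b,T) such that I(x;s,t) ⊆ [x - L(t-s), x] for all x ∈ [a,b] and 0 ≤ s < t ≤ T. -/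
open Set Filter MeasureTheory
open scoped NNReal ENNReal

/-- A locally Lipschitz function on ℝ is Lipschitz on every compact interval. -/
lemma HLaux.exists_lipschitzOnWith_Icc {f : ℝ → ℝ} (hf : LocallyLipschitz f) (c d : ℝ) :
    ∃ K : ℝ≥0, LipschitzOnWith K f (Icc c d) := by
  classical
  have hcont : Continuous f := hf.continuous
  choose K t ht hK using hf
  have hs : IsCompact (Icc c d) := isCompact_Icc
  obtain ⟨F, _, hF⟩ := hs.elim_nhds_subcover (fun x => interior (t x))
    (fun x _ => interior_mem_nhds.2 (ht x))
  obtain ⟨δ, hδ, hball⟩ := lebesgue_number_lemma_of_metric hs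
    (c := fun i : F => interior (t i)) (fun i => isOpen_interior)
    (by intro x hx; obtain ⟨i, hi1, hi2⟩ := mem_iUnion₂.1 (hF hx)
        exact mem_iUnion.2 ⟨⟨i, hi1⟩, hi2⟩)
  obtain ⟨Cb, hCb⟩ := hs.exists_bound_of_continuousOn hcont.continuousOn
  set C : ℝ := max Cb 0 with hC
  set K0 : ℝ≥0 := F.sup K with hK0
  set Kr : ℝ := (K0 : ℝ) + 2 * C / δ with hKr
  have hCnn : (0:ℝ) ≤ C := le_max_right _ _
  have hKrnn : 0 ≤ Kr := by positivity
  refine ⟨Kr.toNNReal, LipschitzOnWith.of_dist_le_mul ?_⟩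
  intro x hx y hy
  have hcoe : (Kr.toNNReal : ℝ) = Kr := Real.coe_toNNReal _ hKrnn
  rw [hcoe]
  rcases lt_or_ge (dist x y) δ with hlt | hge
  · obtain ⟨i, hi⟩ := hball x hx
    have hxi : x ∈ t i := interior_subset (hi (Metric.mem_ball_self hδ))
    have hyi : y ∈ t i := interior_subset (hi (by simpa [Metric.mem_ball, dist_comm] using hlt))
    have hd := (hK i).dist_le_mul x hxi y hyi
    have hKi : (K (i:ℝ) : ℝ) ≤ (K0 : ℝ) := by exact_mod_cast Finset.le_sup i.2
    have hKiKr : (K (i:ℝ) : ℝ) ≤ Kr := by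
      have : (0:ℝ) ≤ 2*C/δ := by positivity
      rw [hKr]; linarith
    calc dist (f x) (f y) ≤ (K (i:ℝ) : ℝ) * dist x y := hd
      _ ≤ Kr * dist x y := mul_le_mul_of_nonneg_right hKiKr dist_nonneg
  · have h1 : |f x| ≤ C := le_trans (by simpa using hCb x hx) (le_max_left _ _)
    have h2 : |f y| ≤ C := le_trans (by simpa using hCb y hy) (le_max_left _ _)
    have hd2 : dist (f x) (f y) ≤ 2 * C := by
      rw [Real.dist_eq]
      calc |f x - f y| ≤ |f x| + |f y| := abs_sub _ _
        _ ≤ 2 * C := by linarith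
    have hdd : 2 * C ≤ (2 * C / δ) * dist x y := by
      rw [div_mul_eq_mul_div, le_div_iff₀ hδ]
      nlinarith
    have hK0nn : (0:ℝ) ≤ (K0:ℝ) := K0.coe_nonneg
    have h3 : (2*C/δ) * dist x y ≤ Kr * dist x y :=
      mul_le_mul_of_nonneg_right (by rw [hKr]; linarith) dist_nonneg
    calc dist (f x) (f y) ≤ 2 * C := hd2
      _ ≤ 2 * C / δ * dist x y := hdd
      _ ≤ Kr * dist x y := h3

lemma HLaux.dist_fst_le' (q p : ℝ × ℝ) : dist q.1 p.1 ≤ dist q p := by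
  rw [Prod.dist_eq]; exact le_max_left _ _

lemma HLaux.dist_snd_le' (q p : ℝ × ℝ) : dist q.2 p.2 ≤ dist q p := by
  rw [Prod.dist_eq]; exact le_max_right _ _

namespace HLaux

variable {u0 : ℝ → ℝ} (hmono : Monotone u0) (hlip : LocallyLipschitz u0)
  (hgrowth : Tendsto (fun y => u0 y / y ^ 2) atBot (nhds 0))

include hmono hgrowth in
lemma quadLB : ∀ ε : ℝ, 0 < ε → ∃ C : ℝ, 0 ≤ C ∧ ∀ y, -C - ε * y ^ 2 ≤ u0 y := by
  intro ε hε
  have h := Metric.tendsto_nhds.mp hgrowth ε hε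
  obtain ⟨M, hM⟩ := eventually_atBot.mp h
  refine ⟨|u0 (min M (-1))|, abs_nonneg _, fun y => ?_⟩
  rcases le_total y (min M (-1)) with hy | hy
  · have hy1 : y ≤ -1 := le_trans hy (min_le_right _ _)
    have hy2 : y ^ 2 > 0 := by nlinarith
    have := hM y (le_trans hy (min_le_left _ _))
    rw [Real.dist_eq, sub_zero, abs_lt] at this
    have h3 : -ε * y ^ 2 ≤ (u0 y / y ^ 2) * y ^ 2 := by nlinarith [this.1]
    rw [div_mul_cancel₀ _ (ne_of_gt hy2)] at h3
    nlinarith [abs_nonneg (u0 (min M (-1)))]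
  · have := hmono hy
    have h4 : -|u0 (min M (-1))| ≤ u0 (min M (-1)) := neg_abs_le _
    nlinarith [sq_nonneg y]

include hmono hlip hgrowth in
lemma existsLeast : ∀ a b T : ℝ, a < b → 0 < T → ∃ M : ℝ, M < a ∧
    ∀ x ∈ Icc a b, ∀ t : ℝ, 0 < t → t ≤ T → ∃ y ∈ Icc M x,
      IsLeast ((fun z => u0 z + (x - z) ^ 2 / (4 * t)) '' Iic x)
        (u0 y + (x - y) ^ 2 / (4 * t)) := by
  intro a b T hab hT
  obtain ⟨C, hC0, hC⟩ := quadLB hmono hgrowth (1 / (8 * T)) (by positivity)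
  set B : ℝ := max |a| |b| with hB
  have hB0 : 0 ≤ B := le_trans (abs_nonneg a) (le_max_left _ _)
  have haB : -B ≤ a := neg_le_of_abs_le (le_max_left _ _)
  have hbB : b ≤ B := le_trans (le_abs_self b) (le_max_right _ _)
  set R : ℝ := Real.sqrt (8 * T * (C + |u0 b| + 1) + 2 * B ^ 2) with hRdef
  have hR0 : 0 ≤ R := Real.sqrt_nonneg _
  have hR2 : R ^ 2 = 8 * T * (C + |u0 b| + 1) + 2 * B ^ 2 :=
    Real.sq_sqrt (by positivity)
  refine ⟨-(2 * B + R) - 1, by linarith, ?_⟩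
  intro x hx t ht htT
  have hxb : x ≤ b := hx.2
  have hxB : -B ≤ x := le_trans haB hx.1
  have hxB2 : x ^ 2 ≤ B ^ 2 := by nlinarith [hx.1, hx.2, le_abs_self b, neg_abs_le a]
  have hub : u0 x ≤ |u0 b| := le_trans (hmono hxb) (le_abs_self _)
  set M : ℝ := -(2 * B + R) - 1 with hMdef
  have key : ∀ z, z ≤ M → u0 x + 1 ≤ u0 z + (x - z) ^ 2 / (4 * t) := by
    intro z hz
    have h4 : (x - z) ^ 2 / (4 * T) ≤ (x - z) ^ 2 / (4 * t) := by
      gcongr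
    have hw : z - 2 * x ≤ -(R + 1) := by linarith
    have hw2 : (R + 1) ^ 2 ≤ (z - 2 * x) ^ 2 := by nlinarith
    have hexp : -C - z ^ 2 / (8 * T) + (x - z) ^ 2 / (4 * T)
        = (-(8 * T * C) - z ^ 2 + 2 * (x - z) ^ 2) / (8 * T) := by
      field_simp; ring
    have hgoal : u0 x + 1 ≤ -C - z ^ 2 / (8 * T) + (x - z) ^ 2 / (4 * T) := by
      rw [hexp, le_div_iff₀ (by positivity)]
      nlinarith [hw2, hR2, hxB2, hub, hC0, mul_le_mul_of_nonneg_left hub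
        (by positivity : (0:ℝ) ≤ 8 * T)]
    have h5 : (1 / (8 * T)) * z ^ 2 = z ^ 2 / (8 * T) := by ring
    linarith [hC z, h4, hgoal, h5.le, h5.ge]
  have hMx : M ≤ x := by linarith [hx.1]
  have hgc : Continuous fun z => u0 z + (x - z) ^ 2 / (4 * t) :=
    hlip.continuous.add (by fun_prop)
  obtain ⟨y, hyIcc, hymin⟩ := isCompact_Icc.exists_isMinOn (nonempty_Icc.2 hMx)
    hgc.continuousOn
  refine ⟨y, hyIcc, ⟨⟨y, hyIcc.2, rfl⟩, ?_⟩⟩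
  rintro w ⟨z, hz, rfl⟩
  rcases le_total M z with hMz | hzM
  · exact hymin ⟨hMz, hz⟩
  · have hgx : u0 y + (x - y) ^ 2 / (4 * t) ≤ u0 x := by
      have := hymin ⟨hMx, le_refl x⟩
      simpa using this
    have := key z hzM
    linarith

lemma hopfLax_eq_of_isLeast {x t v : ℝ} (ht : 0 < t)
    (h : IsLeast ((fun z => u0 z + (x - z) ^ 2 / (4 * t)) '' Iic x) v) :
    hopfLax u0 x t = v := by
  rw [hopfLax, if_neg (ne_of_gt ht)]; exact h.csInf_eq

include hmono hlip hgrowth in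
lemma hopfLax_le {x z t : ℝ} (hz : z ≤ x) (ht : 0 < t) :
    hopfLax u0 x t ≤ u0 z + (x - z) ^ 2 / (4 * t) := by
  obtain ⟨M, _, h⟩ := existsLeast hmono hlip hgrowth (x - 1) (x + 1) t (by linarith) ht
  obtain ⟨y, _, hL⟩ := h x ⟨by linarith, by linarith⟩ t ht le_rfl
  rw [hopfLax_eq_of_isLeast ht hL]
  exact hL.2 ⟨z, hz, rfl⟩

include hmono hlip hgrowth in
lemma hopfLax_le_u0 {x t : ℝ} (ht : 0 ≤ t) : hopfLax u0 x t ≤ u0 x := by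
  rcases eq_or_lt_of_le ht with h | h
  · rw [hopfLax, if_pos h.symm]
  · have := hopfLax_le hmono hlip hgrowth (le_refl x) h
    simpa using this

include hmono hlip hgrowth in
lemma hopfLax_anti {x s t : ℝ} (hs : 0 ≤ s) (hst : s ≤ t) (ht : 0 < t) :
    hopfLax u0 x t ≤ hopfLax u0 x s := by
  rcases eq_or_lt_of_le hs with h | h
  · rw [← h, show hopfLax u0 x 0 = u0 x from by simp [hopfLax]]
    exact hopfLax_le_u0 hmono hlip hgrowth ht.le
  · obtain ⟨M, _, hex⟩ := existsLeast hmono hlip hgrowth (x - 1) (x + 1) s (by linarith) h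
    obtain ⟨y, hyIcc, hL⟩ := hex x ⟨by linarith, by linarith⟩ s h le_rfl
    rw [hopfLax_eq_of_isLeast h hL]
    have h1 := hopfLax_le hmono hlip hgrowth hyIcc.2 ht
    have h2 : (x - y) ^ 2 / (4 * t) ≤ (x - y) ^ 2 / (4 * s) := by gcongr
    linarith

end HLaux

namespace HLaux
variable {u0 : ℝ → ℝ} (hmono : Monotone u0) (hlip : LocallyLipschitz u0)
  (hgrowth : Tendsto (fun y => u0 y / y ^ 2) atBot (nhds 0))

include hmono hlip hgrowth in
lemma hopfLax_quadLB {T : ℝ} (hT : 0 < T) : ∃ C : ℝ, 0 ≤ C ∧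
    ∀ y s : ℝ, 0 ≤ s → s ≤ T → -C - y ^ 2 / (16 * T) ≤ hopfLax u0 y s := by
  obtain ⟨C, hC0, hC⟩ := quadLB hmono hgrowth (1 / (32 * T)) (by positivity)
  refine ⟨C, hC0, fun y s hs hsT => ?_⟩
  have key : ∀ z, -C - y ^ 2 / (16 * T) ≤ u0 z + (y - z) ^ 2 / (4 * T) := by
    intro z
    have h1 := hC z
    have e1 : -C - z ^ 2 / (32 * T) + (y - z) ^ 2 / (4 * T) - (-C - y ^ 2 / (16 * T))
        = (8 * (y - z) ^ 2 - z ^ 2 + 2 * y ^ 2) / (32 * T) := by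
      field_simp; ring
    have e2 : (0:ℝ) ≤ (8 * (y - z) ^ 2 - z ^ 2 + 2 * y ^ 2) / (32 * T) := by
      apply div_nonneg _ (by positivity)
      nlinarith [sq_nonneg (7 * z - 8 * y), sq_nonneg y]
    have e3 : (1 / (32 * T)) * z ^ 2 = z ^ 2 / (32 * T) := by ring
    linarith
  rcases eq_or_lt_of_le hs with h | h
  · rw [← h, show hopfLax u0 y 0 = u0 y from by simp [hopfLax]]
    have := key y
    simpa using this
  · obtain ⟨M, _, hex⟩ := existsLeast hmono hlip hgrowth (y - 1) (y + 1) T (by linarith) hT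
    obtain ⟨z, hzIcc, hL⟩ := hex y ⟨by linarith, by linarith⟩ s h hsT
    rw [hopfLax_eq_of_isLeast h hL]
    have h2 : (y - z) ^ 2 / (4 * T) ≤ (y - z) ^ 2 / (4 * s) := by gcongr
    linarith [key z]

include hmono hlip hgrowth in
lemma boxBounds (a b T : ℝ) (hab : a < b) (hT : 0 < T) : ∃ K : ℝ≥0,
    (∀ t : ℝ, 0 ≤ t → t ≤ T → ∀ x1 x2 : ℝ, x1 ∈ Icc a b → x2 ∈ Icc a b → x1 ≤ x2 →
      0 ≤ hopfLax u0 x2 t - hopfLax u0 x1 t ∧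
      hopfLax u0 x2 t - hopfLax u0 x1 t ≤ (K : ℝ) * (x2 - x1)) ∧
    (∀ x : ℝ, x ∈ Icc a b → ∀ s t : ℝ, 0 ≤ s → s ≤ t → t ≤ T →
      0 ≤ hopfLax u0 x s - hopfLax u0 x t ∧
      hopfLax u0 x s - hopfLax u0 x t ≤ (K : ℝ) ^ 2 * (t - s)) := by
  obtain ⟨M, hMa, hex⟩ := existsLeast hmono hlip hgrowth a b T hab hT
  obtain ⟨K, hK⟩ := HLaux.exists_lipschitzOnWith_Icc hlip M b
  have hzero : ∀ z : ℝ, hopfLax u0 z 0 = u0 z := fun z => by simp [hopfLax]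
  have hlipK : ∀ z w : ℝ, z ∈ Icc M b → w ∈ Icc M b → z ≤ w →
      u0 w - u0 z ≤ (K : ℝ) * (w - z) := by
    intro z w hz hw hzw
    have := hK.dist_le_mul w hw z hz
    rw [Real.dist_eq, Real.dist_eq] at this
    have h1 := le_trans (le_abs_self _) this
    rwa [abs_of_nonneg (by linarith)] at h1
  refine ⟨K, ?_, ?_⟩
  · intro t ht0 htT x1 x2 hx1 hx2 h12
    constructor
    · rcases eq_or_lt_of_le ht0 with h | ht
      · rw [← h, hzero, hzero]
        have := hmono h12; linarith
      · obtain ⟨y2, hy2, hL2⟩ := hex x2 hx2 t ht htT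
        have e2 := hopfLax_eq_of_isLeast ht hL2
        have h1 : hopfLax u0 x1 t ≤
            u0 (y2 - (x2 - x1)) + (x1 - (y2 - (x2 - x1))) ^ 2 / (4 * t) :=
          hopfLax_le hmono hlip hgrowth (by linarith [hy2.2]) ht
        have h2 : u0 (y2 - (x2 - x1)) ≤ u0 y2 := hmono (by linarith)
        have h3 : (x1 - (y2 - (x2 - x1))) ^ 2 = (x2 - y2) ^ 2 := by ring
        rw [h3] at h1
        linarith
    · rcases eq_or_lt_of_le ht0 with h | ht
      · rw [← h, hzero, hzero]
        exact hlipK x1 x2 ⟨le_trans hMa.le hx1.1, hx1.2⟩ ⟨le_trans hMa.le hx2.1, hx2.2⟩ h12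
      · obtain ⟨y1, hy1, hL1⟩ := hex x1 hx1 t ht htT
        have e1 := hopfLax_eq_of_isLeast ht hL1
        have h1 : hopfLax u0 x2 t ≤
            u0 (y1 + (x2 - x1)) + (x2 - (y1 + (x2 - x1))) ^ 2 / (4 * t) :=
          hopfLax_le hmono hlip hgrowth (by linarith [hy1.2]) ht
        have h3 : (x2 - (y1 + (x2 - x1))) ^ 2 = (x1 - y1) ^ 2 := by ring
        rw [h3] at h1
        have h2 : u0 (y1 + (x2 - x1)) - u0 y1 ≤ (K : ℝ) * (x2 - x1) := by
          have := hlipK y1 (y1 + (x2 - x1)) ⟨hy1.1, le_trans hy1.2 hx1.2⟩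
            ⟨by linarith [hy1.1], by linarith [hy1.2, hx2.2]⟩ (by linarith)
          linarith [this]
        linarith
  · intro x hx s t hs hst htT
    rcases eq_or_lt_of_le hst with heq | hst'
    · rw [heq]; simp
    have ht : 0 < t := lt_of_le_of_lt hs hst'
    have hanti := hopfLax_anti hmono hlip hgrowth hs hst ht (x := x)
    refine ⟨by linarith, ?_⟩
    obtain ⟨y, hyIcc, hL⟩ := hex x hx t ht htT
    have e := hopfLax_eq_of_isLeast ht hL
    set d : ℝ := x - y with hd
    have hd0 : 0 ≤ d := by simp [hd]; linarith [hyIcc.2]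
    set y' : ℝ := x - d * s / t with hy'
    have hdst : d * s / t ≤ d := by
      rw [div_le_iff₀ ht]
      nlinarith
    have hy'1 : y ≤ y' := by
      rw [hy']
      have : x - d = y := by rw [hd]; ring
      linarith
    have hy'x : y' ≤ x := by
      rw [hy']
      have : 0 ≤ d * s / t := by positivity
      linarith
    have claim1 : hopfLax u0 x s ≤ u0 y' + d ^ 2 * s / (4 * t ^ 2) := by
      rcases eq_or_lt_of_le hs with h0 | h0
      · rw [← h0, hzero]
        have hyx : y' = x := by rw [hy', ← h0]; ring
        rw [hyx]
        have : (0:ℝ) ≤ d ^ 2 * 0 / (4 * t ^ 2) := by positivity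
        linarith
      · have h1 := hopfLax_le hmono hlip hgrowth hy'x h0
        have h2 : (x - y') ^ 2 / (4 * s) = d ^ 2 * s / (4 * t ^ 2) := by
          rw [hy']
          field_simp
          ring
        linarith
    have claim2 : u0 y' - u0 y ≤ (K : ℝ) * (d * (t - s) / t) := by
      have h1 := hlipK y y' ⟨hyIcc.1, le_trans hyIcc.2 hx.2⟩
        ⟨le_trans hyIcc.1 hy'1, le_trans hy'x hx.2⟩ hy'1
      have h2 : y' - y = d * (t - s) / t := by
        rw [hy', hd]
        field_simp
        ring
      rw [h2] at h1
      linarith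
    -- clear denominators
    have h4t2 : (0:ℝ) < 4 * t ^ 2 := by positivity
    have c1 : (hopfLax u0 x s - u0 y') * (4 * t ^ 2) ≤ d ^ 2 * s := by
      rw [← le_div_iff₀ h4t2]
      linarith [claim1]
    have c2 : (hopfLax u0 x t - u0 y) * (4 * t ^ 2) = d ^ 2 * t := by
      rw [e]
      field_simp
      ring
    have c3 : (u0 y' - u0 y) * (4 * t ^ 2) ≤ 4 * (K : ℝ) * d * (t - s) * t := by
      have h := mul_le_mul_of_nonneg_right claim2 h4t2.le
      have h2 : (K : ℝ) * (d * (t - s) / t) * (4 * t ^ 2) = 4 * (K : ℝ) * d * (t - s) * t := by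
        field_simp
      rw [h2] at h
      exact h
    have main : (hopfLax u0 x s - hopfLax u0 x t) * (4 * t ^ 2)
        ≤ (K : ℝ) ^ 2 * (t - s) * (4 * t ^ 2) := by
      nlinarith [mul_nonneg (by linarith : (0:ℝ) ≤ t - s) (sq_nonneg (2 * (K : ℝ) * t - d))]
    exact (mul_le_mul_iff_of_pos_right h4t2).1 main
end HLaux

lemma HLaux.arith_lowerBound {x y B D D' RD M2 : ℝ} (hB0 : 0 ≤ B) (hxB : -B ≤ x)
    (hxB2 : x ^ 2 ≤ B ^ 2) (hD'1 : D ≤ D') (hD'0 : 0 ≤ D') (hRD0 : 0 ≤ RD)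
    (hRD2 : RD ^ 2 = D' + 2 * B ^ 2 + 1) (hM2 : M2 = -(2 * B + RD) - 1)
    (hcoarse : 4 * (x - y) ^ 2 - y ^ 2 ≤ D) : M2 < y := by
  by_contra hc
  push_neg at hc
  have hx43 : -(4 / 3 : ℝ) * B ≤ (4 / 3) * x := by linarith
  have h5 : RD + 1 ≤ -(y - (4 / 3) * x) := by rw [hM2] at hc; linarith
  have hw2 : (RD + 1) ^ 2 ≤ (y - (4 / 3) * x) ^ 2 := by
    calc (RD + 1) ^ 2 ≤ (-(y - (4 / 3) * x)) ^ 2 := by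
          apply pow_le_pow_left₀ (by linarith) h5
      _ = (y - (4 / 3) * x) ^ 2 := by ring
  nlinarith [hw2, hRD2, hxB2, hcoarse, hD'1, hB0, hRD0]

lemma HLaux.arith_conclude {x y k τ : ℝ} (hk : 0 ≤ k) (hτ : 0 < τ) (hyx : y ≤ x)
    (h4 : (x - y) ^ 2 ≤ k * (x - y) * (4 * τ)) : x - 4 * k * τ ≤ y := by
  rcases eq_or_lt_of_le (sub_nonneg.2 hyx) with h0 | h0
  · nlinarith
  · nlinarith

/-- If u0 is nondecreasing, locally Lipschitz and u0(y)/y² → 0 as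
y → -∞, then the Hopf–Lax solution u is locally Lipschitz on ℝ × [0,∞), and for
all a < b, T > 0 there is L with I(x;s,t) ⊆ [x - L(t-s), x] for x ∈ [a,b],
0 ≤ s < t ≤ T. -/
theorem hopfLax_locally_lipschitz_and_localization
    (u0 : ℝ → ℝ) (hmono : Monotone u0) (hlip : LocallyLipschitz u0)
    (hgrowth : Tendsto (fun y => u0 y / y ^ 2) atBot (nhds 0)) :
    (∀ p : ℝ × ℝ, 0 ≤ p.2 → ∃ K : ℝ≥0, ∃ ε > 0,
      LipschitzOnWith K (fun q : ℝ × ℝ => hopfLax u0 q.1 q.2)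
        (Metric.ball p ε ∩ {q : ℝ × ℝ | 0 ≤ q.2})) ∧
    (∀ a b T : ℝ, a < b → 0 < T → ∃ L : ℝ,
      ∀ x ∈ Icc a b, ∀ s t : ℝ, 0 ≤ s → s < t → t ≤ T →
        minSet u0 x s t ⊆ Icc (x - L * (t - s)) x) := by
  constructor
  · -- local Lipschitz continuity
    intro p hp
    obtain ⟨K, hsp, htm⟩ := HLaux.boxBounds hmono hlip hgrowth (p.1 - 1) (p.1 + 1)
      (p.2 + 1) (by linarith) (by linarith)
    refine ⟨K + K ^ 2, 1, one_pos, LipschitzOnWith.of_dist_le_mul ?_⟩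
    rintro q ⟨hq1, hq2⟩ q' ⟨hq'1, hq'2⟩
    simp only [Metric.mem_ball] at hq1 hq'1
    have hq2' : (0:ℝ) ≤ q.2 := hq2
    have hq'2' : (0:ℝ) ≤ q'.2 := hq'2
    have hdx : dist q.1 p.1 < 1 := lt_of_le_of_lt (HLaux.dist_fst_le' q p) hq1
    have hdx' : dist q'.1 p.1 < 1 := lt_of_le_of_lt (HLaux.dist_fst_le' q' p) hq'1
    have hdt : dist q.2 p.2 < 1 := lt_of_le_of_lt (HLaux.dist_snd_le' q p) hq1
    have hdt' : dist q'.2 p.2 < 1 := lt_of_le_of_lt (HLaux.dist_snd_le' q' p) hq'1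
    rw [Real.dist_eq, abs_sub_lt_iff] at hdx hdx' hdt hdt'
    have hq1m : q.1 ∈ Icc (p.1 - 1) (p.1 + 1) := ⟨by linarith [hdx.2], by linarith [hdx.1]⟩
    have hq'1m : q'.1 ∈ Icc (p.1 - 1) (p.1 + 1) := ⟨by linarith [hdx'.2], by linarith [hdx'.1]⟩
    have hq2T : q.2 ≤ p.2 + 1 := by linarith [hdt.1]
    have hq'2T : q'.2 ≤ p.2 + 1 := by linarith [hdt'.1]
    -- spatial variation at time q.2
    have S1 : |hopfLax u0 q.1 q.2 - hopfLax u0 q'.1 q.2| ≤ (K : ℝ) * |q.1 - q'.1| := by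
      rcases le_total q.1 q'.1 with h | h
      · obtain ⟨hh1, hh2⟩ := hsp q.2 hq2' hq2T q.1 q'.1 hq1m hq'1m h
        have habs : |q.1 - q'.1| = q'.1 - q.1 := by
          rw [abs_sub_comm, abs_of_nonneg (by linarith)]
        rw [habs]
        rw [abs_le]; constructor <;> linarith
      · obtain ⟨hh1, hh2⟩ := hsp q.2 hq2' hq2T q'.1 q.1 hq'1m hq1m h
        have habs : |q.1 - q'.1| = q.1 - q'.1 := abs_of_nonneg (by linarith)
        rw [habs]
        rw [abs_le]; constructor <;> linarith
    -- time variation at point q'.1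
    have S2 : |hopfLax u0 q'.1 q.2 - hopfLax u0 q'.1 q'.2| ≤ (K : ℝ) ^ 2 * |q.2 - q'.2| := by
      rcases le_total q.2 q'.2 with h | h
      · obtain ⟨hh1, hh2⟩ := htm q'.1 hq'1m q.2 q'.2 hq2' h hq'2T
        have habs : |q.2 - q'.2| = q'.2 - q.2 := by
          rw [abs_sub_comm, abs_of_nonneg (by linarith)]
        rw [habs, abs_le]; constructor <;> linarith
      · obtain ⟨hh1, hh2⟩ := htm q'.1 hq'1m q'.2 q.2 hq'2' h hq2T
        have habs : |q.2 - q'.2| = q.2 - q'.2 := abs_of_nonneg (by linarith)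
        rw [habs, abs_le]; constructor <;> linarith
    have hdq1 : |q.1 - q'.1| ≤ dist q q' := by
      rw [← Real.dist_eq]; exact HLaux.dist_fst_le' q q'
    have hdq2 : |q.2 - q'.2| ≤ dist q q' := by
      rw [← Real.dist_eq]; exact HLaux.dist_snd_le' q q'
    have htri : |hopfLax u0 q.1 q.2 - hopfLax u0 q'.1 q'.2|
        ≤ |hopfLax u0 q.1 q.2 - hopfLax u0 q'.1 q.2|
          + |hopfLax u0 q'.1 q.2 - hopfLax u0 q'.1 q'.2| := abs_sub_le _ _ _
    have hKnn : (0:ℝ) ≤ (K:ℝ) := K.coe_nonneg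
    have hcast : ((K + K ^ 2 : ℝ≥0) : ℝ) = (K : ℝ) + (K : ℝ) ^ 2 := by push_cast; ring
    rw [Real.dist_eq, hcast]
    have m1 : (K : ℝ) * |q.1 - q'.1| ≤ (K : ℝ) * dist q q' :=
      mul_le_mul_of_nonneg_left hdq1 hKnn
    have m2 : (K : ℝ) ^ 2 * |q.2 - q'.2| ≤ (K : ℝ) ^ 2 * dist q q' :=
      mul_le_mul_of_nonneg_left hdq2 (by positivity)
    calc |hopfLax u0 q.1 q.2 - hopfLax u0 q'.1 q'.2|
        ≤ (K : ℝ) * |q.1 - q'.1| + (K : ℝ) ^ 2 * |q.2 - q'.2| := by linarith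
      _ ≤ ((K : ℝ) + (K : ℝ) ^ 2) * dist q q' := by linarith
  · -- localization of the minimizer set
    intro a b T hab hT
    obtain ⟨C, hC0, hC⟩ := HLaux.hopfLax_quadLB hmono hlip hgrowth hT
    obtain ⟨B, hB0, haB, hbB⟩ : ∃ B : ℝ, 0 ≤ B ∧ -B ≤ a ∧ b ≤ B :=
      ⟨max |a| |b|, le_trans (abs_nonneg a) (le_max_left _ _),
        neg_le_of_abs_le (le_max_left _ _),
        le_trans (le_abs_self b) (le_max_right _ _)⟩
    obtain ⟨D, hDdef⟩ : ∃ D : ℝ, D = 16 * T * (u0 b + C) := ⟨_, rfl⟩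
    obtain ⟨D', hD'1, hD'0⟩ : ∃ D' : ℝ, D ≤ D' ∧ 0 ≤ D' :=
      ⟨max D 0, le_max_left _ _, le_max_right _ _⟩
    obtain ⟨RD, hRD0, hRD2⟩ : ∃ r : ℝ, 0 ≤ r ∧ r ^ 2 = D' + 2 * B ^ 2 + 1 :=
      ⟨Real.sqrt (D' + 2 * B ^ 2 + 1), Real.sqrt_nonneg _, Real.sq_sqrt (by positivity)⟩
    obtain ⟨M2, hM2def⟩ : ∃ M2 : ℝ, M2 = -(2 * B + RD) - 1 := ⟨_, rfl⟩
    obtain ⟨a', ha'M2, ha'a⟩ : ∃ a' : ℝ, a' ≤ M2 - 1 ∧ a' ≤ a - 1 :=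
      ⟨min M2 a - 1, by linarith [min_le_left M2 a], by linarith [min_le_right M2 a]⟩
    have ha'b : a' < b := by linarith
    obtain ⟨K, hsp, _⟩ := HLaux.boxBounds hmono hlip hgrowth a' b T ha'b hT
    refine ⟨4 * (K : ℝ), ?_⟩
    intro x hx s t hs hst htT y hy
    obtain ⟨hyx, heq⟩ := hy
    have hxB : -B ≤ x := le_trans haB hx.1
    have hxB2 : x ^ 2 ≤ B ^ 2 := by nlinarith [hx.1, hx.2]
    have hts0 : 0 < t - s := by linarith
    have htsT : t - s ≤ T := by linarith
    have hsT : s ≤ T := by linarith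
    have hut : hopfLax u0 x t ≤ u0 b :=
      le_trans (HLaux.hopfLax_le_u0 hmono hlip hgrowth (by linarith)) (hmono hx.2)
    have hls := hC y s hs hsT
    have h1 : (x - y) ^ 2 / (4 * (t - s)) ≤ u0 b + C + y ^ 2 / (16 * T) := by linarith
    have h2 : (x - y) ^ 2 / (4 * T) ≤ (x - y) ^ 2 / (4 * (t - s)) := by gcongr
    have hcoarse : 4 * (x - y) ^ 2 - y ^ 2 ≤ D := by
      have expand : (x - y) ^ 2 / (4 * T) - y ^ 2 / (16 * T)
          = (4 * (x - y) ^ 2 - y ^ 2) / (16 * T) := by field_simp; ring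
      have e2 : (4 * (x - y) ^ 2 - y ^ 2) / (16 * T) ≤ u0 b + C := by linarith
      have := (div_le_iff₀ (by positivity : (0:ℝ) < 16 * T)).1 e2
      rw [hDdef]; linarith
    have hyM2 : M2 < y := HLaux.arith_lowerBound hB0 hxB hxB2 hD'1 hD'0 hRD0 hRD2
      hM2def hcoarse
    have hyIcc : y ∈ Icc a' b := ⟨by linarith, le_trans hyx hx.2⟩
    have hxIcc' : x ∈ Icc a' b := ⟨by linarith [hx.1], hx.2⟩
    obtain ⟨hsp1, hsp2⟩ := hsp s hs hsT y x hyIcc hxIcc' hyx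
    have hanti := HLaux.hopfLax_anti hmono hlip hgrowth hs (le_of_lt hst)
      (by linarith) (x := x)
    have h3 : (x - y) ^ 2 / (4 * (t - s)) ≤ (K : ℝ) * (x - y) := by linarith
    have h4 : (x - y) ^ 2 ≤ (K : ℝ) * (x - y) * (4 * (t - s)) := by
      rw [div_le_iff₀ (by linarith : (0:ℝ) < 4 * (t - s))] at h3
      linarith
    exact ⟨HLaux.arith_conclude K.coe_nonneg hts0 hyx h4, hyx⟩
end

section
/- Under the assumptions that u0 is nondecreasing, left-continuous, and u0(y)/y² → 0 as y → -∞ (no Lipschitz assumption), the Hopf-Lax solution u(x,t) is locally Lipschitz on ℝ × (0,∞), and for every x ∈ ℝ, u(x,t) → u0(x) as t → 0⁺. -/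
open Set Filter MeasureTheory
open scoped NNReal ENNReal

lemma growth_bound (u0 : ℝ → ℝ) (hmono : Monotone u0)
    (hgrowth : Tendsto (fun y => u0 y / y ^ 2) atBot (nhds 0)) (T : ℝ) (hT : 0 < T) :
    ∃ C : ℝ, 0 ≤ C ∧ ∀ y : ℝ, -(y ^ 2 / (32 * T)) - C ≤ u0 y := by
  have hε : (0:ℝ) < 1 / (32 * T) := by positivity
  have h := (Metric.tendsto_nhds.mp hgrowth) _ hε
  rw [eventually_atBot] at h
  obtain ⟨R, hR⟩ := h
  set R' := min R (-1) with hR'def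
  refine ⟨max 0 (-(u0 R')), le_max_left _ _, fun y => ?_⟩
  rcases le_or_gt y R' with hy | hy
  · have hneg : y < 0 := lt_of_le_of_lt hy (lt_of_le_of_lt (min_le_right _ _) (by norm_num))
    have h2 := hR y (hy.trans (min_le_left _ _))
    rw [Real.dist_eq, sub_zero] at h2
    have hy2 : (0:ℝ) < y ^ 2 := pow_two_pos_of_ne_zero hneg.ne
    have h3 : -(1 / (32 * T)) < u0 y / y ^ 2 := neg_lt_of_abs_lt h2
    have h4 := (lt_div_iff₀ hy2).mp h3
    have h5 : (0:ℝ) ≤ max 0 (-(u0 R')) := le_max_left _ _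
    have e : -(1 / (32 * T)) * y ^ 2 = -(y ^ 2 / (32 * T)) := by ring
    linarith [e ▸ h4]
  · have h6 : u0 R' ≤ u0 y := hmono hy.le
    have h7 : -(u0 R') ≤ max 0 (-(u0 R')) := le_max_right _ _
    have h8 : (0:ℝ) ≤ y ^ 2 / (32 * T) := by positivity
    linarith

lemma F_lower (u0 : ℝ → ℝ) {C T : ℝ} (hT : 0 < T)
    (hC : ∀ z : ℝ, -(z ^ 2 / (32 * T)) - C ≤ u0 z) {t x y : ℝ} (ht : 0 < t) (htT : t ≤ T) :
    (x - y) ^ 2 / (8 * T) - C - x ^ 2 / (8 * T) ≤ u0 y + (x - y) ^ 2 / (4 * t) := by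
  have h1 : (x - y) ^ 2 / (4 * T) ≤ (x - y) ^ 2 / (4 * t) :=
    div_le_div_of_nonneg_left (sq_nonneg _) (by linarith) (by linarith)
  have h2 := hC y
  have e1 : (x - y) ^ 2 / (8 * T) - x ^ 2 / (8 * T) = (4*(x-y)^2 - 4*x^2) / (32 * T) := by ring
  have e2 : -(y ^ 2 / (32 * T)) + (x - y) ^ 2 / (4 * T) = (8*(x-y)^2 - y^2) / (32 * T) := by
    ring
  have h3 : (4*(x-y)^2 - 4*x^2) / (32 * T) ≤ (8*(x-y)^2 - y^2) / (32 * T) := by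
    apply (div_le_div_iff_of_pos_right (by positivity)).mpr
    nlinarith [sq_nonneg (2*x - y), sq_nonneg y]
  linarith

lemma tshift {a s t tmin B : ℝ} (h0 : 0 < tmin) (hs : tmin ≤ s) (ht : tmin ≤ t)
    (ha : 0 ≤ a) (haB : a ≤ B) :
    a ^ 2 / (4 * s) ≤ a ^ 2 / (4 * t) + B ^ 2 / (4 * tmin ^ 2) * |s - t| := by
  have hs0 : 0 < s := h0.trans_le hs
  have ht0 : 0 < t := h0.trans_le ht
  have e : a ^ 2 / (4 * s) - a ^ 2 / (4 * t) = a ^ 2 * (t - s) / (4 * (s * t)) := by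
    field_simp
  have ha2 : a ^ 2 ≤ B ^ 2 := by nlinarith
  have hts : t - s ≤ |s - t| := by rw [abs_sub_comm]; exact le_abs_self _
  have h1a : a ^ 2 * (t - s) ≤ a ^ 2 * |s - t| := mul_le_mul_of_nonneg_left hts (sq_nonneg a)
  have h1b : a ^ 2 * |s - t| ≤ B ^ 2 * |s - t| := mul_le_mul_of_nonneg_right ha2 (abs_nonneg _)
  have h2 : a ^ 2 * (t - s) / (4 * (s * t)) ≤ B ^ 2 * |s - t| / (4 * (s * t)) :=
    (div_le_div_iff_of_pos_right (by positivity)).mpr (h1a.trans h1b)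
  have h3 : B ^ 2 * |s - t| / (4 * (s * t)) ≤ B ^ 2 * |s - t| / (4 * tmin ^ 2) := by
    apply div_le_div_of_nonneg_left (by positivity) (by positivity) (by nlinarith)
  have e2 : B ^ 2 / (4 * tmin ^ 2) * |s - t| = B ^ 2 * |s - t| / (4 * tmin ^ 2) := by ring
  linarith [e ▸ (h2.trans h3)]

lemma xshift {a d s tmin M : ℝ} (h0 : 0 < tmin) (hs : tmin ≤ s) (ha : 0 ≤ a) (haM : a ≤ M)
    (hd : 0 ≤ d) (hd2 : d ≤ 2) :
    (a + d) ^ 2 / (4 * s) ≤ a ^ 2 / (4 * s) + (2 * M + 2) / (4 * tmin) * d := by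
  have hs0 : 0 < s := h0.trans_le hs
  have hM0 : 0 ≤ M := ha.trans haM
  have e : (a + d) ^ 2 / (4 * s) - a ^ 2 / (4 * s) = d * (2 * a + d) / (4 * s) := by
    field_simp; ring
  have h1 : d * (2 * a + d) ≤ d * (2 * M + 2) := by nlinarith
  have h2 : d * (2 * a + d) / (4 * s) ≤ d * (2 * M + 2) / (4 * s) :=
    (div_le_div_iff_of_pos_right (by positivity)).mpr h1
  have h3 : d * (2 * M + 2) / (4 * s) ≤ d * (2 * M + 2) / (4 * tmin) :=
    div_le_div_of_nonneg_left (by positivity) (by positivity) (by linarith)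
  have e2 : (2 * M + 2) / (4 * tmin) * d = d * (2 * M + 2) / (4 * tmin) := by ring
  linarith [e ▸ (h2.trans h3)]

set_option maxHeartbeats 1000000 in
lemma lip_part (u0 : ℝ → ℝ) (hmono : Monotone u0)
    (hgrowth : Tendsto (fun y => u0 y / y ^ 2) atBot (nhds 0)) :
    ∀ p : ℝ × ℝ, 0 < p.2 → ∃ K : ℝ≥0, ∃ ε > 0,
      LipschitzOnWith K (fun q : ℝ × ℝ => hopfLax u0 q.1 q.2)
        (Metric.ball p ε ∩ {q : ℝ × ℝ | 0 < q.2}) := by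
  rintro ⟨x0, t0⟩ hp
  simp only at hp
  set tmin := t0 / 2 with htmin_def
  set tmax := t0 + 1 with htmax_def
  have htmin0 : 0 < tmin := by simp only [htmin_def]; linarith
  have htmax0 : 0 < tmax := by simp only [htmax_def]; linarith
  obtain ⟨C, hC0, hC⟩ := growth_bound u0 hmono hgrowth tmax htmax0
  set U := u0 (x0 + 1) with hU_def
  set D := C + (|x0| + 1) ^ 2 / (8 * tmax) with hD_def
  have hD0 : 0 ≤ D := by
    have : (0:ℝ) ≤ (|x0| + 1) ^ 2 / (8 * tmax) := by positivity
    simp only [hD_def]; linarith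
  set M := Real.sqrt (8 * tmax * (|U| + 1 + D)) + 1 with hM_def
  have hM1 : 1 ≤ M := by
    have := Real.sqrt_nonneg (8 * tmax * (|U| + 1 + D)); simp only [hM_def]; linarith
  have hM0 : 0 ≤ M := by linarith
  set c1 := (M + 2) ^ 2 / (4 * tmin ^ 2) with hc1_def
  set c2 := (2 * M + 2) / (4 * tmin) with hc2_def
  have hc1' : 0 ≤ c1 := by positivity
  have hc2' : 0 ≤ c2 := by positivity
  refine ⟨Real.toNNReal (c1 + c2), min (t0 / 2) 1, by positivity, ?_⟩
  rw [lipschitzOnWith_iff_dist_le_mul]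
  -- region membership
  have hreg : ∀ q : ℝ × ℝ, q ∈ Metric.ball (⟨x0, t0⟩ : ℝ × ℝ) (min (t0 / 2) 1)
      ∩ {q : ℝ × ℝ | 0 < q.2} → |q.1 - x0| ≤ 1 ∧ tmin ≤ q.2 ∧ q.2 ≤ tmax := by
    rintro ⟨x, t⟩ ⟨hball, -⟩
    rw [Metric.mem_ball, Prod.dist_eq, sup_lt_iff] at hball
    obtain ⟨h1, h2⟩ := hball
    rw [Real.dist_eq] at h1 h2
    have e1 : |x - x0| < 1 := lt_of_lt_of_le h1 (min_le_right _ _)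
    have e2 : |t - t0| < t0 / 2 := lt_of_lt_of_le h2 (min_le_left _ _)
    have e3 : |t - t0| < 1 := lt_of_lt_of_le h2 (min_le_right _ _)
    rw [abs_lt] at e2 e3
    refine ⟨e1.le, by simp only [htmin_def]; linarith [e2.1], by simp only [htmax_def]; linarith [e3.2]⟩
  have hSne : ∀ x t : ℝ, ((fun y => u0 y + (x - y) ^ 2 / (4 * t)) '' Iic x).Nonempty :=
    fun x t => ⟨_, mem_image_of_mem _ (self_mem_Iic (a := x))⟩
  have hlow : ∀ x t y : ℝ, |x - x0| ≤ 1 → tmin ≤ t → t ≤ tmax → y ≤ x →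
      (x - y) ^ 2 / (8 * tmax) - D ≤ u0 y + (x - y) ^ 2 / (4 * t) := by
    intro x t y hx ht1 ht2 hy
    have hF := F_lower u0 htmax0 hC (t := t) (x := x) (y := y) (htmin0.trans_le ht1) ht2
    have hxa : |x| ≤ |x0| + 1 := by
      have := abs_sub_abs_le_abs_sub x x0
      linarith
    have hx2 : x ^ 2 ≤ (|x0| + 1) ^ 2 := by nlinarith [abs_nonneg x, sq_abs x, abs_nonneg x0]
    have hdiv : x ^ 2 / (8 * tmax) ≤ (|x0| + 1) ^ 2 / (8 * tmax) :=
      (div_le_div_iff_of_pos_right (by positivity)).mpr hx2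
    simp only [hD_def]; linarith
  have hbdd : ∀ x t : ℝ, |x - x0| ≤ 1 → tmin ≤ t → t ≤ tmax →
      BddBelow ((fun y => u0 y + (x - y) ^ 2 / (4 * t)) '' Iic x) := by
    intro x t hx ht1 ht2
    refine ⟨-D, ?_⟩
    rintro v ⟨y, hy, rfl⟩
    have h1 := hlow x t y hx ht1 ht2 hy
    have h2 : (0:ℝ) ≤ (x - y) ^ 2 / (8 * tmax) := by positivity
    simp only
    linarith
  have hle : ∀ x t y : ℝ, |x - x0| ≤ 1 → tmin ≤ t → t ≤ tmax → y ≤ x →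
      hopfLax u0 x t ≤ u0 y + (x - y) ^ 2 / (4 * t) := by
    intro x t y hx ht1 ht2 hy
    rw [hopfLax, if_neg (ne_of_gt (htmin0.trans_le ht1))]
    exact csInf_le (hbdd x t hx ht1 ht2) (mem_image_of_mem _ hy)
  have hleU : ∀ x t : ℝ, |x - x0| ≤ 1 → tmin ≤ t → t ≤ tmax → hopfLax u0 x t ≤ U := by
    intro x t hx ht1 ht2
    have h1 := hle x t x hx ht1 ht2 le_rfl
    have h2 : x ≤ x0 + 1 := by have := (abs_le.mp hx).2; linarith
    have h3 : u0 x ≤ U := hmono h2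
    have h4 : (x - x) ^ 2 / (4 * t) = 0 := by simp
    linarith
  have hnear : ∀ x t : ℝ, |x - x0| ≤ 1 → tmin ≤ t → t ≤ tmax → ∀ η : ℝ, 0 < η → η ≤ 1 →
      ∃ y, x - M ≤ y ∧ y ≤ x ∧ u0 y + (x - y) ^ 2 / (4 * t) ≤ hopfLax u0 x t + η := by
    intro x t hx ht1 ht2 η hη hη1
    have htne : t ≠ 0 := ne_of_gt (htmin0.trans_le ht1)
    have hEq : hopfLax u0 x t
        = sInf ((fun y => u0 y + (x - y) ^ 2 / (4 * t)) '' Iic x) := if_neg htne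
    have hlt : sInf ((fun y => u0 y + (x - y) ^ 2 / (4 * t)) '' Iic x)
        < hopfLax u0 x t + η := by rw [hEq]; linarith
    obtain ⟨v, hv, hvlt⟩ := exists_lt_of_csInf_lt (hSne x t) hlt
    obtain ⟨y, hy, rfl⟩ := hv
    simp only at hvlt
    refine ⟨y, ?_, hy, hvlt.le⟩
    by_contra hcon
    push_neg at hcon
    have hxy : M ≤ x - y := by linarith
    have harg : (0:ℝ) ≤ 8 * tmax * (|U| + 1 + D) := by positivity
    have hsq : 8 * tmax * (|U| + 1 + D) ≤ (x - y) ^ 2 := by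
      have h1 : Real.sqrt (8 * tmax * (|U| + 1 + D)) ≤ x - y := by
        simp only [hM_def] at hxy; linarith
      have h2 := Real.sq_sqrt harg
      nlinarith [Real.sqrt_nonneg (8 * tmax * (|U| + 1 + D))]
    have hdiv : |U| + 1 + D ≤ (x - y) ^ 2 / (8 * tmax) := by
      rw [le_div_iff₀ (by positivity)]
      linarith
    have h1 := hlow x t y hx ht1 ht2 hy
    have h2 := hleU x t hx ht1 ht2
    have h3 := le_abs_self U
    linarith
  -- main two-point estimate
  have hmain : ∀ x1 t1 x2 t2 : ℝ, |x1 - x0| ≤ 1 → tmin ≤ t1 → t1 ≤ tmax →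
      |x2 - x0| ≤ 1 → tmin ≤ t2 → t2 ≤ tmax → x1 ≤ x2 →
      hopfLax u0 x1 t1 ≤ hopfLax u0 x2 t2 + c1 * |t1 - t2| ∧
      hopfLax u0 x2 t2 ≤ hopfLax u0 x1 t1 + c1 * |t1 - t2| + c2 * (x2 - x1) := by
    intro x1 t1 x2 t2 hx1 ht1a ht1b hx2 ht2a ht2b hx12
    have hd0 : (0:ℝ) ≤ x2 - x1 := by linarith
    have hd2 : x2 - x1 ≤ 2 := by
      have a1 := abs_le.mp hx1
      have a2 := abs_le.mp hx2
      linarith [a1.1, a2.2]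
    constructor
    · apply le_of_forall_pos_le_add
      intro ε hε
      obtain ⟨y, hy1, hy2, hy3⟩ := hnear x2 t2 hx2 ht2a ht2b (min ε 1)
        (lt_min hε one_pos) (min_le_right _ _)
      have hstep := hle x1 t1 (y - (x2 - x1)) hx1 ht1a ht1b (by linarith)
      have emono : u0 (y - (x2 - x1)) ≤ u0 y := hmono (by linarith)
      have esq : (x1 - (y - (x2 - x1))) ^ 2 = (x2 - y) ^ 2 := by ring
      have hts := tshift (a := x2 - y) (s := t1) (t := t2) (B := M + 2)
        htmin0 ht1a ht2a (by linarith) (by linarith)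
      have hmin : min ε 1 ≤ ε := min_le_left _ _
      rw [esq] at hstep
      simp only [hc1_def] at *
      linarith
    · apply le_of_forall_pos_le_add
      intro ε hε
      obtain ⟨y, hy1, hy2, hy3⟩ := hnear x1 t1 hx1 ht1a ht1b (min ε 1)
        (lt_min hε one_pos) (min_le_right _ _)
      have hstep := hle x2 t2 y hx2 ht2a ht2b (by linarith)
      have hts := tshift (a := x2 - y) (s := t2) (t := t1) (B := M + 2)
        htmin0 ht2a ht1a (by linarith) (by linarith)
      have hxs := xshift (a := x1 - y) (d := x2 - x1) (s := t1) (M := M)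
        htmin0 ht1a (by linarith) (by linarith) hd0 hd2
      have eadd : (x1 - y) + (x2 - x1) = x2 - y := by ring
      rw [eadd] at hxs
      rw [abs_sub_comm t2 t1] at hts
      have hmin : min ε 1 ≤ ε := min_le_left _ _
      simp only [hc1_def, hc2_def] at *
      linarith
  -- conclude
  intro q1 hq1 q2 hq2
  obtain ⟨ha1, hb1, hc1r⟩ := hreg q1 hq1
  obtain ⟨ha2, hb2, hc2r⟩ := hreg q2 hq2
  have hK : ((Real.toNNReal (c1 + c2)) : ℝ) = c1 + c2 :=
    Real.coe_toNNReal _ (by linarith)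
  have hdx : |q1.1 - q2.1| ≤ dist q1 q2 := by
    rw [Prod.dist_eq, ← Real.dist_eq]; exact le_max_left _ _
  have hdt : |q1.2 - q2.2| ≤ dist q1 q2 := by
    rw [Prod.dist_eq, ← Real.dist_eq]; exact le_max_right _ _
  have hdnn : 0 ≤ dist q1 q2 := dist_nonneg
  rw [Real.dist_eq, hK, abs_sub_le_iff]
  have ht_abs : (0:ℝ) ≤ |q1.2 - q2.2| := abs_nonneg _
  have ering : (c1 + c2) * dist q1 q2 = c1 * dist q1 q2 + c2 * dist q1 q2 := by ring
  have m1 : c1 * |q1.2 - q2.2| ≤ c1 * dist q1 q2 := mul_le_mul_of_nonneg_left hdt hc1'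
  have m2 : 0 ≤ c2 * dist q1 q2 := mul_nonneg hc2' hdnn
  rcases le_total q1.1 q2.1 with h | h
  · obtain ⟨A, B⟩ := hmain q1.1 q1.2 q2.1 q2.2 ha1 hb1 hc1r ha2 hb2 hc2r h
    have hxd : q2.1 - q1.1 ≤ dist q1 q2 := by
      rw [abs_sub_comm] at hdx
      exact le_trans (le_abs_self _) hdx
    have m3 : c2 * (q2.1 - q1.1) ≤ c2 * dist q1 q2 := mul_le_mul_of_nonneg_left hxd hc2'
    constructor
    · linarith
    · linarith
  · obtain ⟨A, B⟩ := hmain q2.1 q2.2 q1.1 q1.2 ha2 hb2 hc2r ha1 hb1 hc1r h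
    have habs : |q2.2 - q1.2| = |q1.2 - q2.2| := abs_sub_comm _ _
    have hxd : q1.1 - q2.1 ≤ dist q1 q2 := le_trans (le_abs_self _) hdx
    rw [habs] at A B
    have m3 : c2 * (q1.1 - q2.1) ≤ c2 * dist q1 q2 := mul_le_mul_of_nonneg_left hxd hc2'
    constructor
    · linarith
    · linarith

lemma trace_part (u0 : ℝ → ℝ) (hmono : Monotone u0)
    (hlc : ∀ y : ℝ, ContinuousWithinAt u0 (Iic y) y)
    (hgrowth : Tendsto (fun y => u0 y / y ^ 2) atBot (nhds 0)) :
    ∀ x : ℝ, Tendsto (fun t => hopfLax u0 x t) (nhdsWithin 0 (Ioi 0)) (nhds (u0 x)) := by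
  intro x
  rw [Metric.tendsto_nhdsWithin_nhds]
  intro ε hε
  obtain ⟨C, hC0, hC⟩ := growth_bound u0 hmono hgrowth 1 one_pos
  obtain ⟨δ, hδ0, hδ⟩ := Metric.tendsto_nhdsWithin_nhds.mp (hlc x) (ε / 2) (by linarith)
  set G := max (u0 x + C + x ^ 2 / 8) 0 + 1 with hG_def
  have hG0 : 0 < G := by
    have := le_max_right (u0 x + C + x ^ 2 / 8) (0:ℝ)
    simp only [hG_def]; linarith
  have hGge : u0 x + C + x ^ 2 / 8 + 1 ≤ G := by
    have := le_max_left (u0 x + C + x ^ 2 / 8) (0:ℝ)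
    simp only [hG_def]; linarith
  refine ⟨min (δ ^ 2 / (8 * G)) 1, by positivity, ?_⟩
  intro t ht hdist
  have ht0 : (0:ℝ) < t := ht
  rw [Real.dist_eq, sub_zero, abs_of_pos ht0] at hdist
  have ht1 : t ≤ 1 := le_trans hdist.le (min_le_right _ _)
  have htG : t < δ ^ 2 / (8 * G) := lt_of_lt_of_le hdist (min_le_left _ _)
  have htne : t ≠ 0 := ne_of_gt ht0
  have hlb : ∀ y ∈ Iic x, u0 x - ε / 2 ≤ u0 y + (x - y) ^ 2 / (4 * t) := by
    intro y hy
    rw [mem_Iic] at hy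
    rcases le_or_gt y (x - δ) with h | h
    · have hCy := hC y
      have hA : (x - y) ^ 2 / (8 * 1) ≤ (x - y) ^ 2 / (8 * t) :=
        div_le_div_of_nonneg_left (sq_nonneg _) (by linarith) (by linarith)
      have hB : δ ^ 2 / (8 * t) ≤ (x - y) ^ 2 / (8 * t) := by
        apply (div_le_div_iff_of_pos_right (by positivity)).mpr
        nlinarith
      have hBt : G ≤ δ ^ 2 / (8 * t) := by
        rw [le_div_iff₀ (by positivity)]
        have := (lt_div_iff₀ (by positivity : (0:ℝ) < 8 * G)).mp htG
        nlinarith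
      have hpoly : -(x ^ 2 / 8) ≤ -(y ^ 2 / (32 * 1)) + (x - y) ^ 2 / (8 * 1) := by
        nlinarith [sq_nonneg (2 * x - y)]
      have hsplit : (x - y) ^ 2 / (4 * t) = (x - y) ^ 2 / (8 * t) + (x - y) ^ 2 / (8 * t) := by
        ring
      linarith
    · have hdy : dist y x < δ := by
        rw [Real.dist_eq, abs_of_nonpos (by linarith)]; linarith
      have h2 := hδ (mem_Iic.mpr hy) hdy
      rw [Real.dist_eq] at h2
      have h3 := (abs_lt.mp h2).1
      have hnn : (0:ℝ) ≤ (x - y) ^ 2 / (4 * t) := by positivity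
      linarith
  have hbdd : BddBelow ((fun y => u0 y + (x - y) ^ 2 / (4 * t)) '' Iic x) := by
    refine ⟨u0 x - ε / 2, ?_⟩
    rintro v ⟨y, hy, rfl⟩
    exact hlb y hy
  have hne : ((fun y => u0 y + (x - y) ^ 2 / (4 * t)) '' Iic x).Nonempty :=
    ⟨_, mem_image_of_mem _ (self_mem_Iic (a := x))⟩
  have hub : sInf ((fun y => u0 y + (x - y) ^ 2 / (4 * t)) '' Iic x) ≤ u0 x := by
    have hmem : u0 x + (x - x) ^ 2 / (4 * t) ∈
        ((fun y => u0 y + (x - y) ^ 2 / (4 * t)) '' Iic x) :=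
      mem_image_of_mem _ (self_mem_Iic (a := x))
    have he : u0 x + (x - x) ^ 2 / (4 * t) = u0 x := by simp
    rw [he] at hmem
    exact csInf_le hbdd hmem
  have hlb' : u0 x - ε / 2 ≤ sInf ((fun y => u0 y + (x - y) ^ 2 / (4 * t)) '' Iic x) := by
    apply le_csInf hne
    rintro v ⟨y, hy, rfl⟩
    exact hlb y hy
  simp only [hopfLax, if_neg htne]
  rw [Real.dist_eq, abs_lt]
  constructor <;> linarith

/-- Under only monotonicity, left-continuity and the growth bound,
the Hopf–Lax solution is locally Lipschitz on ℝ × (0,∞), and u(x,t) → u0(x) as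
t → 0⁺, for every x. -/
theorem hopfLax_lipschitz_positive_time_and_initial_trace
    (u0 : ℝ → ℝ) (hmono : Monotone u0)
    (hlc : ∀ y : ℝ, ContinuousWithinAt u0 (Iic y) y)
    (hgrowth : Tendsto (fun y => u0 y / y ^ 2) atBot (nhds 0)) :
    (∀ p : ℝ × ℝ, 0 < p.2 → ∃ K : ℝ≥0, ∃ ε > 0,
      LipschitzOnWith K (fun q : ℝ × ℝ => hopfLax u0 q.1 q.2)
        (Metric.ball p ε ∩ {q : ℝ × ℝ | 0 < q.2})) ∧
    (∀ x : ℝ, Tendsto (fun t => hopfLax u0 x t)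
        (nhdsWithin 0 (Ioi 0)) (nhds (u0 x))) := by
  exact ⟨lip_part u0 hmono hgrowth, trace_part u0 hmono hlc hgrowth⟩
end

section
/- Fix T > 0 and let 𝒰 = { (x,t) ∈ ℝ × (0,T] : I(x,t) ≠ {y⁻(x,t), y⁺(x,t)} }, i.e., the set of space-time points where the Hopf-Lax formula has at least three minimizers (some minimizer strictly between the extreme ones). Then 𝒰 is countable. -/
open Set Filter MeasureTheory
open scoped NNReal ENNReal

namespace HLaux

variable {u0 : ℝ → ℝ}

lemma mem_minSet_iff {x t y : ℝ} :
    y ∈ minSet u0 x 0 t ↔ y ≤ x ∧ hopfLax u0 x t = u0 y + (x - y) ^ 2 / (4 * t) := by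
  unfold minSet
  rw [mem_setOf_eq]
  have h0 : hopfLax u0 y 0 = u0 y := if_pos rfl
  rw [h0, sub_zero]

lemma u0_lsc (hmono : Monotone u0) (hlc : ∀ y : ℝ, ContinuousWithinAt u0 (Iic y) y) :
    LowerSemicontinuous u0 := by
  intro y c hc
  rw [← nhdsLE_sup_nhdsGE (a := y), eventually_sup]
  refine ⟨Tendsto.eventually (hlc y) (eventually_gt_nhds hc), ?_⟩
  filter_upwards [self_mem_nhdsWithin] with w hw
  exact hc.trans_le (hmono hw)

lemma g_lsc (hmono : Monotone u0) (hlc : ∀ y : ℝ, ContinuousWithinAt u0 (Iic y) y)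
    (x t : ℝ) : LowerSemicontinuous (fun y => u0 y + (x - y) ^ 2 / (4 * t)) :=
  (u0_lsc hmono hlc).add
    (Continuous.lowerSemicontinuous
      (((continuous_const.sub continuous_id).pow 2).div_const (4 * t)))

lemma coercive_s13 (hgrowth : Tendsto (fun y => u0 y / y ^ 2) atBot (nhds 0))
    (x t : ℝ) (ht : 0 < t) :
    ∃ M, M ≤ x ∧ ∀ y ≤ M, u0 x + 1 ≤ u0 y + (x - y) ^ 2 / (4 * t) := by
  have hε : (0:ℝ) < 1 / (16 * t) := by positivity
  have h := Metric.tendsto_nhds.mp hgrowth (1 / (16 * t)) hε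
  rw [eventually_atBot] at h
  obtain ⟨M₀, hM₀⟩ := h
  have hR0 : (0:ℝ) ≤ 16 * t * (|u0 x| + 1) + 4 * x ^ 2 := by positivity
  set R := Real.sqrt (16 * t * (|u0 x| + 1) + 4 * x ^ 2) with hR
  refine ⟨min (min M₀ (-1)) (min (-R) x),
    le_trans (min_le_right _ _) (min_le_right _ _), ?_⟩
  intro y hy
  have hy1 : y ≤ -1 := le_trans hy (le_trans (min_le_left _ _) (min_le_right _ _))
  have hy2 : 0 < y ^ 2 := by nlinarith
  have h1 : -(1 / (16 * t)) < u0 y / y ^ 2 := by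
    have := hM₀ y (le_trans hy (le_trans (min_le_left _ _) (min_le_left _ _)))
    rw [Real.dist_eq, sub_zero] at this
    exact (abs_lt.mp this).1
  have h1' : -(y ^ 2 / (16 * t)) ≤ u0 y := by
    have heq : -(y ^ 2 / (16 * t)) / y ^ 2 = -(1 / (16 * t)) := by
      field_simp
      rw [div_self (ne_of_lt (by linarith : y < 0))]
    refine le_of_lt ((div_lt_div_iff_of_pos_right (a := -(y ^ 2 / (16 * t)))
      (b := u0 y) hy2).mp ?_)
    rw [heq]; exact h1
  have hyR : y ≤ -R := le_trans hy (le_trans (min_le_right _ _) (min_le_left _ _))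
  have hRnn : 0 ≤ R := Real.sqrt_nonneg _
  have h2 : 16 * t * (|u0 x| + 1) + 4 * x ^ 2 ≤ y ^ 2 := by
    nlinarith [Real.sq_sqrt hR0]
  have h16 : (0:ℝ) < 16 * t := by positivity
  have key : u0 x + 1 ≤ -(y ^ 2 / (16 * t)) + (x - y) ^ 2 / (4 * t) := by
    have heq : -(y ^ 2 / (16 * t)) + (x - y) ^ 2 / (4 * t)
        = (4 * (x - y) ^ 2 - y ^ 2) / (16 * t) := by
      field_simp; ring
    rw [heq, le_div_iff₀ h16]
    nlinarith [sq_nonneg (2 * x - y), le_abs_self (u0 x),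
      mul_nonneg (sub_nonneg.2 (le_abs_self (u0 x))) h16.le]
  linarith

/-- Existence of a minimizer together with the lower-bound property of `hopfLax`. -/
lemma minSet_min (hmono : Monotone u0) (hlc : ∀ y : ℝ, ContinuousWithinAt u0 (Iic y) y)
    (hgrowth : Tendsto (fun y => u0 y / y ^ 2) atBot (nhds 0))
    (x t : ℝ) (ht : 0 < t) :
    ∃ y₀ ∈ minSet u0 x 0 t,
      ∀ y ≤ x, hopfLax u0 x t ≤ u0 y + (x - y) ^ 2 / (4 * t) := by
  set g : ℝ → ℝ := fun y => u0 y + (x - y) ^ 2 / (4 * t) with hgdef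
  have hglsc : LowerSemicontinuous g := g_lsc hmono hlc x t
  obtain ⟨M, hMx, hM⟩ := coercive_s13 hgrowth x t ht
  have hgx : g x = u0 x := by simp [hgdef]
  have hbdd' : BddBelow (g '' Icc M x) := by
    refine ⟨min (u0 M) (u0 x + 1), ?_⟩
    rintro v ⟨y, hy, rfl⟩
    have hm : u0 M ≤ u0 y := hmono hy.1
    have h4 : (0:ℝ) ≤ (x - y) ^ 2 / (4 * t) := by positivity
    exact le_trans (min_le_left _ _) (by simp only [hgdef]; linarith)
  have hne' : (g '' Icc M x).Nonempty := ⟨g x, mem_image_of_mem _ ⟨hMx, le_refl x⟩⟩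
  set c := sInf (g '' Icc M x) with hc
  set S : ℕ → Set ℝ := fun n => Icc M x ∩ g ⁻¹' Iic (c + 1 / (n + 1)) with hS
  have hScl : ∀ n : ℕ, IsClosed (S n) := fun n =>
    isClosed_Icc.inter (hglsc.isClosed_preimage _)
  have hSne : ∀ n : ℕ, (S n).Nonempty := by
    intro n
    have hpos : (0:ℝ) < 1 / ((n:ℝ) + 1) := by positivity
    have hlt : c < c + 1 / ((n:ℝ) + 1) := by linarith
    obtain ⟨v, hv, hvlt⟩ := exists_lt_of_csInf_lt hne' hlt
    obtain ⟨y, hy, rfl⟩ := hv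
    exact ⟨y, hy, le_of_lt hvlt⟩
  have hSanti : ∀ n : ℕ, S (n + 1) ⊆ S n := by
    intro n y hy
    refine ⟨hy.1, ?_⟩
    have h2 : g y ≤ c + 1 / (((n:ℕ) + 1 : ℕ) + 1 : ℝ) := hy.2
    have hle : (1:ℝ) / (((n:ℕ) + 1 : ℕ) + 1 : ℝ) ≤ 1 / ((n:ℝ) + 1) := by
      push_cast
      apply one_div_le_one_div_of_le
      · positivity
      · linarith
    show g y ≤ c + 1 / ((n:ℝ) + 1)
    linarith
  have hScompact : IsCompact (S 0) :=
    isCompact_Icc.inter_right (hglsc.isClosed_preimage _)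
  obtain ⟨y₀, hy₀⟩ :=
    IsCompact.nonempty_iInter_of_sequence_nonempty_isCompact_isClosed S hSanti hSne
      hScompact hScl
  rw [mem_iInter] at hy₀
  have hy₀I : y₀ ∈ Icc M x := (hy₀ 0).1
  have hgc : g y₀ ≤ c := by
    by_contra hgt
    push_neg at hgt
    obtain ⟨n, hn⟩ := exists_nat_one_div_lt (sub_pos.2 hgt)
    have h2 : g y₀ ≤ c + 1 / ((n:ℝ) + 1) := (hy₀ n).2
    linarith
  have hmin : ∀ y ≤ x, g y₀ ≤ g y := by
    intro y hy
    by_cases hMy : M ≤ y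
    · exact le_trans hgc (csInf_le hbdd' (mem_image_of_mem _ ⟨hMy, hy⟩))
    · push_neg at hMy
      have h1 := hM y hMy.le
      have h2 : c ≤ g x := csInf_le hbdd' (mem_image_of_mem _ ⟨hMx, le_refl x⟩)
      have : u0 x + 1 ≤ g y := h1
      rw [hgx] at h2
      linarith
  have hH : hopfLax u0 x t = g y₀ := by
    have hunfold : hopfLax u0 x t = sInf (g '' Iic x) := if_neg ht.ne'
    rw [hunfold]
    apply le_antisymm
    · refine csInf_le ⟨g y₀, ?_⟩ (mem_image_of_mem _ hy₀I.2)
      rintro v ⟨y, hy, rfl⟩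
      exact hmin y hy
    · refine le_csInf ⟨g x, mem_image_of_mem _ (le_refl x)⟩ ?_
      rintro v ⟨y, hy, rfl⟩
      exact hmin y hy
  refine ⟨y₀, mem_minSet_iff.mpr ⟨hy₀I.2, hH⟩, ?_⟩
  intro y hy
  rw [hH]
  exact hmin y hy

lemma minSet_nonempty_s13 (hmono : Monotone u0)
    (hlc : ∀ y : ℝ, ContinuousWithinAt u0 (Iic y) y)
    (hgrowth : Tendsto (fun y => u0 y / y ^ 2) atBot (nhds 0))
    (x t : ℝ) (ht : 0 < t) : (minSet u0 x 0 t).Nonempty := by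
  obtain ⟨y₀, hy₀, _⟩ := minSet_min hmono hlc hgrowth x t ht
  exact ⟨y₀, hy₀⟩

lemma minSet_compact (hmono : Monotone u0)
    (hlc : ∀ y : ℝ, ContinuousWithinAt u0 (Iic y) y)
    (hgrowth : Tendsto (fun y => u0 y / y ^ 2) atBot (nhds 0))
    (x t : ℝ) (ht : 0 < t) : IsCompact (minSet u0 x 0 t) := by
  obtain ⟨M, hMx, hM⟩ := coercive_s13 hgrowth x t ht
  obtain ⟨y₀, hy₀, hle⟩ := minSet_min hmono hlc hgrowth x t ht
  have hHx : hopfLax u0 x t ≤ u0 x := by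
    have := hle x (le_refl x)
    simpa using this
  have hsub : minSet u0 x 0 t ⊆ Icc M x := by
    intro y hy
    rw [mem_minSet_iff] at hy
    refine ⟨?_, hy.1⟩
    by_contra h
    push_neg at h
    have h1 := hM y h.le
    rw [← hy.2] at h1
    linarith
  have hclosed : IsClosed (minSet u0 x 0 t) := by
    have heq : minSet u0 x 0 t =
        Iic x ∩ (fun y => u0 y + (x - y) ^ 2 / (4 * t)) ⁻¹' Iic (hopfLax u0 x t) := by
      ext y
      rw [mem_minSet_iff]
      simp only [mem_inter_iff, mem_Iic, mem_preimage]
      constructor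
      · rintro ⟨h1, h2⟩; exact ⟨h1, le_of_eq h2.symm⟩
      · rintro ⟨h1, h2⟩; exact ⟨h1, le_antisymm (hle y h1) h2⟩
    rw [heq]
    exact isClosed_Iic.inter ((g_lsc hmono hlc x t).isClosed_preimage _)
  exact isCompact_Icc.of_isClosed_subset hclosed hsub

/-- Monotonicity of minimizers at a fixed time. -/
lemma mono_minimizers (hmono : Monotone u0)
    (hlc : ∀ y : ℝ, ContinuousWithinAt u0 (Iic y) y)
    (hgrowth : Tendsto (fun y => u0 y / y ^ 2) atBot (nhds 0))
    {x x' t y y' : ℝ} (ht : 0 < t) (hxx : x < x')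
    (hy : y ∈ minSet u0 x 0 t) (hy' : y' ∈ minSet u0 x' 0 t) : y ≤ y' := by
  by_contra h
  push_neg at h
  rw [mem_minSet_iff] at hy hy'
  obtain ⟨_, _, hle⟩ := minSet_min hmono hlc hgrowth x t ht
  obtain ⟨_, _, hle'⟩ := minSet_min hmono hlc hgrowth x' t ht
  have c1 := hle y' (le_trans h.le hy.1)
  have c2 := hle' y (le_trans hy.1 hxx.le)
  rw [hy.2] at c1
  rw [hy'.2] at c2
  have h4 : (0:ℝ) < 4 * t := by positivity
  have key2 : ((x - y) ^ 2 + (x' - y') ^ 2) / (4 * t)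
      ≤ ((x - y') ^ 2 + (x' - y) ^ 2) / (4 * t) := by
    rw [add_div, add_div]
    linarith
  have key : (x - y) ^ 2 + (x' - y') ^ 2 ≤ (x - y') ^ 2 + (x' - y) ^ 2 :=
    (div_le_div_iff_of_pos_right h4).mp key2
  nlinarith [mul_pos (sub_pos.2 hxx) (sub_pos.2 h)]

/-- Interior uniqueness along a backward characteristic. -/
lemma interior_unique (hmono : Monotone u0)
    (hlc : ∀ y : ℝ, ContinuousWithinAt u0 (Iic y) y)
    (hgrowth : Tendsto (fun y => u0 y / y ^ 2) atBot (nhds 0))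
    {x' t t' y : ℝ} (ht : 0 < t) (htt : t < t')
    (hy : y ∈ minSet u0 x' 0 t') :
    minSet u0 (y + (x' - y) * (t / t')) 0 t = {y} := by
  have ht' : 0 < t' := lt_trans ht htt
  rw [mem_minSet_iff] at hy
  obtain ⟨hyx', hH'⟩ := hy
  set z := y + (x' - y) * (t / t') with hz
  have hdiv : 0 < t / t' := by positivity
  have hyz : y ≤ z := by
    have : 0 ≤ (x' - y) * (t / t') := mul_nonneg (by linarith) hdiv.le
    rw [hz]; linarith
  have hzx' : z ≤ x' := by
    have h1 : t / t' ≤ 1 := (div_le_one ht').mpr htt.le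
    have h2 : 0 ≤ (x' - y) * (1 - t / t') :=
      mul_nonneg (by linarith) (by linarith)
    rw [hz]; nlinarith
  obtain ⟨_, _, hle'⟩ := minSet_min hmono hlc hgrowth x' t' ht'
  have key : ∀ w ≤ z, w ≠ y →
      u0 y + (z - y) ^ 2 / (4 * t) < u0 w + (z - w) ^ 2 / (4 * t) := by
    intro w hw hne
    have c := hle' w (le_trans hw hzx')
    rw [hH'] at c
    have htne : t ≠ 0 := ht.ne'
    have ht'ne : t' ≠ 0 := ht'.ne'
    have hF : (z - w) ^ 2 / (4 * t) - (x' - w) ^ 2 / (4 * t')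
        - ((z - y) ^ 2 / (4 * t) - (x' - y) ^ 2 / (4 * t'))
        = (1 / (4 * t) - 1 / (4 * t')) * (w - y) ^ 2 := by
      rw [hz]
      field_simp
      ring
    have hα : 0 < 1 / (4 * t) - 1 / (4 * t') := by
      have h1 : 1 / (4 * t') < 1 / (4 * t) :=
        one_div_lt_one_div_of_lt (by positivity) (by linarith)
      linarith
    have hw2 : 0 < (w - y) ^ 2 := pow_two_pos_of_ne_zero (sub_ne_zero.mpr hne)
    have hpos : 0 < (1 / (4 * t) - 1 / (4 * t')) * (w - y) ^ 2 := mul_pos hα hw2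
    nlinarith [c, hF, hpos]
  have hlb : ∀ v ∈ (fun w => u0 w + (z - w) ^ 2 / (4 * t)) '' Iic z,
      u0 y + (z - y) ^ 2 / (4 * t) ≤ v := by
    rintro v ⟨w, hw, rfl⟩
    rcases eq_or_ne w y with rfl | hne'
    · exact le_refl _
    · exact (key w hw hne').le
  have hHz : hopfLax u0 z t = u0 y + (z - y) ^ 2 / (4 * t) := by
    have hunfold : hopfLax u0 z t
        = sInf ((fun w => u0 w + (z - w) ^ 2 / (4 * t)) '' Iic z) := if_neg ht.ne'
    rw [hunfold]
    exact le_antisymm (csInf_le ⟨_, hlb⟩ (mem_image_of_mem _ hyz))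
      (le_csInf ⟨_, mem_image_of_mem _ hyz⟩ hlb)
  ext w
  simp only [mem_singleton_iff]
  rw [mem_minSet_iff]
  constructor
  · rintro ⟨hwz, hweq⟩
    by_contra hne'
    have := key w hwz hne'
    rw [← hweq, hHz] at this
    exact lt_irrefl _ this
  · rintro rfl
    exact ⟨hyz, hHz⟩

end HLaux

/-- For T > 0, the set of points (x,t) ∈ ℝ × (0,T] where the
Hopf–Lax formula has a minimizer other than the two extreme ones is countable. -/
theorem multiple_minimizer_points_countable
    (u0 : ℝ → ℝ) (hmono : Monotone u0)
    (hlc : ∀ y : ℝ, ContinuousWithinAt u0 (Iic y) y)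
    (hgrowth : Tendsto (fun y => u0 y / y ^ 2) atBot (nhds 0))
    (T : ℝ) (hT : 0 < T) :
    Set.Countable {p : ℝ × ℝ | 0 < p.2 ∧ p.2 ≤ T ∧
      minSet u0 p.1 0 p.2 ≠ {yminus u0 p.1 0 p.2, yplus u0 p.1 0 p.2}} := by
  classical
  set S : ℚ → ℚ → Set (ℝ × ℝ) := fun q₁ q₂ =>
    {p | 0 < p.2 ∧
      (∃ a ∈ minSet u0 p.1 0 p.2, a < (q₁:ℝ)) ∧
      (∃ b ∈ minSet u0 p.1 0 p.2, (q₂:ℝ) < b) ∧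
      (∃ y ∈ minSet u0 p.1 0 p.2, (q₁:ℝ) ≤ y ∧ y ≤ (q₂:ℝ))} with hSdef
  have hkey : ∀ (q₁ q₂ : ℚ) (x t x' t' : ℝ), t ≤ t' →
      (x, t) ∈ S q₁ q₂ → (x', t') ∈ S q₁ q₂ → (x, t) = (x', t') := by
    intro q₁ q₂ x t x' t' htt' hP hP'
    obtain ⟨ht, ⟨a, ha, haq⟩, ⟨b, hb, hbq⟩, ⟨y, hy, hyq1, hyq2⟩⟩ := hP
    obtain ⟨ht', ⟨a', ha', haq'⟩, ⟨b', hb', hbq'⟩, ⟨y', hy', hyq1', hyq2'⟩⟩ := hP'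
    rcases eq_or_lt_of_le htt' with rfl | hlt
    · -- equal times
      rcases lt_trichotomy x x' with hxx | hxx | hxx
      · have := HLaux.mono_minimizers hmono hlc hgrowth ht hxx hb hy'
        linarith
      · rw [hxx]
      · have := HLaux.mono_minimizers hmono hlc hgrowth ht hxx hb' hy
        linarith
    · -- t < t' : contradiction
      exfalso
      have hzu := HLaux.interior_unique hmono hlc hgrowth ht hlt hy'
      set z := y' + (x' - y') * (t / t') with hzdef
      have hyz : y' ∈ minSet u0 z 0 t := by
        rw [hzu]; exact rfl
      rcases lt_trichotomy z x with h | h | h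
      · have := HLaux.mono_minimizers hmono hlc hgrowth ht h hyz ha
        linarith
      · rw [h] at hzu
        rw [hzu] at ha
        rw [mem_singleton_iff] at ha
        linarith [ha ▸ haq]
      · have := HLaux.mono_minimizers hmono hlc hgrowth ht h hb hyz
        linarith
  have hsub : {p : ℝ × ℝ | 0 < p.2 ∧ p.2 ≤ T ∧
      minSet u0 p.1 0 p.2 ≠ {yminus u0 p.1 0 p.2, yplus u0 p.1 0 p.2}}
      ⊆ ⋃ (q₁ : ℚ) (q₂ : ℚ), S q₁ q₂ := by
    rintro ⟨x, t⟩ ⟨ht, _hT, hne⟩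
    simp only [mem_setOf_eq] at ht hne ⊢
    have hcomp := HLaux.minSet_compact hmono hlc hgrowth x t ht
    have hnon := HLaux.minSet_nonempty_s13 hmono hlc hgrowth x t ht
    have hm : yminus u0 x 0 t ∈ minSet u0 x 0 t := hcomp.sInf_mem hnon
    have hp : yplus u0 x 0 t ∈ minSet u0 x 0 t := hcomp.sSup_mem hnon
    have hbb := hcomp.bddBelow
    have hba := hcomp.bddAbove
    have hmid : ∃ ym ∈ minSet u0 x 0 t,
        ym ≠ yminus u0 x 0 t ∧ ym ≠ yplus u0 x 0 t := by
      by_contra hcon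
      push_neg at hcon
      apply hne
      apply Subset.antisymm
      · intro w hw
        rcases eq_or_ne w (yminus u0 x 0 t) with h1 | h1
        · rw [h1]; exact mem_insert _ _
        · rw [hcon w hw h1]; exact mem_insert_of_mem _ rfl
      · rintro w hw
        rcases hw with rfl | hw
        · exact hm
        · rw [mem_singleton_iff] at hw
          rw [hw]; exact hp
    obtain ⟨ym, hym, hne1, hne2⟩ := hmid
    have h1 : yminus u0 x 0 t < ym := lt_of_le_of_ne (csInf_le hbb hym) (Ne.symm hne1)
    have h2 : ym < yplus u0 x 0 t := lt_of_le_of_ne (le_csSup hba hym) hne2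
    obtain ⟨q₁, hq₁⟩ := exists_rat_btwn h1
    obtain ⟨q₂, hq₂⟩ := exists_rat_btwn h2
    refine mem_iUnion.mpr ⟨q₁, mem_iUnion.mpr ⟨q₂, ?_⟩⟩
    exact ⟨ht, ⟨_, hm, hq₁.1⟩, ⟨_, hp, hq₂.2⟩, ⟨ym, hym, hq₁.2.le, hq₂.1.le⟩⟩
  refine Set.Countable.mono hsub ?_
  refine countable_iUnion fun q₁ => countable_iUnion fun q₂ => ?_
  apply Set.Subsingleton.countable
  rintro ⟨x, t⟩ hp ⟨x', t'⟩ hp'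
  rcases le_total t t' with h | h
  · exact hkey q₁ q₂ x t x' t' h hp hp'
  · exact (hkey q₁ q₂ x' t' x t h hp' hp).symm
end

section
/- For any fixed t > 0 in the Hopf-Lax setting, the set of shocks at time t, { x ∈ ℝ : y⁻(x,t) < y⁺(x,t) }, is countable. Consequently the Lax-Oleinik derivative ρ(x,t) = (x - y(x,t))/(2t) is well defined (y⁻ = y⁺) for all but countably many x. -/
open Set Filter MeasureTheory
open scoped NNReal ENNReal

open Set Filter MeasureTheory

/-- Coercivity of the Hopf–Lax functional. -/
lemma hl_coercive (u0 : ℝ → ℝ)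
    (hgrowth : Tendsto (fun y => u0 y / y ^ 2) atBot (nhds 0))
    (t : ℝ) (ht : 0 < t) (x : ℝ) :
    ∃ M, M ≤ x ∧ ∀ y ≤ M, u0 x + 1 ≤ u0 y + (x - y) ^ 2 / (4 * t) := by
  have h32 : (0:ℝ) < 32 * t := by linarith
  have hε : (0:ℝ) < 1 / (32 * t) := by positivity
  have h1 := Metric.tendsto_nhds.mp hgrowth (1 / (32 * t)) hε
  rw [eventually_atBot] at h1
  obtain ⟨Y, hY⟩ := h1
  refine ⟨min Y (min (-(2 * |x| + 1)) (min (-(32 * t * |u0 x + 1| + 1)) x)), ?_, ?_⟩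
  · exact le_trans (min_le_right _ _) (le_trans (min_le_right _ _) (min_le_right _ _))
  intro y hy
  have hy1 : y ≤ Y := le_trans hy (min_le_left _ _)
  have hy2 : y ≤ -(2 * |x| + 1) :=
    le_trans hy (le_trans (min_le_right _ _) (min_le_left _ _))
  have hy3 : y ≤ -(32 * t * |u0 x + 1| + 1) :=
    le_trans hy (le_trans (min_le_right _ _) (le_trans (min_le_right _ _) (min_le_left _ _)))
  have hxabs : 0 ≤ |x| := abs_nonneg x
  have huabs : 0 ≤ |u0 x + 1| := abs_nonneg _
  have hyneg : y ≤ -1 := by nlinarith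
  have hy2pos : (0:ℝ) < y ^ 2 := by nlinarith
  -- bound on u0 y
  have habs := hY y hy1
  rw [Real.dist_eq, sub_zero] at habs
  have hA : -(1 / (32 * t)) < u0 y / y ^ 2 := neg_lt_of_abs_lt habs
  have hA' : -(1 / (32 * t)) * y ^ 2 < u0 y := by
    have := (lt_div_iff₀ hy2pos).mp hA
    linarith
  have hA'' : -(y ^ 2) / (32 * t) < u0 y := by
    have : -(1 / (32 * t)) * y ^ 2 = -(y ^ 2) / (32 * t) := by ring
    linarith [hA'.trans_le le_rfl, this ▸ hA']
  -- (x - y)^2 ≥ y^2/4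
  have hxy : -y / 2 ≤ x - y := by
    have : -|x| ≤ x := neg_abs_le x
    nlinarith
  have hxy0 : (0:ℝ) ≤ -y / 2 := by linarith
  have hsq : (-y / 2) * (-y / 2) ≤ (x - y) * (x - y) :=
    mul_self_le_mul_self hxy0 hxy
  have hsq' : y ^ 2 / 4 ≤ (x - y) ^ 2 := by nlinarith
  -- divide
  have hdiv : y ^ 2 / 4 / (4 * t) ≤ (x - y) ^ 2 / (4 * t) :=
    div_le_div_of_nonneg_right hsq' (by linarith)
  have hdiv' : y ^ 2 / (16 * t) ≤ (x - y) ^ 2 / (4 * t) := by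
    have h16 : y ^ 2 / 4 / (4 * t) = y ^ 2 / (16 * t) := by
      rw [div_div]; congr 1; ring
    linarith [h16 ▸ hdiv]
  -- y^2/(32 t) ≥ u0 x + 1
  have hy4 : 32 * t * (u0 x + 1) ≤ -y - 1 := by
    have : u0 x + 1 ≤ |u0 x + 1| := le_abs_self _
    nlinarith
  have hyy : -y ≤ y ^ 2 := by nlinarith
  have hfin : u0 x + 1 ≤ y ^ 2 / (32 * t) := by
    rw [le_div_iff₀ h32]
    nlinarith
  have hsplit : y ^ 2 / (16 * t) - y ^ 2 / (32 * t) = y ^ 2 / (32 * t) := by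
    field_simp
    ring
  have hA3 : -(y ^ 2 / (32 * t)) < u0 y := by rw [neg_div] at hA''; exact hA''
  linarith [hA3, hdiv', hfin, hsplit]

/-- The Hopf–Lax functional image is bounded below. -/
lemma hl_bddBelow (u0 : ℝ → ℝ) (hmono : Monotone u0)
    (hgrowth : Tendsto (fun y => u0 y / y ^ 2) atBot (nhds 0))
    (t : ℝ) (ht : 0 < t) (x : ℝ) :
    BddBelow ((fun y => u0 y + (x - y) ^ 2 / (4 * t)) '' Iic x) := by
  obtain ⟨M, hMx, hM⟩ := hl_coercive u0 hgrowth t ht x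
  refine ⟨min (u0 M) (u0 x + 1), ?_⟩
  rintro _ ⟨y, hy, rfl⟩
  rcases le_or_gt y M with h | h
  · exact le_trans (min_le_right _ _) (hM y h)
  · have h1 : u0 M ≤ u0 y := hmono h.le
    have h2 : (0:ℝ) ≤ (x - y) ^ 2 / (4 * t) := by positivity
    calc min (u0 M) (u0 x + 1) ≤ u0 M := min_le_left _ _
      _ ≤ u0 y + (x - y) ^ 2 / (4 * t) := by linarith

lemma hopfLax_le (u0 : ℝ → ℝ) (hmono : Monotone u0)
    (hgrowth : Tendsto (fun y => u0 y / y ^ 2) atBot (nhds 0))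
    (t : ℝ) (ht : 0 < t) (x y : ℝ) (hy : y ≤ x) :
    hopfLax u0 x t ≤ u0 y + (x - y) ^ 2 / (4 * t) := by
  rw [hopfLax, if_neg ht.ne']
  exact csInf_le (hl_bddBelow u0 hmono hgrowth t ht x) ⟨y, hy, rfl⟩

/-- Members of minSet are minimizers; key cross inequality. -/
lemma minSet_mono (u0 : ℝ → ℝ) (hmono : Monotone u0)
    (hgrowth : Tendsto (fun y => u0 y / y ^ 2) atBot (nhds 0))
    (t : ℝ) (ht : 0 < t) {x₁ x₂ y₁ y₂ : ℝ} (hx : x₁ < x₂)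
    (h₁ : y₁ ∈ minSet u0 x₁ 0 t) (h₂ : y₂ ∈ minSet u0 x₂ 0 t) : y₁ ≤ y₂ := by
  by_contra hcon
  push_neg at hcon
  have h4t : (0:ℝ) < 4 * t := by linarith
  obtain ⟨hy₁x, he₁⟩ := h₁
  obtain ⟨hy₂x, he₂⟩ := h₂
  rw [sub_zero] at he₁ he₂
  have hz : hopfLax u0 y₁ 0 = u0 y₁ := if_pos rfl
  have hz' : hopfLax u0 y₂ 0 = u0 y₂ := if_pos rfl
  rw [hz] at he₁; rw [hz'] at he₂
  have hA : u0 y₁ + (x₁ - y₁) ^ 2 / (4 * t) ≤ u0 y₂ + (x₁ - y₂) ^ 2 / (4 * t) := by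
    rw [← he₁]; exact hopfLax_le u0 hmono hgrowth t ht x₁ y₂ (le_trans hcon.le hy₁x)
  have hB : u0 y₂ + (x₂ - y₂) ^ 2 / (4 * t) ≤ u0 y₁ + (x₂ - y₁) ^ 2 / (4 * t) := by
    rw [← he₂]; exact hopfLax_le u0 hmono hgrowth t ht x₂ y₁ (le_trans hy₁x hx.le)
  have hA' : (x₁ - y₁) ^ 2 - (x₁ - y₂) ^ 2 ≤ (u0 y₂ - u0 y₁) * (4 * t) := by
    rw [← div_le_iff₀ h4t, sub_div]; linarith
  have hB' : (x₂ - y₂) ^ 2 - (x₂ - y₁) ^ 2 ≤ (u0 y₁ - u0 y₂) * (4 * t) := by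
    rw [← div_le_iff₀ h4t, sub_div]; linarith
  nlinarith [mul_pos (sub_pos.2 hx) (sub_pos.2 hcon)]

/-- minSet is bounded below. -/
lemma minSet_bddBelow (u0 : ℝ → ℝ) (hmono : Monotone u0)
    (hgrowth : Tendsto (fun y => u0 y / y ^ 2) atBot (nhds 0))
    (t : ℝ) (ht : 0 < t) (x : ℝ) : BddBelow (minSet u0 x 0 t) := by
  obtain ⟨M, hMx, hM⟩ := hl_coercive u0 hgrowth t ht x
  refine ⟨M, fun y hy => ?_⟩
  by_contra hcon
  push_neg at hcon
  obtain ⟨hyx, he⟩ := hy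
  rw [sub_zero] at he
  have hz0 : hopfLax u0 y 0 = u0 y := if_pos rfl
  rw [hz0] at he
  have h1 : u0 x + 1 ≤ u0 y + (x - y) ^ 2 / (4 * t) := hM y hcon.le
  have h2 : hopfLax u0 x t ≤ u0 x + (x - x) ^ 2 / (4 * t) :=
    hopfLax_le u0 hmono hgrowth t ht x x le_rfl
  simp only [sub_self] at h2
  have : hopfLax u0 x t ≤ u0 x := by
    have : ((0:ℝ)) ^ 2 / (4 * t) = 0 := by simp
    linarith [this ▸ h2]
  linarith [he ▸ this]


/-- For fixed t > 0, the set of shocks {x : y⁻(x,t) < y⁺(x,t)} is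
countable; consequently y⁻(x,t) = y⁺(x,t) for all but countably many x. -/
theorem shocks_countable_at_fixed_time
    (u0 : ℝ → ℝ) (hmono : Monotone u0)
    (hlc : ∀ y : ℝ, ContinuousWithinAt u0 (Iic y) y)
    (hgrowth : Tendsto (fun y => u0 y / y ^ 2) atBot (nhds 0))
    (t : ℝ) (ht : 0 < t) :
    Set.Countable {x : ℝ | yminus u0 x 0 t < yplus u0 x 0 t} ∧
    Set.Countable {x : ℝ | yminus u0 x 0 t ≠ yplus u0 x 0 t} := by
  have hminus_le : ∀ x, yminus u0 x 0 t ≤ yplus u0 x 0 t := by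
    intro x
    rcases eq_empty_or_nonempty (minSet u0 x 0 t) with h | h
    · rw [yminus, yplus, h, Real.sInf_empty, Real.sSup_empty]
    · exact csInf_le_csSup h (minSet_bddBelow u0 hmono hgrowth t ht x)
        ⟨x, fun y hy => hy.1⟩
  have hne : ∀ x, yminus u0 x 0 t < yplus u0 x 0 t → (minSet u0 x 0 t).Nonempty := by
    intro x hx
    rcases eq_empty_or_nonempty (minSet u0 x 0 t) with h | h
    · rw [yminus, yplus, h, Real.sInf_empty, Real.sSup_empty] at hx
      exact absurd hx (lt_irrefl 0)
    · exact h
  have key : ∀ x₁ x₂, x₁ < x₂ → (minSet u0 x₁ 0 t).Nonempty → (minSet u0 x₂ 0 t).Nonempty →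
      yplus u0 x₁ 0 t ≤ yminus u0 x₂ 0 t := by
    intro x₁ x₂ hx h1 h2
    exact csSup_le h1 fun y₁ hy₁ => le_csInf h2 fun y₂ hy₂ =>
      minSet_mono u0 hmono hgrowth t ht hx hy₁ hy₂
  have hcount : Set.Countable {x : ℝ | yminus u0 x 0 t < yplus u0 x 0 t} := by
    apply Set.PairwiseDisjoint.countable_of_isOpen
      (s := fun x => Ioo (yminus u0 x 0 t) (yplus u0 x 0 t))
    · intro a ha b hb hab
      rcases hab.lt_or_gt with h | h
      · have hk := key a b h (hne a ha) (hne b hb)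
        refine Set.disjoint_left.2 fun z hz1 hz2 => ?_
        have h1 := hz1.2
        have h2 := hz2.1
        linarith [hz1.2, hz2.1]
      · have hk := key b a h (hne b hb) (hne a ha)
        refine Set.disjoint_left.2 fun z hz1 hz2 => ?_
        linarith [hz1.1, hz2.2]
    · intro x hx
      exact isOpen_Ioo
    · intro x hx
      exact nonempty_Ioo.2 hx
  refine ⟨hcount, ?_⟩
  have hs : {x : ℝ | yminus u0 x 0 t ≠ yplus u0 x 0 t}
      = {x : ℝ | yminus u0 x 0 t < yplus u0 x 0 t} := by
    ext x
    exact ⟨fun h => (hminus_le x).lt_of_ne h, fun h => h.ne⟩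
  rw [hs]
  exact hcount
end

section
/- Fix a < b in ℝ, 0 < τ < ∞, and ε > 0. In the Hopf-Lax setting, there exists an open set G ⊆ ℝ × (0,∞) such that G contains all shocks in [a,b] × (0,τ], and for each t ∈ (0,τ] the t-section G_t = { x : (x,t) ∈ G } has one-dimensional Lebesgue measure |G_t| ≤ ε. -/
open Set Filter MeasureTheory
open scoped NNReal ENNReal

namespace HLAux

/-- The Hopf–Lax integrand. -/
noncomputable def Ff (u0 : ℝ → ℝ) (x t y : ℝ) : ℝ := u0 y + (x - y) ^ 2 / (4 * t)

lemma hopfLax_pos (u0 : ℝ → ℝ) (x t : ℝ) (ht : t ≠ 0) :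
    hopfLax u0 x t = sInf (Ff u0 x t '' Iic x) := by
  rw [hopfLax, if_neg ht]; rfl

lemma minSet_zero (u0 : ℝ → ℝ) (x t : ℝ) :
    minSet u0 x 0 t = {y | y ≤ x ∧ hopfLax u0 x t = Ff u0 x t y} := by
  unfold minSet Ff hopfLax
  simp

lemma u0_lsc {u0 : ℝ → ℝ} (hm : Monotone u0)
    (hlc : ∀ y : ℝ, ContinuousWithinAt u0 (Iic y) y) :
    LowerSemicontinuous u0 := by
  intro y c hc
  have h2 : ∀ᶠ z in nhdsWithin y (Iic y), c < u0 z := (hlc y).eventually (eventually_gt_nhds hc)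
  rw [eventually_nhdsWithin_iff] at h2
  filter_upwards [h2] with z hz
  rcases le_or_gt z y with h3 | h3
  · exact hz h3
  · exact lt_of_lt_of_le hc (hm h3.le)

lemma Ff_lsc {u0 : ℝ → ℝ} (hm : Monotone u0)
    (hlc : ∀ y : ℝ, ContinuousWithinAt u0 (Iic y) y) (x t : ℝ) :
    LowerSemicontinuous (Ff u0 x t) :=
  (u0_lsc hm hlc).add ((continuous_const.sub continuous_id).pow 2 |>.div_const _).lowerSemicontinuous

lemma Ff_lower {u0 : ℝ → ℝ} {T C : ℝ} (hC : ∀ y, -(y ^ 2 / (16 * T)) - C ≤ u0 y)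
    {t : ℝ} (ht : 0 < t) (htT : t ≤ T) (x y : ℝ) :
    y ^ 2 / (16 * T) - x ^ 2 / (4 * t) - C ≤ Ff u0 x t y := by
  have hT : 0 < T := lt_of_lt_of_le ht htT
  have h1 := hC y
  have key : y ^ 2 / (16 * T) + y ^ 2 / (16 * T) ≤ x ^ 2 / (4 * t) + (x - y) ^ 2 / (4 * t) := by
    have e : x ^ 2 / (4 * t) + (x - y) ^ 2 / (4 * t) - (y ^ 2 / (16 * T) + y ^ 2 / (16 * T))
        = ((x ^ 2 + (x - y) ^ 2) * (16 * T) - 2 * y ^ 2 * (4 * t)) / ((4 * t) * (16 * T)) := by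
      field_simp; ring
    have hnum : 0 ≤ (x ^ 2 + (x - y) ^ 2) * (16 * T) - 2 * y ^ 2 * (4 * t) := by
      nlinarith [sq_nonneg (2 * x - y), mul_le_mul_of_nonneg_left htT
        (by positivity : (0:ℝ) ≤ 8 * (x ^ 2 + (x - y) ^ 2)), mul_nonneg ht.le (sq_nonneg (2*x - y))]
    have := div_nonneg hnum (by positivity : (0:ℝ) ≤ (4 * t) * (16 * T))
    linarith
  unfold Ff
  linarith

lemma bddBelow_Ff {u0 : ℝ → ℝ} {T C t : ℝ} (hC : ∀ y, -(y ^ 2 / (16 * T)) - C ≤ u0 y)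
    (ht : 0 < t) (htT : t ≤ T) (x : ℝ) : BddBelow (Ff u0 x t '' Iic x) := by
  have hT : 0 < T := lt_of_lt_of_le ht htT
  refine ⟨-(x ^ 2 / (4 * t)) - C, ?_⟩
  rintro v ⟨y, -, rfl⟩
  have h := Ff_lower hC ht htT x y
  have h2 : (0:ℝ) ≤ y ^ 2 / (16 * T) := by positivity
  linarith

-- existence of a minimizer
lemma exists_min {u0 : ℝ → ℝ} {T C t : ℝ} (hm : Monotone u0) (hlc : ∀ y : ℝ, ContinuousWithinAt u0 (Iic y) y)
    (hC : ∀ y, -(y ^ 2 / (16 * T)) - C ≤ u0 y) (ht : 0 < t) (htT : t ≤ T) (x : ℝ) :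
    ∃ y ≤ x, Ff u0 x t y = sInf (Ff u0 x t '' Iic x) := by
  have hT : 0 < T := lt_of_lt_of_le ht htT
  set m := sInf (Ff u0 x t '' Iic x) with hm'
  have hne : (Ff u0 x t '' Iic x).Nonempty := ⟨_, ⟨x, le_refl x, rfl⟩⟩
  have hbdd := bddBelow_Ff hC ht htT x
  -- approximate minimizers
  have hyn : ∀ n : ℕ, ∃ y ≤ x, Ff u0 x t y < m + 1 / (n + 1) := by
    intro n
    have : m < m + 1 / (n + 1) := by
      have : (0:ℝ) < 1 / (n + 1) := by positivity
      linarith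
    obtain ⟨v, ⟨y, hy, rfl⟩, hv⟩ := exists_lt_of_csInf_lt hne this
    exact ⟨y, hy, hv⟩
  choose y hyx hym using hyn
  -- bound on y n
  have hub : ∀ n, Ff u0 x t (y n) < m + 1 := by
    intro n
    refine lt_of_lt_of_le (hym n) ?_
    have : 1 / ((n:ℝ) + 1) ≤ 1 := by
      rw [div_le_one (by positivity)]; linarith [Nat.cast_nonneg (α := ℝ) n]
    linarith
  have hbnd : ∀ n, (y n) ^ 2 ≤ (16 * T) * (m + 1 + C + x ^ 2 / (4 * t)) := by
    intro n
    have h := Ff_lower hC ht htT x (y n)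
    have h2 := hub n
    have : (y n) ^ 2 / (16 * T) ≤ m + 1 + C + x ^ 2 / (4 * t) := by linarith
    calc (y n) ^ 2 = (16 * T) * ((y n) ^ 2 / (16 * T)) := by field_simp
    _ ≤ (16 * T) * (m + 1 + C + x ^ 2 / (4 * t)) := by
        exact mul_le_mul_of_nonneg_left this (by positivity)
  set A := Real.sqrt ((16 * T) * (m + 1 + C + x ^ 2 / (4 * t)))
  have hyA : ∀ n, y n ∈ Icc (-A) x := by
    intro n
    refine ⟨?_, hyx n⟩
    have h1 : |y n| ≤ A := by
      have := Real.sqrt_le_sqrt (hbnd n)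
      rwa [Real.sqrt_sq_eq_abs] at this
    have := abs_le.1 h1
    linarith [this.1]
  obtain ⟨y', hy', φ, hφ, hlim⟩ := tendsto_subseq_of_bounded (Metric.isBounded_Icc (-A) x)
    (x := y) hyA
  rw [IsClosed.closure_eq isClosed_Icc] at hy'
  refine ⟨y', hy'.2, ?_⟩
  have hmle : m ≤ Ff u0 x t y' := csInf_le hbdd ⟨y', hy'.2, rfl⟩
  refine le_antisymm ?_ hmle
  by_contra hlt
  push_neg at hlt
  obtain ⟨c, hc1, hc2⟩ := exists_between hlt
  have hlsc : LowerSemicontinuous (Ff u0 x t) := Ff_lsc hm hlc x t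
  have hev : ∀ᶠ k in atTop, c < Ff u0 x t (y (φ k)) := hlim.eventually (hlsc y' c hc2)
  -- but Ff (y (φ k)) < m + 1/(φ k + 1) → m, and c > m
  have htend : Tendsto (fun k => m + 1 / ((φ k : ℝ) + 1)) atTop (nhds m) := by
    have h1 : Tendsto (fun k => ((φ k : ℝ) + 1)) atTop atTop := by
      apply tendsto_atTop_add_const_right
      exact tendsto_natCast_atTop_atTop.comp hφ.tendsto_atTop
    have := h1.inv_tendsto_atTop
    simpa [one_div] using tendsto_const_nhds.add (this)
  have hev2 : ∀ᶠ k in atTop, m + 1 / ((φ k : ℝ) + 1) < c :=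
    htend.eventually (eventually_lt_nhds hc1)
  obtain ⟨k, h1, h2⟩ := (hev.and hev2).exists
  exact absurd ((hym (φ k)).trans h2) (not_lt.2 h1.le)


section MinSet
variable {u0 : ℝ → ℝ} {T C t : ℝ}
variable (hm : Monotone u0) (hlc : ∀ y : ℝ, ContinuousWithinAt u0 (Iic y) y)
variable (hC : ∀ y, -(y ^ 2 / (16 * T)) - C ≤ u0 y) (ht : 0 < t) (htT : t ≤ T)

include hC ht htT

lemma hopfLax_le_Ff {x y : ℝ} (hyx : y ≤ x) : hopfLax u0 x t ≤ Ff u0 x t y := by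
  rw [hopfLax_pos u0 x t ht.ne']
  exact csInf_le (bddBelow_Ff hC ht htT x) ⟨y, hyx, rfl⟩

lemma mem_minSet_iff {x y : ℝ} :
    y ∈ minSet u0 x 0 t ↔ y ≤ x ∧ Ff u0 x t y ≤ hopfLax u0 x t := by
  rw [minSet_zero]
  constructor
  · rintro ⟨h1, h2⟩; exact ⟨h1, h2.ge⟩
  · rintro ⟨h1, h2⟩; exact ⟨h1, le_antisymm (hopfLax_le_Ff hC ht htT h1) h2⟩

include hm hlc

lemma minSet_nonempty (x : ℝ) : (minSet u0 x 0 t).Nonempty := by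
  obtain ⟨y, hyx, hy⟩ := exists_min hm hlc hC ht htT x
  exact ⟨y, (mem_minSet_iff hC ht htT).2 ⟨hyx, by rw [hopfLax_pos u0 x t ht.ne']; exact hy.le⟩⟩

lemma minSet_isClosed (x : ℝ) : IsClosed (minSet u0 x 0 t) := by
  have : minSet u0 x 0 t = Iic x ∩ Ff u0 x t ⁻¹' Iic (hopfLax u0 x t) := by
    ext y; rw [mem_minSet_iff hC ht htT]; rfl
  rw [this]
  exact isClosed_Iic.inter ((Ff_lsc hm hlc x t).isClosed_preimage _)

omit hm hlc

lemma minSet_subset (x : ℝ) :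
    minSet u0 x 0 t ⊆ Icc (-Real.sqrt ((16 * T) * (u0 x + C + x ^ 2 / (4 * t)))) x := by
  have hT : 0 < T := lt_of_lt_of_le ht htT
  rintro y hy
  rw [mem_minSet_iff hC ht htT] at hy
  obtain ⟨h1, h2⟩ := hy
  have h3 : hopfLax u0 x t ≤ Ff u0 x t x := hopfLax_le_Ff hC ht htT le_rfl
  have h4 : Ff u0 x t x = u0 x := by unfold Ff; simp [sub_self]
  have h5 := Ff_lower hC ht htT x y
  have h6 : y ^ 2 ≤ (16 * T) * (u0 x + C + x ^ 2 / (4 * t)) := by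
    have h7 : y ^ 2 / (16 * T) ≤ u0 x + C + x ^ 2 / (4 * t) := by
      rw [h4] at h3; linarith
    calc y ^ 2 = (16 * T) * (y ^ 2 / (16 * T)) := by field_simp
    _ ≤ _ := mul_le_mul_of_nonneg_left h7 (by positivity)
  refine ⟨?_, h1⟩
  have h8 : |y| ≤ Real.sqrt ((16 * T) * (u0 x + C + x ^ 2 / (4 * t))) := by
    have := Real.sqrt_le_sqrt h6
    rwa [Real.sqrt_sq_eq_abs] at this
  linarith [(abs_le.1 h8).1]

lemma minSet_bddBelow (x : ℝ) : BddBelow (minSet u0 x 0 t) :=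
  ⟨_, fun _ hy => ((minSet_subset hC ht htT x) hy).1⟩

lemma minSet_bddAbove (x : ℝ) : BddAbove (minSet u0 x 0 t) :=
  ⟨x, fun _ hy => ((minSet_subset hC ht htT x) hy).2⟩

include hm hlc

lemma yminus_mem (x : ℝ) : yminus u0 x 0 t ∈ minSet u0 x 0 t :=
  (minSet_isClosed hm hlc hC ht htT x).csInf_mem (minSet_nonempty hm hlc hC ht htT x)
    (minSet_bddBelow hC ht htT x)

lemma yplus_mem (x : ℝ) : yplus u0 x 0 t ∈ minSet u0 x 0 t :=
  (minSet_isClosed hm hlc hC ht htT x).csSup_mem (minSet_nonempty hm hlc hC ht htT x)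
    (minSet_bddAbove hC ht htT x)

omit hm hlc

lemma yminus_le_of_mem {x y : ℝ} (hy : y ∈ minSet u0 x 0 t) : yminus u0 x 0 t ≤ y :=
  csInf_le (minSet_bddBelow hC ht htT x) hy

lemma le_yplus_of_mem {x y : ℝ} (hy : y ∈ minSet u0 x 0 t) : y ≤ yplus u0 x 0 t :=
  le_csSup (minSet_bddAbove hC ht htT x) hy

/-- ordering of minimizers: feet are monotone in the base point. -/
lemma minSet_ordered {x1 x2 y1 y2 : ℝ} (hx : x1 < x2)
    (h1 : y1 ∈ minSet u0 x1 0 t) (h2 : y2 ∈ minSet u0 x2 0 t) : y1 ≤ y2 := by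
  by_contra hcon
  push_neg at hcon
  rw [mem_minSet_iff hC ht htT] at h1 h2
  have e1 : hopfLax u0 x1 t ≤ Ff u0 x1 t y2 :=
    hopfLax_le_Ff hC ht htT (le_trans hcon.le h1.1)
  have e2 : hopfLax u0 x2 t ≤ Ff u0 x2 t y1 :=
    hopfLax_le_Ff hC ht htT (le_trans h1.1 (le_of_lt hx))
  have q1 := h1.2
  have q2 := h2.2
  unfold Ff at *
  have key : (x1 - y2) ^ 2 + (x2 - y1) ^ 2 < (x1 - y1) ^ 2 + (x2 - y2) ^ 2 := by nlinarith
  have h4t : (0:ℝ) < 4 * t := by linarith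
  have key2 : (x1 - y2) ^ 2 / (4 * t) + (x2 - y1) ^ 2 / (4 * t)
      < (x1 - y1) ^ 2 / (4 * t) + (x2 - y2) ^ 2 / (4 * t) := by
    rw [← add_div, ← add_div]
    exact (div_lt_div_iff_of_pos_right h4t).2 key
  linarith

end MinSet


/-- squared bound for feet below `q`. -/
noncomputable def Dq (u0 : ℝ → ℝ) (T C q : ℝ) : ℝ := max (8 * T * (u0 q + C) + q ^ 2) 0

noncomputable def K1 (u0 : ℝ → ℝ) (T C q : ℝ) : ℝ :=
  max (u0 (q + 1) + C + (2 * Dq u0 T C q + 2 * q ^ 2) / (16 * T)) 0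

noncomputable def Rq (u0 : ℝ → ℝ) (T C q : ℝ) : ℝ :=
  max (q + 1) (q + (1 + 4 * T * K1 u0 T C q) / 2)

section Bounds
variable {u0 : ℝ → ℝ} {T C t : ℝ}
variable (hC : ∀ y, -(y ^ 2 / (16 * T)) - C ≤ u0 y) (ht : 0 < t) (htT : t ≤ T)
include hC ht htT

lemma foot_lower {x y q : ℝ} (hqx : q ≤ x) (hy : y ∈ minSet u0 x 0 t) (hyq : y ≤ q) :
    (q - y) ^ 2 ≤ Dq u0 T C q := by
  have hT : 0 < T := lt_of_lt_of_le ht htT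
  have h4t : (0:ℝ) < 4 * t := by linarith
  have hy' := (mem_minSet_iff hC ht htT).1 hy
  have hFf : u0 y + (x - y) ^ 2 / (4 * t) ≤ u0 q + (x - q) ^ 2 / (4 * t) :=
    le_trans hy'.2 (hopfLax_le_Ff hC ht htT hqx)
  have hsq : (q - y) ^ 2 ≤ (x - y) ^ 2 - (x - q) ^ 2 := by
    nlinarith [mul_nonneg (sub_nonneg.2 hyq) (sub_nonneg.2 hqx)]
  have hA : (q - y) ^ 2 / (4 * T) ≤ u0 q + C + y ^ 2 / (16 * T) := by
    have s1 : (q - y) ^ 2 / (4 * T) ≤ (q - y) ^ 2 / (4 * t) := by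
      gcongr
    have s2 : (q - y) ^ 2 / (4 * t) ≤ ((x - y) ^ 2 - (x - q) ^ 2) / (4 * t) := by gcongr
    have s3 : ((x - y) ^ 2 - (x - q) ^ 2) / (4 * t) = (x - y) ^ 2 / (4 * t) - (x - q) ^ 2 / (4 * t) :=
      sub_div _ _ _
    have s4 := hC y
    linarith
  have h16 : (16 * T) * ((q - y) ^ 2 / (4 * T)) = 4 * (q - y) ^ 2 := by field_simp; ring
  have h16b : (16 * T) * (y ^ 2 / (16 * T)) = y ^ 2 := by field_simp
  have h5 := mul_le_mul_of_nonneg_left hA (by positivity : (0:ℝ) ≤ 16 * T)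
  rw [h16] at h5
  have h6 : 4 * (q - y) ^ 2 ≤ 16 * T * (u0 q + C) + y ^ 2 := by
    rw [mul_add, mul_add, h16b] at h5; linarith [h5]
  have h7 : y ^ 2 ≤ 2 * (q - y) ^ 2 + 2 * q ^ 2 := by nlinarith [sq_nonneg (2 * q - y)]
  have h8 : (q - y) ^ 2 ≤ 8 * T * (u0 q + C) + q ^ 2 := by nlinarith
  exact le_trans h8 (le_max_left _ _)

lemma x_upper {x y q : ℝ} (hy : y ∈ minSet u0 x 0 t) (hyq : y ≤ q) : x ≤ Rq u0 T C q := by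
  have hT : 0 < T := lt_of_lt_of_le ht htT
  have h4t : (0:ℝ) < 4 * t := by linarith
  rcases le_or_gt x (q + 1) with h | h
  · exact le_trans h (le_max_left _ _)
  have hqx : q ≤ x := by linarith
  have hD := foot_lower hC ht htT hqx hy hyq
  have hD0 : 0 ≤ Dq u0 T C q := le_max_right _ _
  have hy2 : y ^ 2 ≤ 2 * Dq u0 T C q + 2 * q ^ 2 := by
    nlinarith [sq_nonneg (2 * q - y)]
  have hy' := (mem_minSet_iff hC ht htT).1 hy
  have hFf : u0 y + (x - y) ^ 2 / (4 * t) ≤ u0 (q + 1) + (x - (q + 1)) ^ 2 / (4 * t) :=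
    le_trans hy'.2 (hopfLax_le_Ff hC ht htT (by linarith))
  have hsq : 2 * (x - q) - 1 ≤ (x - y) ^ 2 - (x - (q + 1)) ^ 2 := by
    nlinarith [mul_nonneg (sub_nonneg.2 hyq) (sub_nonneg.2 hqx)]
  have hu0y : -(y ^ 2 / (16 * T)) - C ≤ u0 y := hC y
  have hyK : y ^ 2 / (16 * T) ≤ (2 * Dq u0 T C q + 2 * q ^ 2) / (16 * T) := by gcongr
  have hd : (2 * (x - q) - 1) / (4 * t) ≤ K1 u0 T C q := by
    have s2 : (2 * (x - q) - 1) / (4 * t) ≤ ((x - y) ^ 2 - (x - (q + 1)) ^ 2) / (4 * t) := by gcongr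
    have s3 : ((x - y) ^ 2 - (x - (q + 1)) ^ 2) / (4 * t)
        = (x - y) ^ 2 / (4 * t) - (x - (q + 1)) ^ 2 / (4 * t) := sub_div _ _ _
    have s5 : (2 * (x - q) - 1) / (4 * t)
        ≤ u0 (q + 1) + C + (2 * Dq u0 T C q + 2 * q ^ 2) / (16 * T) := by linarith
    exact le_trans s5 (le_max_left _ _)
  have hK0 : 0 ≤ K1 u0 T C q := le_max_right _ _
  have hd2 : 2 * (x - q) - 1 ≤ 4 * t * K1 u0 T C q := by
    rw [div_le_iff₀ h4t] at hd; linarith [hd]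
  have hd3 : 4 * t * K1 u0 T C q ≤ 4 * T * K1 u0 T C q := by nlinarith
  have hfin : x ≤ q + (1 + 4 * T * K1 u0 T C q) / 2 := by linarith
  exact le_trans hfin (le_max_right _ _)

end Bounds


/-- the set whose sup is the forward characteristic through `(q,0)` (lower version). -/
def XSet (u0 : ℝ → ℝ) (q t : ℝ) : Set ℝ := {x | yminus u0 x 0 t ≤ q}

noncomputable def Xc (u0 : ℝ → ℝ) (q t : ℝ) : ℝ := sSup (XSet u0 q t)

def YSet (u0 : ℝ → ℝ) (q t : ℝ) : Set ℝ := {x | q ≤ yplus u0 x 0 t}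

noncomputable def Yc (u0 : ℝ → ℝ) (q t : ℝ) : ℝ := sInf (YSet u0 q t)

section Curves
variable {u0 : ℝ → ℝ} {T C t : ℝ}
variable (hm : Monotone u0) (hlc : ∀ y : ℝ, ContinuousWithinAt u0 (Iic y) y)
variable (hC : ∀ y, -(y ^ 2 / (16 * T)) - C ≤ u0 y) (ht : 0 < t) (htT : t ≤ T)
include hm hlc hC ht htT

lemma yminus_le_x (x : ℝ) : yminus u0 x 0 t ≤ x :=
  ((mem_minSet_iff hC ht htT).1 (yminus_mem hm hlc hC ht htT x)).1

lemma yminus_le_yplus (x : ℝ) : yminus u0 x 0 t ≤ yplus u0 x 0 t :=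
  yminus_le_of_mem hC ht htT (yplus_mem hm hlc hC ht htT x)

lemma XSet_of_le {q x : ℝ} (hxq : x ≤ q) : x ∈ XSet u0 q t :=
  le_trans (yminus_le_x hm hlc hC ht htT x) hxq

lemma XSet_down {q x x' : ℝ} (hx' : x' ≤ x) (hx : x ∈ XSet u0 q t) : x' ∈ XSet u0 q t := by
  rcases eq_or_lt_of_le hx' with rfl | hlt
  · exact hx
  · have h1 : yplus u0 x' 0 t ≤ yminus u0 x 0 t :=
      minSet_ordered hC ht htT hlt (yplus_mem hm hlc hC ht htT x') (yminus_mem hm hlc hC ht htT x)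
    exact le_trans (le_trans (yminus_le_yplus hm hlc hC ht htT x') h1) hx

lemma XSet_bddAbove (q : ℝ) : Rq u0 T C q ∈ upperBounds (XSet u0 q t) :=
  fun x hx => x_upper hC ht htT (yminus_mem hm hlc hC ht htT x) hx

lemma q_le_Xc (q : ℝ) : q ≤ Xc u0 q t :=
  le_csSup ⟨_, XSet_bddAbove hm hlc hC ht htT q⟩ (XSet_of_le hm hlc hC ht htT le_rfl)

lemma mem_XSet_of_lt_Xc {q x : ℝ} (hx : x < Xc u0 q t) : x ∈ XSet u0 q t := by
  obtain ⟨x', hx', hxx'⟩ := exists_lt_of_lt_csSup ⟨q, XSet_of_le hm hlc hC ht htT le_rfl⟩ hx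
  exact XSet_down hm hlc hC ht htT hxx'.le hx'

lemma le_Xc_of_mem {q x : ℝ} (hx : x ∈ XSet u0 q t) : x ≤ Xc u0 q t :=
  le_csSup ⟨_, XSet_bddAbove hm hlc hC ht htT q⟩ hx

lemma YSet_of_gt {q x : ℝ} (hx : Rq u0 T C q < x) : x ∈ YSet u0 q t := by
  by_contra hcon
  have h1 : yplus u0 x 0 t ≤ q := le_of_not_ge hcon
  exact absurd (x_upper hC ht htT (yplus_mem hm hlc hC ht htT x) h1) (not_le.2 hx)

lemma YSet_up {q x x' : ℝ} (hx' : x ≤ x') (hx : x ∈ YSet u0 q t) : x' ∈ YSet u0 q t := by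
  rcases eq_or_lt_of_le hx' with rfl | hlt
  · exact hx
  · have h1 : yplus u0 x 0 t ≤ yminus u0 x' 0 t :=
      minSet_ordered hC ht htT hlt (yplus_mem hm hlc hC ht htT x) (yminus_mem hm hlc hC ht htT x')
    exact le_trans hx (le_trans h1 (yminus_le_yplus hm hlc hC ht htT x'))

lemma YSet_bddBelow (q : ℝ) : q ∈ lowerBounds (YSet u0 q t) := by
  intro x hx
  have h1 : yplus u0 x 0 t ≤ x :=
    ((mem_minSet_iff hC ht htT).1 (yplus_mem hm hlc hC ht htT x)).1
  exact le_trans hx h1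

lemma YSet_nonempty (q : ℝ) : (YSet u0 q t).Nonempty :=
  ⟨Rq u0 T C q + 1, YSet_of_gt hm hlc hC ht htT (by linarith)⟩

lemma q_le_Yc (q : ℝ) : q ≤ Yc u0 q t :=
  le_csInf (YSet_nonempty hm hlc hC ht htT q) (YSet_bddBelow hm hlc hC ht htT q)

lemma mem_YSet_of_Yc_lt {q x : ℝ} (hx : Yc u0 q t < x) : x ∈ YSet u0 q t := by
  obtain ⟨x', hx', hxx'⟩ := exists_lt_of_csInf_lt (YSet_nonempty hm hlc hC ht htT q) hx
  exact YSet_up hm hlc hC ht htT hxx'.le hx'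

lemma Yc_le_Xc (q : ℝ) : Yc u0 q t ≤ Xc u0 q t := by
  by_contra hcon
  push_neg at hcon
  obtain ⟨x, hx1, hx2⟩ := exists_between hcon
  have h1 : x ∉ YSet u0 q t := fun h =>
    absurd (csInf_le ⟨q, YSet_bddBelow hm hlc hC ht htT q⟩ h) (not_le.2 hx2)
  have h2 : yplus u0 x 0 t < q := lt_of_not_ge h1
  have h3 : x ∈ XSet u0 q t :=
    le_of_lt (lt_of_le_of_lt (yminus_le_yplus hm hlc hC ht htT x) h2)
  exact absurd (le_Xc_of_mem hm hlc hC ht htT h3) (not_le.2 hx1)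

lemma shock_XSet {q x : ℝ} (h1 : yminus u0 x 0 t < q) (h2 : q < yplus u0 x 0 t) :
    XSet u0 q t = Iic x := by
  ext x'
  constructor
  · intro hx'
    by_contra hcon
    have hlt : x < x' := lt_of_not_ge hcon
    have := minSet_ordered hC ht htT hlt (yplus_mem hm hlc hC ht htT x)
      (yminus_mem hm hlc hC ht htT x')
    have : q < yminus u0 x' 0 t := lt_of_lt_of_le h2 this
    exact absurd hx' (not_le.2 this)
  · intro hx'
    rcases eq_or_lt_of_le (mem_Iic.1 hx') with rfl | hlt
    · exact h1.le
    · have := minSet_ordered hC ht htT hlt (yplus_mem hm hlc hC ht htT x')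
        (yminus_mem hm hlc hC ht htT x)
      exact le_trans (yminus_le_yplus hm hlc hC ht htT x') (le_trans this h1.le)

lemma shock_YSet {q x : ℝ} (h1 : yminus u0 x 0 t < q) (h2 : q < yplus u0 x 0 t) :
    YSet u0 q t = Ici x := by
  ext x'
  constructor
  · intro hx'
    by_contra hcon
    have hlt : x' < x := lt_of_not_ge hcon
    have := minSet_ordered hC ht htT hlt (yplus_mem hm hlc hC ht htT x')
      (yminus_mem hm hlc hC ht htT x)
    have : yplus u0 x' 0 t < q := lt_of_le_of_lt this h1
    exact absurd hx' (not_le.2 this)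
  · intro hx'
    rcases eq_or_lt_of_le (mem_Ici.1 hx') with rfl | hlt
    · exact h2.le
    · have := minSet_ordered hC ht htT hlt (yplus_mem hm hlc hC ht htT x)
        (yminus_mem hm hlc hC ht htT x')
      exact le_trans h2.le (le_trans this (yminus_le_yplus hm hlc hC ht htT x'))

lemma shock_Xc {q x : ℝ} (h1 : yminus u0 x 0 t < q) (h2 : q < yplus u0 x 0 t) :
    Xc u0 q t = x := by
  rw [Xc, shock_XSet hm hlc hC ht htT h1 h2, csSup_Iic]

lemma shock_Yc {q x : ℝ} (h1 : yminus u0 x 0 t < q) (h2 : q < yplus u0 x 0 t) :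
    Yc u0 q t = x := by
  rw [Yc, shock_YSet hm hlc hC ht htT h1 h2, csInf_Ici]

end Curves


/-- bound on `(x-y)²` over minimizers with time in `[a0,T]`. -/
noncomputable def Bcst (u0 : ℝ → ℝ) (T C x a0 : ℝ) : ℝ :=
  2 * x ^ 2 + 2 * max (16 * T * (u0 x + C + x ^ 2 / (4 * a0))) 0

section Lip
variable {u0 : ℝ → ℝ} {T C a0 : ℝ}
variable (hC : ∀ y, -(y ^ 2 / (16 * T)) - C ≤ u0 y) (ha0 : 0 < a0)
include hC ha0

lemma foot_sq_bound {x s y : ℝ} (hs : s ∈ Icc a0 T) (hy : y ∈ minSet u0 x 0 s) :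
    (x - y) ^ 2 ≤ Bcst u0 T C x a0 := by
  have hs0 : 0 < s := lt_of_lt_of_le ha0 hs.1
  have hT : 0 < T := lt_of_lt_of_le hs0 hs.2
  have hy' := (mem_minSet_iff hC hs0 hs.2).1 hy
  have h3 : hopfLax u0 x s ≤ Ff u0 x s x := hopfLax_le_Ff hC hs0 hs.2 le_rfl
  have h4 : Ff u0 x s x = u0 x := by unfold Ff; simp [sub_self]
  have h5 := Ff_lower hC hs0 hs.2 x y
  have h7 : y ^ 2 / (16 * T) ≤ u0 x + C + x ^ 2 / (4 * s) := by
    rw [h4] at h3; linarith [hy'.2]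
  have h8 : y ^ 2 ≤ 16 * T * (u0 x + C + x ^ 2 / (4 * s)) := by
    calc y ^ 2 = (16 * T) * (y ^ 2 / (16 * T)) := by field_simp
    _ ≤ _ := mul_le_mul_of_nonneg_left h7 (by positivity)
  have h9 : 16 * T * (u0 x + C + x ^ 2 / (4 * s)) ≤ 16 * T * (u0 x + C + x ^ 2 / (4 * a0)) := by
    gcongr
    exact hs.1
  have h10 : y ^ 2 ≤ max (16 * T * (u0 x + C + x ^ 2 / (4 * a0))) 0 :=
    le_trans (le_trans h8 h9) (le_max_left _ _)
  unfold Bcst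
  nlinarith [sq_nonneg (x + y)]

lemma hopfLax_lip {x s t : ℝ} (hm : Monotone u0)
    (hlc : ∀ y : ℝ, ContinuousWithinAt u0 (Iic y) y)
    (hs : s ∈ Icc a0 T) (htI : t ∈ Icc a0 T) :
    hopfLax u0 x t ≤ hopfLax u0 x s + Bcst u0 T C x a0 * |t - s| / (4 * a0 ^ 2) := by
  have hs0 : 0 < s := lt_of_lt_of_le ha0 hs.1
  have ht0 : 0 < t := lt_of_lt_of_le ha0 htI.1
  obtain ⟨y, hy⟩ := minSet_nonempty hm hlc hC hs0 hs.2 x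
  have hy' := (mem_minSet_iff hC hs0 hs.2).1 hy
  have hmem : hopfLax u0 x s = Ff u0 x s y :=
    le_antisymm (hopfLax_le_Ff hC hs0 hs.2 hy'.1) hy'.2
  have hb := foot_sq_bound hC ha0 hs hy
  have hb0 : 0 ≤ Bcst u0 T C x a0 := le_trans (sq_nonneg (x - y)) hb
  have hsplit : Ff u0 x t y = Ff u0 x s y + (x - y) ^ 2 * (s - t) / (4 * t * s) := by
    unfold Ff
    field_simp
    ring
  have hterm : (x - y) ^ 2 * (s - t) / (4 * t * s) ≤ Bcst u0 T C x a0 * |t - s| / (4 * a0 ^ 2) := by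
    have hnum : (x - y) ^ 2 * (s - t) ≤ Bcst u0 T C x a0 * |t - s| := by
      have e1 : (x - y) ^ 2 * (s - t) ≤ (x - y) ^ 2 * |t - s| := by
        have : s - t ≤ |t - s| := by rw [abs_sub_comm]; exact le_abs_self _
        exact mul_le_mul_of_nonneg_left this (sq_nonneg _)
      exact le_trans e1 (mul_le_mul_of_nonneg_right hb (abs_nonneg _))
    have hts : 4 * a0 ^ 2 ≤ 4 * t * s := by nlinarith [htI.1, hs.1]
    have hpos : (0:ℝ) < 4 * a0 ^ 2 := by positivity
    have hpos2 : (0:ℝ) < 4 * t * s := by positivity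
    rcases le_or_gt ((x - y) ^ 2 * (s - t)) 0 with hneg | hposn
    · have l1 : (x - y) ^ 2 * (s - t) / (4 * t * s) ≤ 0 := div_nonpos_of_nonpos_of_nonneg hneg hpos2.le
      have l2 : 0 ≤ Bcst u0 T C x a0 * |t - s| / (4 * a0 ^ 2) :=
        div_nonneg (mul_nonneg hb0 (abs_nonneg _)) hpos.le
      linarith
    · have l3 : (x - y) ^ 2 * (s - t) / (4 * t * s) ≤ (x - y) ^ 2 * (s - t) / (4 * a0 ^ 2) :=
        div_le_div_of_nonneg_left hposn.le hpos hts
      have l4 : (x - y) ^ 2 * (s - t) / (4 * a0 ^ 2) ≤ Bcst u0 T C x a0 * |t - s| / (4 * a0 ^ 2) := by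
        gcongr
      linarith
  calc hopfLax u0 x t ≤ Ff u0 x t y := hopfLax_le_Ff hC ht0 htI.2 hy'.1
  _ = Ff u0 x s y + (x - y) ^ 2 * (s - t) / (4 * t * s) := hsplit
  _ ≤ hopfLax u0 x s + Bcst u0 T C x a0 * |t - s| / (4 * a0 ^ 2) := by rw [hmem]; linarith [hterm]

lemma hopfLax_abs_lip {x s t : ℝ} (hm : Monotone u0)
    (hlc : ∀ y : ℝ, ContinuousWithinAt u0 (Iic y) y)
    (hs : s ∈ Icc a0 T) (htI : t ∈ Icc a0 T) :
    |hopfLax u0 x t - hopfLax u0 x s| ≤ Bcst u0 T C x a0 * |t - s| / (4 * a0 ^ 2) := by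
  rw [abs_sub_le_iff]
  constructor
  · linarith [hopfLax_lip (x := x) hC ha0 hm hlc hs htI]
  · have := hopfLax_lip (x := x) hC ha0 hm hlc htI hs
    rw [abs_sub_comm] at this
    linarith

end Lip


section Stab
variable {u0 : ℝ → ℝ} {T C a0 : ℝ}
variable (hm : Monotone u0) (hlc : ∀ y : ℝ, ContinuousWithinAt u0 (Iic y) y)
variable (hC : ∀ y, -(y ^ 2 / (16 * T)) - C ≤ u0 y) (ha0 : 0 < a0)
include hm hlc hC ha0

lemma stability {x t₀ y₀ : ℝ} {s y : ℕ → ℝ} (ht₀I : t₀ ∈ Icc a0 T)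
    (hsI : ∀ n, s n ∈ Icc a0 T) (hst : Tendsto s atTop (nhds t₀))
    (hy : ∀ n, y n ∈ minSet u0 x 0 (s n)) (hyt : Tendsto y atTop (nhds y₀)) :
    y₀ ∈ minSet u0 x 0 t₀ := by
  have ht0 : 0 < t₀ := lt_of_lt_of_le ha0 ht₀I.1
  have hsn0 : ∀ n, 0 < s n := fun n => lt_of_lt_of_le ha0 (hsI n).1
  have hyx : y₀ ≤ x :=
    le_of_tendsto hyt (Eventually.of_forall fun n => ((mem_minSet_iff hC (hsn0 n) (hsI n).2).1 (hy n)).1)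
  -- convergence of values
  have hmseq : Tendsto (fun n => hopfLax u0 x (s n)) atTop (nhds (hopfLax u0 x t₀)) := by
    rw [tendsto_iff_dist_tendsto_zero]
    have hb : ∀ n, dist (hopfLax u0 x (s n)) (hopfLax u0 x t₀)
        ≤ Bcst u0 T C x a0 / (4 * a0 ^ 2) * |s n - t₀| := by
      intro n
      have := hopfLax_abs_lip (x := x) hC ha0 hm hlc ht₀I (hsI n)
      rw [Real.dist_eq]
      calc |hopfLax u0 x (s n) - hopfLax u0 x t₀| ≤ Bcst u0 T C x a0 * |s n - t₀| / (4 * a0 ^ 2) :=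
        this
      _ = Bcst u0 T C x a0 / (4 * a0 ^ 2) * |s n - t₀| := by ring
    have habs : Tendsto (fun n => |s n - t₀|) atTop (nhds 0) := by
      have := (hst.sub_const t₀).abs
      simpa using this
    have := habs.const_mul (Bcst u0 T C x a0 / (4 * a0 ^ 2))
    rw [mul_zero] at this
    exact squeeze_zero (fun n => dist_nonneg) hb this
  have hval : ∀ n, hopfLax u0 x (s n) = Ff u0 x (s n) (y n) := by
    intro n
    have h := (mem_minSet_iff hC (hsn0 n) (hsI n).2).1 (hy n)
    exact le_antisymm (hopfLax_le_Ff hC (hsn0 n) (hsI n).2 h.1) h.2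
  -- key inequality
  have hkey : ∀ c, c < u0 y₀ → c + (x - y₀) ^ 2 / (4 * t₀) ≤ hopfLax u0 x t₀ := by
    intro c hc
    have hev : ∀ᶠ n in atTop, c < u0 (y n) := hyt.eventually (u0_lsc hm hlc y₀ c hc)
    have hev2 : ∀ᶠ n in atTop, c + (x - y n) ^ 2 / (4 * s n) ≤ hopfLax u0 x (s n) := by
      filter_upwards [hev] with n hn
      rw [hval n]
      unfold Ff
      linarith
    have hlhs : Tendsto (fun n => c + (x - y n) ^ 2 / (4 * s n)) atTop
        (nhds (c + (x - y₀) ^ 2 / (4 * t₀))) := by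
      refine tendsto_const_nhds.add (Tendsto.div ?_ (hst.const_mul 4) (by positivity))
      exact (hyt.const_sub x).pow 2
    exact le_of_tendsto_of_tendsto hlhs hmseq hev2
  rw [mem_minSet_iff hC ht0 ht₀I.2]
  refine ⟨hyx, ?_⟩
  unfold Ff
  by_contra hcon
  push_neg at hcon
  have h1 : hopfLax u0 x t₀ - (x - y₀) ^ 2 / (4 * t₀) < u0 y₀ := by linarith
  obtain ⟨c, hc1, hc2⟩ := exists_between h1
  have := hkey c hc2
  linarith

end Stab


section Keys
variable {u0 : ℝ → ℝ} {T C : ℝ}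
variable (hm : Monotone u0) (hlc : ∀ y : ℝ, ContinuousWithinAt u0 (Iic y) y)
variable (hC : ∀ y, -(y ^ 2 / (16 * T)) - C ≤ u0 y)
include hm hlc hC

/-- pick a bad sequence converging to `t₀` staying in `(t₀/2, T]`. -/
lemma bad_seq {t₀ : ℝ} (ht₀ : 0 < t₀) {P : ℝ → Prop}
    (hbad : ∀ r, 0 < r → ∃ s, 0 < s ∧ s ≤ T ∧ |s - t₀| < r ∧ P s) :
    ∃ s : ℕ → ℝ, (∀ n, s n ∈ Icc (t₀ / 2) T) ∧ Tendsto s atTop (nhds t₀) ∧ ∀ n, P (s n) := by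
  have h : ∀ n : ℕ, ∃ s, 0 < s ∧ s ≤ T ∧ |s - t₀| < min (1 / ((n : ℝ) + 1)) (t₀ / 2) ∧ P s := by
    intro n
    refine hbad _ (lt_min (by positivity) (by linarith))
  choose s hs1 hs2 hs3 hs4 using h
  refine ⟨s, fun n => ⟨?_, hs2 n⟩, ?_, hs4⟩
  · have := (abs_lt.1 (lt_of_lt_of_le (hs3 n) (min_le_right _ _))).1
    linarith
  · rw [tendsto_iff_dist_tendsto_zero]
    have hb : ∀ n, dist (s n) t₀ ≤ 1 / ((n : ℝ) + 1) := by
      intro n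
      exact (lt_of_lt_of_le (hs3 n) (min_le_left _ _)).le
    exact squeeze_zero (fun n => dist_nonneg) hb tendsto_one_div_add_atTop_nhds_zero_nat

lemma Xc_usc {t₀ q δ : ℝ} (ht₀ : 0 < t₀) (ht₀T : t₀ ≤ T) (hδ : 0 < δ) :
    ∃ r, 0 < r ∧ ∀ s, 0 < s → s ≤ T → |s - t₀| < r → Xc u0 q s < Xc u0 q t₀ + δ := by
  by_contra hcon
  push_neg at hcon
  obtain ⟨s, hsI, hst, hP⟩ := bad_seq hm hlc hC ht₀ (P := fun s => Xc u0 q t₀ + δ ≤ Xc u0 q s)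
    (by
      intro r hr
      obtain ⟨sr, h1⟩ := hcon r hr
      exact ⟨sr, h1.1, h1.2.1, h1.2.2.1, h1.2.2.2⟩)
  have ha0 : 0 < t₀ / 2 := by linarith
  have hsn0 : ∀ n, 0 < s n := fun n => lt_of_lt_of_le ha0 (hsI n).1
  set xs := Xc u0 q t₀ + δ / 2 with hxs
  have hq : q < xs := lt_of_le_of_lt (q_le_Xc hm hlc hC ht₀ ht₀T q) (by rw [hxs]; linarith)
  have hmem : ∀ n, xs ∈ XSet u0 q (s n) := by
    intro n
    refine mem_XSet_of_lt_Xc hm hlc hC (hsn0 n) (hsI n).2 ?_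
    calc xs < Xc u0 q t₀ + δ := by rw [hxs]; linarith
    _ ≤ Xc u0 q (s n) := hP n
  set y := fun n => yminus u0 xs 0 (s n) with hy
  have hymem : ∀ n, y n ∈ minSet u0 xs 0 (s n) := fun n => yminus_mem hm hlc hC (hsn0 n) (hsI n).2 xs
  have hyq : ∀ n, y n ≤ q := hmem
  have hylow : ∀ n, q - Real.sqrt (Dq u0 T C q) ≤ y n := by
    intro n
    have hD := foot_lower hC (hsn0 n) (hsI n).2 hq.le (hymem n) (hyq n)
    have h2 := Real.sqrt_le_sqrt hD
    rw [Real.sqrt_sq_eq_abs] at h2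
    have h1 : q - y n ≤ Real.sqrt (Dq u0 T C q) := le_trans (le_abs_self _) h2
    linarith
  have hyIcc : ∀ n, y n ∈ Icc (q - Real.sqrt (Dq u0 T C q)) q := fun n => ⟨hylow n, hyq n⟩
  obtain ⟨y₀, hy₀, φ, hφ, hylim⟩ := tendsto_subseq_of_bounded
    (Metric.isBounded_Icc (q - Real.sqrt (Dq u0 T C q)) q) hyIcc
  rw [IsClosed.closure_eq isClosed_Icc] at hy₀
  have hy₀mem : y₀ ∈ minSet u0 xs 0 t₀ :=
    stability hm hlc hC ha0 ⟨by linarith, ht₀T⟩ (fun n => hsI (φ n))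
      (hst.comp hφ.tendsto_atTop) (fun n => hymem (φ n)) hylim
  have : xs ∈ XSet u0 q t₀ :=
    le_trans (yminus_le_of_mem hC ht₀ ht₀T hy₀mem) hy₀.2
  have := le_Xc_of_mem hm hlc hC ht₀ ht₀T this
  rw [hxs] at this
  linarith

lemma Yc_lsc {t₀ q δ : ℝ} (ht₀ : 0 < t₀) (ht₀T : t₀ ≤ T) (hδ : 0 < δ) :
    ∃ r, 0 < r ∧ ∀ s, 0 < s → s ≤ T → |s - t₀| < r → Yc u0 q t₀ - δ < Yc u0 q s := by
  by_contra hcon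
  push_neg at hcon
  obtain ⟨s, hsI, hst, hP⟩ := bad_seq hm hlc hC ht₀ (P := fun s => Yc u0 q s ≤ Yc u0 q t₀ - δ)
    (by
      intro r hr
      obtain ⟨sr, h1⟩ := hcon r hr
      exact ⟨sr, h1.1, h1.2.1, h1.2.2.1, h1.2.2.2⟩)
  have ha0 : 0 < t₀ / 2 := by linarith
  have hsn0 : ∀ n, 0 < s n := fun n => lt_of_lt_of_le ha0 (hsI n).1
  set xs := Yc u0 q t₀ - δ / 2 with hxs
  have hmem : ∀ n, xs ∈ YSet u0 q (s n) := by
    intro n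
    refine mem_YSet_of_Yc_lt hm hlc hC (hsn0 n) (hsI n).2 ?_
    calc Yc u0 q (s n) ≤ Yc u0 q t₀ - δ := hP n
    _ < xs := by rw [hxs]; linarith
  set y := fun n => yplus u0 xs 0 (s n) with hy
  have hymem : ∀ n, y n ∈ minSet u0 xs 0 (s n) := fun n => yplus_mem hm hlc hC (hsn0 n) (hsI n).2 xs
  have hyq : ∀ n, q ≤ y n := hmem
  have hyup : ∀ n, y n ≤ xs := fun n => ((mem_minSet_iff hC (hsn0 n) (hsI n).2).1 (hymem n)).1
  have hyIcc : ∀ n, y n ∈ Icc q xs := fun n => ⟨hyq n, hyup n⟩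
  obtain ⟨y₀, hy₀, φ, hφ, hylim⟩ := tendsto_subseq_of_bounded (Metric.isBounded_Icc q xs) hyIcc
  rw [IsClosed.closure_eq isClosed_Icc] at hy₀
  have hy₀mem : y₀ ∈ minSet u0 xs 0 t₀ :=
    stability hm hlc hC ha0 ⟨by linarith, ht₀T⟩ (fun n => hsI (φ n))
      (hst.comp hφ.tendsto_atTop) (fun n => hymem (φ n)) hylim
  have : xs ∈ YSet u0 q t₀ :=
    le_trans hy₀.1 (le_yplus_of_mem hC ht₀ ht₀T hy₀mem)
  have := csInf_le ⟨q, YSet_bddBelow hm hlc hC ht₀ ht₀T q⟩ this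
  rw [hxs] at this
  have h0 : Yc u0 q t₀ ≤ Yc u0 q t₀ - δ / 2 := this
  linarith

end Keys


lemma growth_const {u0 : ℝ → ℝ} (hm : Monotone u0)
    (hgrowth : Tendsto (fun y => u0 y / y ^ 2) atBot (nhds 0)) {T : ℝ} (hT : 0 < T) :
    ∃ C, ∀ y, -(y ^ 2 / (16 * T)) - C ≤ u0 y := by
  have hev := Metric.tendsto_nhds.1 hgrowth (1 / (16 * T)) (by positivity)
  rw [eventually_atBot] at hev
  obtain ⟨y₁, hy₁⟩ := hev
  set y₂ := min y₁ (-1) with hy₂def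
  refine ⟨|u0 y₂|, ?_⟩
  intro y
  rcases le_or_gt y y₂ with h | h
  · have h1 := hy₁ y (le_trans h (min_le_left _ _))
    have hyneg : y ≤ -1 := le_trans h (min_le_right _ _)
    have hy2pos : 0 < y ^ 2 := by nlinarith
    rw [Real.dist_eq, sub_zero] at h1
    have h2 : -(1 / (16 * T)) < u0 y / y ^ 2 := (abs_lt.1 h1).1
    have h3 : -(1 / (16 * T)) * y ^ 2 ≤ u0 y / y ^ 2 * y ^ 2 :=
      mul_le_mul_of_nonneg_right h2.le hy2pos.le
    rw [div_mul_cancel₀ _ (ne_of_gt hy2pos)] at h3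
    have h4 : -(1 / (16 * T)) * y ^ 2 = -(y ^ 2 / (16 * T)) := by ring
    rw [h4] at h3
    have : (0:ℝ) ≤ |u0 y₂| := abs_nonneg _
    linarith
  · have h1 : u0 y₂ ≤ u0 y := hm h.le
    have h2 : -|u0 y₂| ≤ u0 y₂ := neg_abs_le _
    have h3 : (0:ℝ) ≤ y ^ 2 / (16 * T) := by positivity
    linarith

end HLAux


open HLAux in
set_option maxHeartbeats 1600000 in
/-- Given a < b, 0 < τ, ε > 0, there is an open set
G ⊆ ℝ × (0,∞) containing all shocks in [a,b] × (0,τ] with every time-section of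
Lebesgue measure at most ε. -/
theorem shocks_in_open_set_with_thin_sections
    (u0 : ℝ → ℝ) (hmono : Monotone u0)
    (hlc : ∀ y : ℝ, ContinuousWithinAt u0 (Iic y) y)
    (hgrowth : Tendsto (fun y => u0 y / y ^ 2) atBot (nhds 0))
    (a b τ ε : ℝ) (hab : a < b) (hτ : 0 < τ) (hε : 0 < ε) :
    ∃ G : Set (ℝ × ℝ), IsOpen G ∧ G ⊆ {p : ℝ × ℝ | 0 < p.2} ∧
      (∀ x ∈ Icc a b, ∀ t ∈ Ioc (0:ℝ) τ,
        yminus u0 x 0 t < yplus u0 x 0 t → (x, t) ∈ G) ∧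
      (∀ t ∈ Ioc (0:ℝ) τ,
        volume {x : ℝ | (x, t) ∈ G} ≤ ENNReal.ofReal ε) := by
  classical
  set T := τ + 1 with hTdef
  have hT : 0 < T := by linarith
  have hτT : τ ≤ T := by linarith
  obtain ⟨C, hC⟩ := growth_const hmono hgrowth hT
  obtain ⟨e, he⟩ := exists_surjective_nat ℚ
  set δ : ℕ → ℝ := fun n => ε / 8 * (1 / 2) ^ n with hδdef
  have hδpos : ∀ n, 0 < δ n := fun n => by positivity
  have hKey : ∀ (n : ℕ) (t : ℝ), ∃ r : ℝ, t ∈ Ioc (0:ℝ) τ →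
      (0 < r ∧ r ≤ t ∧ ∀ s, 0 < s → s ≤ T → |s - t| < r →
        Xc u0 ((e n : ℝ)) s < Xc u0 ((e n : ℝ)) t + δ n ∧
        Yc u0 ((e n : ℝ)) t - δ n < Yc u0 ((e n : ℝ)) s) := by
    intro n t
    by_cases htI : t ∈ Ioc (0:ℝ) τ
    · obtain ⟨r1, hr1, hA⟩ := Xc_usc (C := C) hmono hlc hC htI.1 (le_trans htI.2 hτT)
        (hδpos n) (q := (e n : ℝ))
      obtain ⟨r2, hr2, hB⟩ := Yc_lsc (C := C) hmono hlc hC htI.1 (le_trans htI.2 hτT)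
        (hδpos n) (q := (e n : ℝ))
      refine ⟨min (min r1 r2) t, fun _ => ⟨lt_min (lt_min hr1 hr2) htI.1, min_le_right _ _,
        fun s hs1 hs2 hs3 => ?_⟩⟩
      have h1 : |s - t| < r1 := lt_of_lt_of_le hs3 (le_trans (min_le_left _ _) (min_le_left _ _))
      have h2 : |s - t| < r2 := lt_of_lt_of_le hs3 (le_trans (min_le_left _ _) (min_le_right _ _))
      exact ⟨hA s hs1 hs2 h1, hB s hs1 hs2 h2⟩
    · exact ⟨1, fun h => absurd h htI⟩
  choose r hr using hKey
  refine ⟨⋃ (n : ℕ), ⋃ (t : ℝ), ⋃ (_ : t ∈ Ioc (0:ℝ) τ ∧ Xc u0 ((e n : ℝ)) t = Yc u0 ((e n : ℝ)) t),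
      Ioo (Xc u0 ((e n : ℝ)) t - δ n) (Xc u0 ((e n : ℝ)) t + δ n) ×ˢ Ioo (t - r n t) (t + r n t),
    ?_, ?_, ?_, ?_⟩
  · exact isOpen_iUnion fun n => isOpen_iUnion fun t => isOpen_iUnion fun _ =>
      isOpen_Ioo.prod isOpen_Ioo
  · rintro ⟨px, pt⟩ hp
    simp only [mem_iUnion, mem_prod, mem_Ioo] at hp
    obtain ⟨n, t, ⟨htI, -⟩, -, h2⟩ := hp
    obtain ⟨-, hrt, -⟩ := hr n t htI
    simp only [mem_setOf_eq]
    linarith [h2.1, htI.1]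
  · rintro x - t htI hsh
    obtain ⟨q, hq1, hq2⟩ := exists_rat_btwn hsh
    obtain ⟨n, rfl⟩ := he q
    have htT' : t ≤ T := le_trans htI.2 hτT
    have hXc := shock_Xc hmono hlc hC htI.1 htT' hq1 hq2
    have hYc := shock_Yc hmono hlc hC htI.1 htT' hq1 hq2
    obtain ⟨hrpos, -, -⟩ := hr n t htI
    simp only [mem_iUnion, mem_prod, mem_Ioo]
    refine ⟨n, t, ⟨htI, by rw [hXc, hYc]⟩, ⟨?_, ?_⟩, ?_, ?_⟩
    · rw [hXc]; linarith [hδpos n]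
    · rw [hXc]; linarith [hδpos n]
    · linarith
    · linarith
  · intro t htI
    have htT' : t ≤ T := le_trans htI.2 hτT
    have hsub : {x : ℝ | (x, t) ∈
        ⋃ (n : ℕ), ⋃ (t' : ℝ), ⋃ (_ : t' ∈ Ioc (0:ℝ) τ ∧ Xc u0 ((e n : ℝ)) t' = Yc u0 ((e n : ℝ)) t'),
          Ioo (Xc u0 ((e n : ℝ)) t' - δ n) (Xc u0 ((e n : ℝ)) t' + δ n) ×ˢ
            Ioo (t' - r n t') (t' + r n t')}
        ⊆ ⋃ n, Ioo (Xc u0 ((e n : ℝ)) t - 2 * δ n) (Xc u0 ((e n : ℝ)) t + 2 * δ n) := by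
      intro x hx
      simp only [mem_setOf_eq, mem_iUnion, mem_prod, mem_Ioo] at hx
      obtain ⟨n, t', ⟨ht'I, hE⟩, ⟨hx1, hx2⟩, ht1, ht2⟩ := hx
      obtain ⟨hrpos, hrt, hprop⟩ := hr n t' ht'I
      have habs : |t - t'| < r n t' := abs_lt.2 ⟨by linarith, by linarith⟩
      obtain ⟨hA, hB⟩ := hprop t htI.1 htT' habs
      have hYX : Yc u0 ((e n : ℝ)) t ≤ Xc u0 ((e n : ℝ)) t :=
        Yc_le_Xc hmono hlc hC htI.1 htT' _
      rw [← hE] at hB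
      simp only [mem_iUnion, mem_Ioo]
      exact ⟨n, by constructor <;> linarith⟩
    refine le_trans (measure_mono hsub) (le_trans (measure_iUnion_le _) ?_)
    have hvol : ∀ n : ℕ, volume (Ioo (Xc u0 ((e n : ℝ)) t - 2 * δ n) (Xc u0 ((e n : ℝ)) t + 2 * δ n))
        = ENNReal.ofReal (4 * δ n) := by
      intro n
      rw [Real.volume_Ioo]
      congr 1
      ring
    rw [tsum_congr hvol]
    have hsum : Summable (fun n : ℕ => 4 * δ n) := by
      have he2 : (fun n : ℕ => 4 * δ n) = fun n : ℕ => (4 * (ε / 8)) * (1 / 2) ^ n := by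
        funext n; simp only [hδdef]; ring
      rw [he2]
      exact (summable_geometric_of_lt_one (r := (1/2 : ℝ)) (by norm_num) (by norm_num)).mul_left _
    rw [← ENNReal.ofReal_tsum_of_nonneg (fun n => by positivity) hsum]
    apply ENNReal.ofReal_le_ofReal
    have hts : ∑' n : ℕ, 4 * δ n = ε / 2 * 2 := by
      simp only [hδdef]
      have h4 : ∀ n : ℕ, 4 * (ε / 8 * (1 / 2) ^ n) = ε / 2 * (1 / 2) ^ n := fun n => by ring
      rw [tsum_congr h4, tsum_mul_left, tsum_geometric_two]
    rw [hts]
    linarith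
end

section
/- Let A ⊆ ℝ × [0,∞) be compact, and suppose that for every (x,t) ∈ A the Hopf-Lax minimizer is unique: y⁻(x,t) = y⁺(x,t) = y(x,t). Suppose also that u0 is continuous (locally Lipschitz). Fix a constant c with c < y⁻(a,τ) where A ⊆ [a,b] × [σ,τ] with σ > 0, and δ > 0. Then ε := (1/5)·inf{ u0(y) + t·g((x-y)/t) − u(x,t) : (x,t) ∈ A, y ∈ [c,x], dist(y, I(x,t)) ≥ δ } is strictly positive, where g(x) = x²/4. -/
open Set Filter MeasureTheory
open scoped NNReal ENNReal

lemma hopfLax_zero' (u0 : ℝ → ℝ) (x : ℝ) : hopfLax u0 x 0 = u0 x := by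
  simp [hopfLax]

lemma mem_minSet_iff' (u0 : ℝ → ℝ) (x t z : ℝ) :
    z ∈ minSet u0 x 0 t ↔ z ≤ x ∧ hopfLax u0 x t = u0 z + (x - z) ^ 2 / (4 * t) := by
  simp [minSet, hopfLax_zero']

lemma coercive' (u0 : ℝ → ℝ)
    (hgrowth : Tendsto (fun y => u0 y / y ^ 2) atBot (nhds 0))
    (a b τ : ℝ) (hτ : 0 < τ) :
    ∃ Y₀ ≤ a, ∀ y ≤ Y₀, ∀ x ∈ Icc a b, ∀ t, 0 < t → t ≤ τ →
      u0 b + 1 ≤ u0 y + (x - y) ^ 2 / (4 * t) := by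
  have hε : (0:ℝ) < 1 / (32 * τ) := by positivity
  have h1 : ∀ᶠ y in atBot, dist (u0 y / y ^ 2) 0 < 1 / (32 * τ) :=
    (Metric.tendsto_nhds.mp hgrowth _ hε)
  obtain ⟨Y₁, hY₁⟩ := eventually_atBot.mp h1
  set M : ℝ := |a| + |b| with hM
  set C : ℝ := 32 * τ * (|u0 b| + 1) + 8 * M ^ 2 with hC
  set s : ℝ := Real.sqrt (max C 0) with hs
  have hs0 : 0 ≤ s := Real.sqrt_nonneg _
  have hs2 : s ^ 2 = max C 0 := Real.sq_sqrt (le_max_right _ _)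
  refine ⟨min Y₁ (min a (-1 - s)), le_trans (min_le_right _ _) (min_le_left _ _), ?_⟩
  intro y hy x hx t ht htτ
  have hya : y ≤ -1 - s := le_trans hy (le_trans (min_le_right _ _) (min_le_right _ _))
  have hyneg : y < 0 := by nlinarith
  have hyY₁ : y ≤ Y₁ := le_trans hy (min_le_left _ _)
  have habs : |u0 y / y ^ 2| < 1 / (32 * τ) := by
    have h := hY₁ y hyY₁
    rwa [Real.dist_eq, sub_zero] at h
  have hy2pos : (0:ℝ) < y ^ 2 := by nlinarith
  have habs2 : |u0 y| < y ^ 2 / (32 * τ) := by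
    rw [abs_div, abs_of_nonneg (sq_nonneg y)] at habs
    rw [div_lt_div_iff₀ hy2pos (by positivity)] at habs
    rw [lt_div_iff₀ (by positivity : (0:ℝ) < 32 * τ)]
    linarith
  have hu0y : -(y ^ 2 / (32 * τ)) < u0 y := by
    have := neg_abs_le (u0 y); linarith
  have hy2C : y ^ 2 ≥ max C 0 := by
    have : (1 + s) ^ 2 ≤ y ^ 2 := by nlinarith
    nlinarith
  have hxM : x ^ 2 ≤ M ^ 2 := by
    rcases hx with ⟨hax, hxb⟩
    have h1 : -M ≤ x := by
      have := neg_abs_le a; have := abs_nonneg b; simp only [hM]; linarith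
    have h2 : x ≤ M := by
      have := le_abs_self b; have := abs_nonneg a; simp only [hM]; linarith
    nlinarith
  have hkey : u0 b + 1 ≤ (8 * (x - y) ^ 2 - y ^ 2) / (32 * τ) := by
    rw [le_div_iff₀ (by positivity : (0:ℝ) < 32 * τ)]
    have hxy : 2 * (x - y) ^ 2 ≥ y ^ 2 - 2 * x ^ 2 := by nlinarith [sq_nonneg (2 * x - y)]
    have hCle : C ≤ y ^ 2 := le_trans (le_max_left _ _) hy2C
    have hub : u0 b ≤ |u0 b| := le_abs_self _
    nlinarith [mul_pos hτ (by positivity : (0:ℝ) < |u0 b| + 1),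
      mul_nonneg hτ.le (sub_nonneg.mpr hub)]
  have hsplit : (8 * (x - y) ^ 2 - y ^ 2) / (32 * τ) =
      -(y ^ 2 / (32 * τ)) + (x - y) ^ 2 / (4 * τ) := by
    field_simp
    ring
  have hdiv : (x - y) ^ 2 / (4 * τ) ≤ (x - y) ^ 2 / (4 * t) := by
    exact div_le_div_of_nonneg_left (sq_nonneg _) (by positivity) (by linarith)
  rw [hsplit] at hkey
  linarith

lemma hopfLax_min' (u0 : ℝ → ℝ) (hmono : Monotone u0) (hcont : Continuous u0)
    {Y₀ a b x t : ℝ} (hY₀a : Y₀ ≤ a)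
    (hcoer : ∀ y ≤ Y₀, u0 b + 1 ≤ u0 y + (x - y) ^ 2 / (4 * t))
    (hx : x ∈ Icc a b) (ht : 0 < t) :
    ∃ y₀ ∈ Icc Y₀ x,
      (∀ y ≤ x, u0 y₀ + (x - y₀) ^ 2 / (4 * t) ≤ u0 y + (x - y) ^ 2 / (4 * t)) ∧
      hopfLax u0 x t = u0 y₀ + (x - y₀) ^ 2 / (4 * t) := by
  set f : ℝ → ℝ := fun y => u0 y + (x - y) ^ 2 / (4 * t) with hf
  have hfc : Continuous f := by
    apply hcont.add
    exact ((continuous_const.sub continuous_id).pow 2).div_const _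
  have hY₀x : Y₀ ≤ x := hY₀a.trans hx.1
  obtain ⟨y₀, hy₀mem, hy₀min'⟩ :=
    isCompact_Icc.exists_isMinOn (nonempty_Icc.mpr hY₀x) hfc.continuousOn
  have hy₀min : ∀ z ∈ Icc Y₀ x, f y₀ ≤ f z := fun z hz => hy₀min' hz
  have hfx : f x = u0 x := by simp [hf]
  have hglob : ∀ y ≤ x, f y₀ ≤ f y := by
    intro y hy
    rcases le_total Y₀ y with h | h
    · exact hy₀min y ⟨h, hy⟩
    · have h1 : u0 b + 1 ≤ f y := hcoer y h
      have h2 : f y₀ ≤ f x := hy₀min x ⟨hY₀x, le_refl x⟩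
      have h3 : u0 x ≤ u0 b := hmono hx.2
      rw [hfx] at h2; linarith
  refine ⟨y₀, hy₀mem, hglob, ?_⟩
  rw [hopfLax, if_neg (ne_of_gt ht)]
  apply le_antisymm
  · exact csInf_le ⟨f y₀, by rintro z ⟨y, hy, rfl⟩; exact hglob y hy⟩
      ⟨y₀, hy₀mem.2, rfl⟩
  · exact le_csInf ⟨f x, x, self_mem_Iic, rfl⟩ (by rintro z ⟨y, hy, rfl⟩; exact hglob y hy)

lemma minset_structure (u0 : ℝ → ℝ) (hmono : Monotone u0) (hcont : Continuous u0)
    {Y₀ a b x t : ℝ} (hY₀a : Y₀ ≤ a)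
    (hcoer : ∀ y ≤ Y₀, u0 b + 1 ≤ u0 y + (x - y) ^ 2 / (4 * t))
    (hx : x ∈ Icc a b) (ht : 0 < t)
    (huq : yminus u0 x 0 t = yplus u0 x 0 t) :
    (∀ y ≤ x, hopfLax u0 x t ≤ u0 y + (x - y) ^ 2 / (4 * t)) ∧
    minSet u0 x 0 t = {yminus u0 x 0 t} ∧ yminus u0 x 0 t ∈ Icc Y₀ x := by
  obtain ⟨y₀, hy₀mem, hglob, hform⟩ := hopfLax_min' u0 hmono hcont hY₀a hcoer hx ht
  have hle : ∀ y ≤ x, hopfLax u0 x t ≤ u0 y + (x - y) ^ 2 / (4 * t) := by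
    intro y hy; rw [hform]; exact hglob y hy
  have hy₀mS : y₀ ∈ minSet u0 x 0 t := (mem_minSet_iff' u0 x t y₀).mpr ⟨hy₀mem.2, hform⟩
  have hsub : minSet u0 x 0 t ⊆ Icc Y₀ x := by
    intro z hz
    rw [mem_minSet_iff'] at hz
    obtain ⟨hzx, hzeq⟩ := hz
    refine ⟨?_, hzx⟩
    by_contra hlt
    push_neg at hlt
    have h1 : u0 b + 1 ≤ u0 z + (x - z) ^ 2 / (4 * t) := hcoer z hlt.le
    have h2 : hopfLax u0 x t ≤ u0 x := by
      have := hle x (le_refl x); simpa using this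
    have h3 : u0 x ≤ u0 b := hmono hx.2
    linarith [hzeq ▸ h2]
  have hclosed : IsClosed (minSet u0 x 0 t) := by
    have : minSet u0 x 0 t =
        Iic x ∩ {z | hopfLax u0 x t = u0 z + (x - z) ^ 2 / (4 * t)} := by
      ext z; rw [mem_minSet_iff']; simp [Set.mem_inter_iff]
    rw [this]
    exact isClosed_Iic.inter (isClosed_eq continuous_const
      (hcont.add (((continuous_const.sub continuous_id).pow 2).div_const _)))
  have hcompact : IsCompact (minSet u0 x 0 t) :=
    (isCompact_Icc.of_isClosed_subset hclosed hsub)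
  have hne : (minSet u0 x 0 t).Nonempty := ⟨y₀, hy₀mS⟩
  have hymem : yminus u0 x 0 t ∈ minSet u0 x 0 t := hcompact.sInf_mem hne
  have hbddb : BddBelow (minSet u0 x 0 t) := hcompact.bddBelow
  have hbdda : BddAbove (minSet u0 x 0 t) := hcompact.bddAbove
  have hsingle : minSet u0 x 0 t = {yminus u0 x 0 t} := by
    apply Subset.antisymm
    · intro z hz
      have h1 : yminus u0 x 0 t ≤ z := csInf_le hbddb hz
      have h2 : z ≤ yplus u0 x 0 t := le_csSup hbdda hz
      rw [← huq] at h2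
      exact le_antisymm h2 h1
    · intro z hz; rw [Set.mem_singleton_iff] at hz; rw [hz]; exact hymem
  exact ⟨hle, hsingle, hsub hymem⟩

/-- On a compact set A ⊆ [a,b] × [σ,τ] (σ > 0) free of shocks
(unique minimizers), with u0 locally Lipschitz and c < y⁻(a,τ), δ > 0, the
quantity ε = (1/5)·inf{ u0(y) + t·g((x-y)/t) − u(x,t) : (x,t) ∈ A, y ∈ [c,x],
dist(y, I(x,t)) ≥ δ } is strictly positive. -/
theorem gap_away_from_minimizers_positive
    (u0 : ℝ → ℝ) (hmono : Monotone u0) (hlip : LocallyLipschitz u0)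
    (hgrowth : Tendsto (fun y => u0 y / y ^ 2) atBot (nhds 0))
    (A : Set (ℝ × ℝ)) (hA : IsCompact A)
    (a b σ τ c δ : ℝ) (hσ : 0 < σ)
    (hAsub : A ⊆ Icc a b ×ˢ Icc σ τ)
    (huniq : ∀ p ∈ A, yminus u0 p.1 0 p.2 = yplus u0 p.1 0 p.2)
    (hc : c < yminus u0 a 0 τ) (hδ : 0 < δ) :
    ∃ ε > 0, ∀ p ∈ A, ∀ y ∈ Icc c p.1,
      δ ≤ Metric.infDist y (minSet u0 p.1 0 p.2) →
      5 * ε ≤ u0 y + p.2 * (((p.1 - y) / p.2) ^ 2 / 4) - hopfLax u0 p.1 p.2 := by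
  by_contra hcon
  push_neg at hcon
  have hcont : Continuous u0 := hlip.continuous
  have hseq : ∀ n : ℕ, ∃ p ∈ A, ∃ y ∈ Icc c p.1,
      δ ≤ Metric.infDist y (minSet u0 p.1 0 p.2) ∧
      u0 y + p.2 * (((p.1 - y) / p.2) ^ 2 / 4) - hopfLax u0 p.1 p.2 < 1 / (n + 1) := by
    intro n
    obtain ⟨p, hp, y, hy, h1, h2⟩ := hcon (1 / (5 * (n + 1))) (by positivity)
    refine ⟨p, hp, y, hy, h1, ?_⟩
    calc u0 y + p.2 * (((p.1 - y) / p.2) ^ 2 / 4) - hopfLax u0 p.1 p.2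
        < 5 * (1 / (5 * ((n : ℝ) + 1))) := h2
      _ = 1 / ((n : ℝ) + 1) := by
          rw [eq_div_iff (by positivity : ((n:ℝ) + 1) ≠ 0)]
          field_simp
  choose P hPA Yq hYq hdist hsmall using hseq
  have hτpos : 0 < τ :=
    lt_of_lt_of_le hσ (le_trans (hAsub (hPA 0)).2.1 (hAsub (hPA 0)).2.2)
  obtain ⟨Y₀, hY₀a, hcoer⟩ := coercive' u0 hgrowth a b τ hτpos
  have htpos : ∀ p ∈ A, 0 < p.2 := fun p hp => lt_of_lt_of_le hσ (hAsub hp).2.1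
  have hstruct : ∀ p ∈ A,
      (∀ y ≤ p.1, hopfLax u0 p.1 p.2 ≤ u0 y + (p.1 - y) ^ 2 / (4 * p.2)) ∧
      minSet u0 p.1 0 p.2 = {yminus u0 p.1 0 p.2} ∧
      yminus u0 p.1 0 p.2 ∈ Icc Y₀ p.1 := by
    intro p hp
    exact minset_structure u0 hmono hcont hY₀a
      (fun y hy => hcoer y hy p.1 (hAsub hp).1 p.2 (htpos p hp) (hAsub hp).2.2)
      (hAsub hp).1 (htpos p hp) (huniq p hp)
  set m : ℕ → ℝ := fun n => yminus u0 (P n).1 0 (P n).2 with hm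
  set Z : ℕ → (ℝ × ℝ) × ℝ × ℝ := fun n => (P n, Yq n, m n) with hZdef
  have hK : IsCompact (A ×ˢ (Icc c b ×ˢ Icc Y₀ b)) :=
    hA.prod (isCompact_Icc.prod isCompact_Icc)
  have hZmem : ∀ n, Z n ∈ A ×ˢ (Icc c b ×ˢ Icc Y₀ b) := by
    intro n
    refine ⟨hPA n, ⟨(hYq n).1, (hYq n).2.trans (hAsub (hPA n)).1.2⟩, ?_⟩
    have h := (hstruct _ (hPA n)).2.2
    exact ⟨h.1, h.2.trans (hAsub (hPA n)).1.2⟩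
  obtain ⟨⟨p, ystar, w⟩, hqK, φ, hφ, hZtend⟩ := hK.tendsto_subseq hZmem
  have hpA : p ∈ A := hqK.1
  have hPt : Tendsto (fun n => P (φ n)) atTop (nhds p) :=
    (continuous_fst.tendsto _).comp hZtend
  have hx1 : Tendsto (fun n => (P (φ n)).1) atTop (nhds p.1) :=
    (continuous_fst.tendsto _).comp hPt
  have hx2 : Tendsto (fun n => (P (φ n)).2) atTop (nhds p.2) :=
    (continuous_snd.tendsto _).comp hPt
  have hYt : Tendsto (fun n => Yq (φ n)) atTop (nhds ystar) :=
    (continuous_fst.tendsto _).comp ((continuous_snd.tendsto _).comp hZtend)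
  have hmt : Tendsto (fun n => m (φ n)) atTop (nhds w) :=
    (continuous_snd.tendsto _).comp ((continuous_snd.tendsto _).comp hZtend)
  have hppos : 0 < p.2 := htpos p hpA
  -- rewrite the quantity
  have hexpr : ∀ n, (P n).2 * ((((P n).1 - Yq n) / (P n).2) ^ 2 / 4)
      = ((P n).1 - Yq n) ^ 2 / (4 * (P n).2) := by
    intro n
    have h := (htpos _ (hPA n)).ne'
    field_simp
  set F : ℕ → ℝ := fun n =>
    u0 (Yq n) + ((P n).1 - Yq n) ^ 2 / (4 * (P n).2) - hopfLax u0 (P n).1 (P n).2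
    with hFdef
  have hF0 : ∀ n, 0 ≤ F n := by
    intro n
    have := (hstruct _ (hPA n)).1 (Yq n) (hYq n).2
    simp only [hFdef]
    linarith
  have hFsmall : ∀ n, F n < 1 / (n + 1) := by
    intro n
    have h := hsmall n
    rw [hexpr n] at h
    exact h
  have hFtend : Tendsto (fun n => F (φ n)) atTop (nhds 0) := by
    apply squeeze_zero (fun n => hF0 (φ n)) (fun n => (hFsmall (φ n)).le.trans ?_)
      tendsto_one_div_add_atTop_nhds_zero_nat
    have h1 : (n : ℝ) + 1 ≤ (φ n : ℝ) + 1 := by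
      have hn : n ≤ φ n := hφ.le_apply
      have : (n : ℝ) ≤ (φ n : ℝ) := Nat.cast_le.mpr hn
      linarith
    exact one_div_le_one_div_of_le (by positivity) h1
  set Gl : ℝ := u0 ystar + (p.1 - ystar) ^ 2 / (4 * p.2) with hGl
  have hden : Tendsto (fun n => 4 * (P (φ n)).2) atTop (nhds (4 * p.2)) :=
    hx2.const_mul 4
  have hgtend : Tendsto
      (fun n => u0 (Yq (φ n)) + ((P (φ n)).1 - Yq (φ n)) ^ 2 / (4 * (P (φ n)).2))
      atTop (nhds Gl) := by
    exact ((hcont.tendsto ystar).comp hYt).add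
      (((hx1.sub hYt).pow 2).div hden (by positivity))
  have hutend : Tendsto (fun n => hopfLax u0 (P (φ n)).1 (P (φ n)).2) atTop (nhds Gl) := by
    have heq : (fun n => hopfLax u0 (P (φ n)).1 (P (φ n)).2) = fun n =>
        (u0 (Yq (φ n)) + ((P (φ n)).1 - Yq (φ n)) ^ 2 / (4 * (P (φ n)).2)) - F (φ n) := by
      funext n; simp only [hFdef]; ring
    rw [heq]
    simpa using hgtend.sub hFtend
  -- limits of inequalities
  have hyx : ystar ≤ p.1 :=
    le_of_tendsto_of_tendsto' hYt hx1 (fun n => (hYq (φ n)).2)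
  have hwx : w ≤ p.1 :=
    le_of_tendsto_of_tendsto' hmt hx1 (fun n => ((hstruct _ (hPA (φ n))).2.2).2)
  -- Gl ≤ u(p) via the min z x trick
  set z : ℝ := yminus u0 p.1 0 p.2 with hz
  have hzmem : z ∈ minSet u0 p.1 0 p.2 := by
    rw [(hstruct p hpA).2.1]; exact rfl
  obtain ⟨hzx, hzeq⟩ := (mem_minSet_iff' u0 p.1 p.2 z).mp hzmem
  have hRHStend : Tendsto (fun n =>
      u0 (min z (P (φ n)).1) +
        ((P (φ n)).1 - min z (P (φ n)).1) ^ 2 / (4 * (P (φ n)).2))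
      atTop (nhds (hopfLax u0 p.1 p.2)) := by
    have hmint : Tendsto (fun n => min z (P (φ n)).1) atTop (nhds (min z p.1)) :=
      tendsto_const_nhds.min hx1
    rw [min_eq_left hzx] at hmint
    have := ((hcont.tendsto z).comp hmint).add
      (((hx1.sub hmint).pow 2).div hden (by positivity))
    rw [hzeq]
    exact this
  have hGle : Gl ≤ hopfLax u0 p.1 p.2 := by
    refine le_of_tendsto_of_tendsto' hutend hRHStend (fun n => ?_)
    exact (hstruct _ (hPA (φ n))).1 _ (min_le_right _ _)
  have huG : hopfLax u0 p.1 p.2 ≤ Gl := (hstruct p hpA).1 ystar hyx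
  have hGeq : hopfLax u0 p.1 p.2 = Gl := le_antisymm huG hGle
  have hystar_mem : ystar ∈ minSet u0 p.1 0 p.2 :=
    (mem_minSet_iff' u0 p.1 p.2 ystar).mpr ⟨hyx, hGeq⟩
  have hystar_eq : ystar = z := by
    have := (hstruct p hpA).2.1 ▸ hystar_mem
    simpa using this
  -- w is also a minimizer
  have hwtend : Tendsto (fun n => u0 (m (φ n)) +
      ((P (φ n)).1 - m (φ n)) ^ 2 / (4 * (P (φ n)).2)) atTop
      (nhds (u0 w + (p.1 - w) ^ 2 / (4 * p.2))) :=
    ((hcont.tendsto w).comp hmt).add (((hx1.sub hmt).pow 2).div hden (by positivity))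
  have hmmin : ∀ n, hopfLax u0 (P (φ n)).1 (P (φ n)).2 =
      u0 (m (φ n)) + ((P (φ n)).1 - m (φ n)) ^ 2 / (4 * (P (φ n)).2) := by
    intro n
    have hmem : m (φ n) ∈ minSet u0 (P (φ n)).1 0 (P (φ n)).2 := by
      rw [(hstruct _ (hPA (φ n))).2.1]; exact rfl
    exact ((mem_minSet_iff' u0 _ _ _).mp hmem).2
  have hwval : Gl = u0 w + (p.1 - w) ^ 2 / (4 * p.2) := by
    apply tendsto_nhds_unique hutend
    have heq : (fun n => hopfLax u0 (P (φ n)).1 (P (φ n)).2) = fun n =>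
        u0 (m (φ n)) + ((P (φ n)).1 - m (φ n)) ^ 2 / (4 * (P (φ n)).2) :=
      funext hmmin
    rw [heq]
    exact hwtend
  have hw_mem : w ∈ minSet u0 p.1 0 p.2 :=
    (mem_minSet_iff' u0 p.1 p.2 w).mpr ⟨hwx, hGeq.trans hwval⟩
  have hw_eq : w = z := by
    have := (hstruct p hpA).2.1 ▸ hw_mem
    simpa using this
  -- contradiction with the distance bound
  have hdist' : ∀ n, δ ≤ dist (Yq (φ n)) (m (φ n)) := by
    intro n
    have h := hdist (φ n)
    rw [(hstruct _ (hPA (φ n))).2.1, Metric.infDist_singleton] at h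
    exact h
  have hdtend : Tendsto (fun n => dist (Yq (φ n)) (m (φ n))) atTop
      (nhds (dist ystar w)) := hYt.dist hmt
  have hfinal : δ ≤ dist ystar w := ge_of_tendsto' hdtend hdist'
  rw [hystar_eq, hw_eq, dist_self] at hfinal
  linarith
end
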